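/- arXiv:0708.1620 — 8 statements merged into one kernel-verified Lean document; each statement's English description precedes it below -/
import Mathlib

section
/- Let p be a prime and let K be a reduced commutative ring of characteristic p (i.e., a commutative F_p-algebra with no nonzero nilpotent elements). In the first Weyl algebra A_1(K), for every polynomial f ∈ K[x] one has (∂ + f)^p = ∂^p + d^{p-1}f/dx^{p-1} + f^p. -/
/-!
Jacobson's formula: in a ring of characteristic `p`, if `b` commutes with every `(ad a)^k b`, then
`(a + b)^p = a^p + (ad a)^(p-1) b + b^p`. Put `u = a X + b` in `S[X]`, with `X` central. Since
`(p-1).choose k ≡ (-1)^k`, the Leibniz expansion of `d/dX (u^p)` is `(ad u)^(p-1) a`, and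
`(ad u)^(k+1) a = -((ad a)^(k+1) b) X^k`. As `1, …, p-1` are invertible, a polynomial of degree
`≤ p` is determined by its derivative and its coefficients of `1` and `X^p`, so
`u^p = a^p X^p + ((ad a)^(p-1) b) X^(p-1) + b^p`; now set `X = 1`.
In `A₁(K)` the operator `ad ∂` restricts to `d/dx` on `K[x]`, so take `a = ∂` and `b = f`.
-/

noncomputable section

open Polynomial

/-- The defining relation of the first Weyl algebra: `∂·x = x·∂ + 1`. -/
inductive WeylRel (K : Type*) [CommRing K] :
    FreeAlgebra K (Fin 2) → FreeAlgebra K (Fin 2) → Prop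
  | rel : WeylRel K (FreeAlgebra.ι K 1 * FreeAlgebra.ι K 0)
      (FreeAlgebra.ι K 0 * FreeAlgebra.ι K 1 + 1)

/-- The first Weyl algebra `A₁(K) = K⟨x, ∂ | ∂x − x∂ = 1⟩`. -/
abbrev Weyl (K : Type*) [CommRing K] := RingQuot (WeylRel K)

/-- The generator `x` of the first Weyl algebra. -/
def wX (K : Type*) [CommRing K] : Weyl K :=
  RingQuot.mkAlgHom K (WeylRel K) (FreeAlgebra.ι K 0)

/-- The generator `∂` of the first Weyl algebra. -/
def wD (K : Type*) [CommRing K] : Weyl K :=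
  RingQuot.mkAlgHom K (WeylRel K) (FreeAlgebra.ι K 1)

open Finset

section CharPrime

variable {T : Type*} [Ring T] {p : ℕ}

lemma isUnit_natCast_of_coprime (hpT : (p : T) = 0) {n : ℕ} (h : n.Coprime p) :
    IsUnit (n : T) := by
  have hbezout : (n * n.gcdA p : T) = 1 := by
    simpa [hpT, h] using congrArg (Int.cast : ℤ → T) (Nat.gcd_eq_gcd_ab n p).symm
  exact ⟨⟨n, n.gcdA p, hbezout, (Int.cast_commute _ _).eq.trans hbezout⟩, rfl⟩

lemma choose_pred_prime_eq_neg_one_pow (hp : p.Prime) (hpT : (p : T) = 0) {k : ℕ} (hk : k < p) :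
    ((p - 1).choose k : T) = (-1) ^ k := by
  induction k with
  | zero => simp
  | succ k ih =>
    have hpascal : (p - 1).choose k + (p - 1).choose (k + 1) = p.choose (k + 1) := by
      rw [← Nat.choose_succ_succ', Nat.sub_add_cancel hp.one_le]
    have hsum : (p.choose (k + 1) : T) = 0 := by
      obtain ⟨c, hc⟩ := hp.dvd_choose_self k.succ_ne_zero hk
      rw [hc, Nat.cast_mul, hpT, zero_mul]
    rw [← hpascal, Nat.cast_add, ih (by omega)] at hsum
    rw [pow_succ, mul_neg_one, eq_neg_of_add_eq_zero_right hsum]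

lemma Commute.sub_pow_prime_pred (hp : p.Prime) (hpT : (p : T) = 0) {x y : T} (h : Commute x y) :
    (x - y) ^ (p - 1) = ∑ k ∈ range p, x ^ k * y ^ (p - 1 - k) := by
  rw [sub_eq_add_neg, h.neg_right.add_pow, Nat.sub_add_cancel hp.one_le]
  refine sum_congr rfl fun k hk => ?_
  have hk : k < p := mem_range.mp hk
  -- `(p-1).choose k = (p-1).choose (p-1-k) ≡ (-1)^(p-1-k)`, which cancels the sign
  have hcoeff : ((-1) ^ (p - 1 - k) * (p - 1).choose k : T) = 1 := by
    rw [← Nat.choose_symm (by omega), choose_pred_prime_eq_neg_one_pow hp hpT (by omega),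
      ← pow_add, ← two_mul, pow_mul, neg_one_sq, one_pow]
  rw [neg_pow, mul_assoc, mul_assoc, ← Nat.cast_comm, ← mul_assoc ((-1) ^ _), hcoeff, one_mul]

end CharPrime

section Jacobson

variable {S : Type*} [Ring S] {p : ℕ}

def ad (a : S) : Module.End ℤ S := LinearMap.mulLeft ℤ a - LinearMap.mulRight ℤ a

@[simp]
lemma ad_apply (a w : S) : ad a w = a * w - w * a := rfl

lemma ad_eq_zero_of_commute {a w : S} (h : Commute a w) : ad a w = 0 := sub_eq_zero.mpr h.eq

lemma ad_apply_swap (a w : S) : ad w a = -ad a w := (neg_sub _ _).symm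

lemma ad_mul (a y z : S) : ad a (y * z) = ad a y * z + y * ad a z := by
  simp only [ad_apply]
  noncomm_ring

lemma ad_pow_prime_pred_apply (hp : p.Prime) (hpS : (p : S) = 0) (u v : S) :
    (ad u ^ (p - 1)) v = ∑ k ∈ range p, u ^ k * v * u ^ (p - 1 - k) := by
  have hpEnd : (p : Module.End ℤ S) = 0 := by
    ext w
    simp [hpS]
  rw [ad, (LinearMap.commute_mulLeft_right u u).sub_pow_prime_pred hp hpEnd]
  simp [LinearMap.pow_mulLeft, LinearMap.pow_mulRight, mul_assoc]

lemma Polynomial.derivative_pow_eq_sum (q : S[X]) (n : ℕ) :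
    derivative (q ^ n) = ∑ j ∈ range n, q ^ j * derivative q * q ^ (n - 1 - j) := by
  induction n with
  | zero => simp
  | succ n ih =>
    rw [pow_succ, derivative_mul, ih, sum_mul, sum_range_succ, Nat.add_sub_cancel, Nat.sub_self,
      pow_zero, mul_one]
    congr 1
    refine sum_congr rfl fun j hj => ?_
    have : n - 1 - j + 1 = n - j := by have := mem_range.mp hj; omega
    rw [mul_assoc, ← pow_succ, this]

lemma ad_C_mul_X_add_C_apply_C_mul_X_pow (a b c : S) (m : ℕ) :
    ad (C a * X + C b) (C c * X ^ m) = C (ad a c) * X ^ (m + 1) + C (ad b c) * X ^ m := by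
  rw [ad_apply, ad_apply, ad_apply, C_mul_X_eq_monomial, C_mul_X_pow_eq_monomial,
    C_mul_X_pow_eq_monomial, C_mul_X_pow_eq_monomial, ← monomial_zero_left (a := b)]
  simp only [add_mul, mul_add, monomial_mul_monomial, map_sub, add_comm 1 m, zero_add, add_zero]
  abel

lemma ad_C_mul_X_add_C_pow_succ_apply_C (a b : S) (hb : ∀ k, Commute b ((ad a ^ k) b)) (k : ℕ) :
    (ad (C a * X + C b) ^ (k + 1)) (C a) = -(C ((ad a ^ (k + 1)) b) * X ^ k) := by
  induction k with
  | zero =>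
    have h := ad_C_mul_X_add_C_apply_C_mul_X_pow a b a 0
    rw [pow_zero, mul_one, ad_eq_zero_of_commute (Commute.refl a), ad_apply_swap a b] at h
    simp [h]
  | succ k ih =>
    rw [pow_succ', Module.End.mul_apply, ih, map_neg, ad_C_mul_X_add_C_apply_C_mul_X_pow,
      ad_eq_zero_of_commute (hb _), map_zero, zero_mul, add_zero, pow_succ' _ (k + 1),
      Module.End.mul_apply]

lemma Polynomial.eq_of_derivative_eq_of_natDegree_le (hp : p.Prime) (hpS : (p : S) = 0)
    {P Q : S[X]} (hP : P.natDegree ≤ p) (hQ : Q.natDegree ≤ p) (hd : derivative P = derivative Q)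
    (h0 : P.coeff 0 = Q.coeff 0) (hlead : P.coeff p = Q.coeff p) : P = Q := by
  ext n
  rcases n with _ | n
  · exact h0
  obtain hn | rfl | hn := lt_trichotomy (n + 1) p
  · have hunit : IsUnit ((n + 1 : ℕ) : S) :=
      isUnit_natCast_of_coprime hpS ((Nat.coprime_comm.mp
        (hp.coprime_iff_not_dvd.mpr (Nat.not_dvd_of_pos_of_lt n.succ_pos hn))))
    have := congrArg (coeff · n) hd
    simp only [coeff_derivative, ← Nat.cast_succ] at this
    exact hunit.mul_right_cancel this
  · exact hlead
  · rw [coeff_eq_zero_of_natDegree_lt (by omega), coeff_eq_zero_of_natDegree_lt (by omega)]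

lemma derivative_C_mul_X_add_C_pow_prime (hp : p.Prime) (hpS : (p : S) = 0) (a b : S)
    (hb : ∀ k, Commute b ((ad a ^ k) b)) :
    derivative ((C a * X + C b) ^ p) = -(C ((ad a ^ (p - 1)) b) * X ^ (p - 2)) := by
  have hpX : (p : S[X]) = 0 := by rw [← C_eq_natCast, hpS, C_0]
  have hp1 : p - 1 = p - 2 + 1 := by have := hp.two_le; omega
  rw [derivative_pow_eq_sum, derivative_add, derivative_C_mul_X, derivative_C, add_zero,
    ← ad_pow_prime_pred_apply hp hpX, hp1, ad_C_mul_X_add_C_pow_succ_apply_C a b hb]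

lemma C_mul_X_add_C_pow_prime (hp : p.Prime) (hpS : (p : S) = 0) (a b : S)
    (hb : ∀ k, Commute b ((ad a ^ k) b)) :
    (C a * X + C b) ^ p = C (a ^ p) * X ^ p + C ((ad a ^ (p - 1)) b) * X ^ (p - 1) + C (b ^ p) := by
  have hp1 : p - 1 = p - 2 + 1 := by have := hp.two_le; omega
  refine eq_of_derivative_eq_of_natDegree_le hp hpS ?_ ?_ ?_ ?_ ?_
  · simpa using natDegree_pow_le_of_le p (natDegree_linear_le (a := a) (b := b))
  · compute_degree
  · rw [derivative_C_mul_X_add_C_pow_prime hp hpS a b hb, derivative_add, derivative_add,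
      derivative_C_mul_X_pow, derivative_C_mul_X_pow, derivative_C, hpS, Nat.cast_pred hp.pos,
      hpS, show p - 1 - 1 = p - 2 by omega]
    simp
  · rw [← constantCoeff_apply, map_pow]
    simp [coeff_X_pow, hp.ne_zero.symm, hp1, -map_pow]
  · simpa [coeff_X_pow, coeff_C, hp.ne_zero, show p ≠ p - 1 by omega, -map_pow] using
      coeff_pow_of_natDegree_le (m := p) (natDegree_linear_le (a := a) (b := b))

theorem add_pow_prime_eq_of_commute_ad_pow (hp : p.Prime) (hpS : (p : S) = 0) (a b : S)
    (hb : ∀ k, Commute b ((ad a ^ k) b)) :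
    (a + b) ^ p = a ^ p + (ad a ^ (p - 1)) b + b ^ p := by
  let evalOne : S[X] →+* S := eval₂RingHom' (RingHom.id S) 1 fun _ => Commute.one_right _
  have hC (x : S) : evalOne (C x) = x := eval₂_C _ _
  have hX : evalOne X = 1 := eval₂_X _ _
  simpa only [map_add, map_mul, map_pow, hC, hX, one_pow, mul_one] using
    congrArg evalOne (C_mul_X_add_C_pow_prime hp hpS a b hb)

end Jacobson

section Weyl

variable (K : Type*) [CommRing K]

lemma wD_mul_wX : wD K * wX K = wX K * wD K + 1 := by
  simpa only [wD, wX, map_mul, map_add, map_one] using RingQuot.mkAlgHom_rel K WeylRel.rel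

lemma ad_wD_wX : ad (wD K) (wX K) = 1 := by
  rw [ad_apply, wD_mul_wX, add_sub_cancel_left]

lemma ad_wD_aeval (g : K[X]) : ad (wD K) (aeval (wX K) g) = aeval (wX K) (derivative g) := by
  induction g using Polynomial.induction_on with
  | C c => simp [aeval_C, Algebra.commutes]
  | add f g hf hg => simp only [map_add, hf, hg]
  | monomial n c ih =>
    rw [pow_succ, ← mul_assoc, map_mul, ad_mul, ih, aeval_X, ad_wD_wX, mul_one,
      derivative_mul (f := C c * X ^ n), derivative_X, mul_one, map_add,
      map_mul (aeval (wX K)) _ X, aeval_X]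

lemma ad_wD_pow_aeval (g : K[X]) (k : ℕ) :
    (ad (wD K) ^ k) (aeval (wX K) g) = aeval (wX K) (derivative^[k] g) := by
  induction k with
  | zero => rfl
  | succ k ih => rw [pow_succ', Module.End.mul_apply, ih, ad_wD_aeval, Function.iterate_succ_apply']

end Weyl

theorem statement0_general (p : ℕ) (hp : p.Prime) (K : Type*) [CommRing K] [CharP K p]
    (f : Polynomial K) :
    (wD K + aeval (wX K) f) ^ p =
      wD K ^ p + aeval (wX K) (derivative^[p - 1] f) + aeval (wX K) f ^ p := by
  have hpW : (p : Weyl K) = 0 := by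
    rw [← map_natCast (algebraMap K (Weyl K)), CharP.cast_eq_zero, map_zero]
  have hcomm (k : ℕ) : Commute (aeval (wX K) f) ((ad (wD K) ^ k) (aeval (wX K) f)) := by
    rw [ad_wD_pow_aeval]
    exact (Commute.all _ _).map _
  rw [add_pow_prime_eq_of_commute_ad_pow hp hpW _ _ hcomm, ad_wD_pow_aeval]

/-- A polynomial `f ∈ K[x]` is regarded as the element `f(x)` of the Weyl algebra via
`Polynomial.aeval (wX K)`. -/
theorem statement0 (p : ℕ) (hp : p.Prime) (K : Type*) [CommRing K] [IsReduced K] [CharP K p]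
    (f : Polynomial K) :
    (wD K + aeval (wX K) f) ^ p =
      wD K ^ p + aeval (wX K) (derivative^[p - 1] f) + aeval (wX K) f ^ p :=
  statement0_general p hp K f
end
end

section
/- Let p be a prime and let K be a reduced commutative ring of characteristic p. For every f ∈ K[x], the element L(f) := (∂ + f)^p − ∂^p − f^p of the first Weyl algebra A_1(K) lies in the subring K[x^p] of K[x], and the resulting map L : K[x] → K[x^p] is additive: L(f + g) = L(f) + L(g) for all f, g ∈ K[x]. -/
/-!
STATEMENT 2: Let `p` be a prime and `K` a reduced commutative ring of characteristic `p`.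
For every `f ∈ K[x]`, the element `L(f) := (∂ + f)^p − ∂^p − f^p` of `A₁(K)` lies in the
subring `K[x^p]` of `K[x]`, and `L` is additive: `L(f+g) = L(f) + L(g)`.
-/

noncomputable section

open Polynomial

/-! ### Auxiliary development -/

section Aux

variable {K : Type*} [CommRing K]

theorem weyl_rel (K : Type*) [CommRing K] : wD K * wX K = wX K * wD K + 1 := by
  have h := RingQuot.mkAlgHom_rel K (WeylRel.rel (K := K))
  simpa only [map_mul, map_add, map_one, wD, wX] using h

theorem weyl_comm_step {v : Weyl K} (hv : v * wX K = wX K * v + 1) {q : K[X]}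
    (ihq : v * aeval (wX K) q = aeval (wX K) q * v + aeval (wX K) (derivative q)) :
    v * aeval (wX K) (q * X) = aeval (wX K) (q * X) * v + aeval (wX K) (derivative (q * X)) := by
  have hder : derivative (q * X) = derivative q * X + q := by
    rw [derivative_mul, derivative_X, mul_one]
  rw [hder, map_mul, aeval_X, map_add, map_mul, aeval_X]
  calc v * (aeval (wX K) q * wX K)
      = (v * aeval (wX K) q) * wX K := by rw [mul_assoc]
    _ = (aeval (wX K) q * v + aeval (wX K) (derivative q)) * wX K := by rw [ihq]
    _ = aeval (wX K) q * (v * wX K) + aeval (wX K) (derivative q) * wX K := by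
        rw [add_mul, mul_assoc]
    _ = aeval (wX K) q * (wX K * v + 1) + aeval (wX K) (derivative q) * wX K := by rw [hv]
    _ = aeval (wX K) q * wX K * v
          + (aeval (wX K) (derivative q) * wX K + aeval (wX K) q) := by
        rw [mul_add, mul_one, ← mul_assoc]; abel

/-- Commutation of an element `v` satisfying `[v, x] = 1` with polynomials in `x`. -/
theorem weyl_comm {v : Weyl K} (hv : v * wX K = wX K * v + 1) (a : K[X]) :
    v * aeval (wX K) a = aeval (wX K) a * v + aeval (wX K) (derivative a) := by
  induction a using Polynomial.induction_on with
  | C c => simp [Algebra.commutes]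
  | add q r hq hr =>
      simp only [map_add, mul_add, add_mul, hq, hr, derivative_add]
      abel
  | monomial m c ih =>
      have hxp : (C c * X ^ (m + 1) : K[X]) = C c * X ^ m * X := by ring
      rw [hxp]
      exact weyl_comm_step hv ih

/-- The sequence `b 0 = 1`, `b (n+1) = b n ' + f * b n`, so that `b n = (∂ + f)^n (1)`. -/
def bSeq (f : K[X]) : ℕ → K[X]
  | 0 => 1
  | n + 1 => derivative (bSeq f n) + f * bSeq f n

theorem weyl_pow_expand {v : Weyl K}
    (hv : ∀ a : K[X], v * aeval (wX K) a = aeval (wX K) a * v + aeval (wX K) (derivative a))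
    (f : K[X]) (n : ℕ) :
    (v + aeval (wX K) f) ^ n
      = ∑ j ∈ Finset.range (n + 1),
          n.choose j • (aeval (wX K) (bSeq f j) * v ^ (n - j)) := by
  induction n with
  | zero => simp [bSeq]
  | succ n ih =>
    have key : ∀ j m : ℕ,
        (v + aeval (wX K) f) * (aeval (wX K) (bSeq f j) * v ^ m)
          = aeval (wX K) (bSeq f j) * v ^ (m + 1)
            + aeval (wX K) (bSeq f (j + 1)) * v ^ m := by
      intro j m
      have h1 : v * (aeval (wX K) (bSeq f j) * v ^ m)
          = aeval (wX K) (bSeq f j) * v ^ (m + 1)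
            + aeval (wX K) (derivative (bSeq f j)) * v ^ m := by
        rw [← mul_assoc, hv, add_mul, mul_assoc, ← pow_succ']
      have h2 : aeval (wX K) f * (aeval (wX K) (bSeq f j) * v ^ m)
          = aeval (wX K) (f * bSeq f j) * v ^ m := by
        rw [← mul_assoc, ← map_mul]
      have h3 : aeval (wX K) (derivative (bSeq f j)) * v ^ m
            + aeval (wX K) (f * bSeq f j) * v ^ m
          = aeval (wX K) (bSeq f (j + 1)) * v ^ m := by
        rw [← add_mul, ← map_add]
        rfl
      rw [add_mul, h1, h2, add_assoc, h3]
    rw [pow_succ' (v + aeval (wX K) f) n, ih, Finset.mul_sum]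
    have step1 : ∀ j ∈ Finset.range (n + 1),
        (v + aeval (wX K) f) * (n.choose j • (aeval (wX K) (bSeq f j) * v ^ (n - j)))
          = n.choose j • (aeval (wX K) (bSeq f j) * v ^ (n + 1 - j))
            + n.choose j • (aeval (wX K) (bSeq f (j + 1)) * v ^ (n + 1 - (j + 1))) := by
      intro j hj
      have hj' : j < n + 1 := Finset.mem_range.mp hj
      rw [mul_smul_comm, key j (n - j), smul_add,
        show n - j + 1 = n + 1 - j from by omega,
        show n - j = n + 1 - (j + 1) from by omega]
    rw [Finset.sum_congr rfl step1, Finset.sum_add_distrib]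
    -- binomial bookkeeping
    rw [Finset.sum_range_succ'
      (fun j => (n + 1).choose j • (aeval (wX K) (bSeq f j) * v ^ (n + 1 - j))) (n + 1)]
    simp only [Nat.choose_succ_succ, add_smul, Nat.choose_zero_right, one_smul]
    rw [Finset.sum_add_distrib]
    rw [Finset.sum_range_succ'
      (fun j => n.choose j • (aeval (wX K) (bSeq f j) * v ^ (n + 1 - j))) n]
    rw [Finset.sum_range_succ
      (fun i => n.choose (i + 1) • (aeval (wX K) (bSeq f (i + 1)) * v ^ (n + 1 - (i + 1)))) n]
    simp only [Nat.choose_succ_self, zero_smul, add_zero, Nat.choose_zero_right, one_smul,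
      Nat.sub_zero]
    abel

theorem weyl_cast_p_zero (p : ℕ) [CharP K p] : ((p : ℕ) : Weyl K) = 0 := by
  have h : ((p : ℕ) : Weyl K) = algebraMap K (Weyl K) ((p : ℕ) : K) :=
    (map_natCast (algebraMap K (Weyl K)) p).symm
  rw [h, CharP.cast_eq_zero K p, map_zero]

theorem weyl_pow_prime {p : ℕ} (hp : p.Prime) [CharP K p] {v : Weyl K}
    (hv : ∀ a : K[X], v * aeval (wX K) a = aeval (wX K) a * v + aeval (wX K) (derivative a))
    (f : K[X]) :
    (v + aeval (wX K) f) ^ p = v ^ p + aeval (wX K) (bSeq f p) := by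
  rw [weyl_pow_expand hv f p, Finset.sum_range_succ]
  have h2 : p.choose p • (aeval (wX K) (bSeq f p) * v ^ (p - p)) = aeval (wX K) (bSeq f p) := by
    simp
  rw [h2]
  congr 1
  rw [Finset.sum_eq_single_of_mem 0 (Finset.mem_range.mpr hp.pos)]
  · simp [bSeq]
  · intro j hj hj0
    obtain ⟨t, ht⟩ := hp.dvd_choose_self hj0 (Finset.mem_range.mp hj)
    rw [ht, mul_smul, nsmul_eq_mul, weyl_cast_p_zero p, zero_mul]

/-- The representation of the Weyl algebra on `K[X]`. -/
def wRep (K : Type*) [CommRing K] : Weyl K →ₐ[K] Module.End K K[X] :=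
  RingQuot.liftAlgHom K ⟨FreeAlgebra.lift K
    ![Algebra.lmul K K[X] X, (derivative : K[X] →ₗ[K] K[X])], by
      rintro _ _ ⟨⟩
      simp only [map_mul, map_add, map_one, FreeAlgebra.lift_ι_apply, Matrix.cons_val_zero,
        Matrix.cons_val_one, Matrix.head_cons]
      refine LinearMap.ext fun q => ?_
      simp only [Module.End.mul_apply, LinearMap.add_apply, Module.End.one_apply,
        Algebra.coe_lmul_eq_mul, LinearMap.mul_apply']
      rw [derivative_mul, derivative_X, one_mul]
      ring⟩

theorem wRep_wD (K : Type*) [CommRing K] :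
    wRep K (wD K) = (derivative : K[X] →ₗ[K] K[X]) := by
  rw [wD, wRep, RingQuot.liftAlgHom_mkAlgHom_apply, FreeAlgebra.lift_ι_apply]
  simp

theorem wRep_aeval (a : K[X]) : wRep K (aeval (wX K) a) = Algebra.lmul K K[X] a := by
  have h : ((wRep K).comp (aeval (wX K) : K[X] →ₐ[K] Weyl K)) = Algebra.lmul K K[X] := by
    apply Polynomial.algHom_ext
    rw [AlgHom.comp_apply, aeval_X, wX, wRep, RingQuot.liftAlgHom_mkAlgHom_apply,
      FreeAlgebra.lift_ι_apply]
    simp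
  exact AlgHom.congr_fun h a

theorem iterate_derivative_charP {p : ℕ} (hp : 0 < p) [CharP K p] (f : K[X]) :
    derivative^[p] f = 0 := by
  ext m
  rw [Polynomial.coeff_iterate_derivative, Polynomial.coeff_zero]
  obtain ⟨t, ht⟩ := (Nat.dvd_factorial hp le_rfl).trans (Nat.factorial_dvd_descFactorial (m + p) p)
  rw [ht, mul_smul, nsmul_eq_mul, CharP.cast_eq_zero K p, zero_mul]

theorem derivative_bSeq_prime {p : ℕ} (hp : p.Prime) [CharP K p] (f : K[X]) :
    derivative (bSeq f p) = 0 := by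
  have hvD : ∀ a : K[X],
      wD K * aeval (wX K) a = aeval (wX K) a * wD K + aeval (wX K) (derivative a) :=
    fun a => weyl_comm (weyl_rel K) a
  set u := wD K + aeval (wX K) f with hu
  have hE : u ^ p = wD K ^ p + aeval (wX K) (bSeq f p) := weyl_pow_prime hp hvD f
  have hcomm : u * u ^ p = u ^ p * u := by
    rw [← pow_succ' u p, pow_succ u p]
  rw [hE] at hcomm
  have key := congrArg (wRep K) hcomm
  simp only [map_mul, map_add, map_pow, wRep_wD, wRep_aeval, hu] at key
  have h1 := LinearMap.congr_fun key 1
  simp only [Module.End.mul_apply, LinearMap.add_apply, Module.End.pow_apply,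
    Algebra.coe_lmul_eq_mul, LinearMap.mul_apply'] at h1
  rw [Polynomial.iterate_derivative_one hp.pos, derivative_one] at h1
  -- h1 : derivative (0 + c*1) + f * (0 + c*1) = derivative^[p] (0 + f*1) + c * (0 + f*1)
  rw [zero_add, zero_add, mul_one, mul_one] at h1
  rw [iterate_derivative_charP hp.pos] at h1
  have h2 : derivative (bSeq f p) + f * bSeq f p = f * bSeq f p := by
    rw [mul_comm (bSeq f p) f] at h1
    simpa using h1
  exact add_right_cancel (b := f * bSeq f p) (h2.trans (zero_add _).symm)

/-- `expand_contract` without `NoZeroDivisors`, for characteristic `p` prime. -/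
theorem expand_contract_charP {p : ℕ} (hp : p.Prime) [CharP K p] {h : K[X]}
    (hh : derivative h = 0) : expand K p (contract p h) = h := by
  haveI : Fact p.Prime := ⟨hp⟩
  ext n
  rw [coeff_expand hp.pos, coeff_contract hp.ne_zero]
  split_ifs with hd
  · rw [Nat.div_mul_cancel hd]
  · symm
    rcases n with _ | m
    · exact absurd (dvd_zero p) hd
    have h1 : h.coeff (m + 1) * ((m : K) + 1) = 0 := by
      have hc := coeff_derivative h m
      rw [hh, coeff_zero] at hc
      exact hc.symm
    have hu : IsUnit (((m + 1 : ℕ)) : K) := by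
      have hz : IsUnit (((m + 1 : ℕ)) : ZMod p) := by
        apply isUnit_iff_ne_zero.mpr
        rw [Ne, ZMod.natCast_eq_zero_iff]
        exact hd
      have := hz.map (ZMod.castHom (dvd_refl p) K)
      rwa [map_natCast] at this
    have h1' : (((m + 1 : ℕ)) : K) * h.coeff (m + 1) = 0 := by
      rw [mul_comm]
      simpa [Nat.cast_add, Nat.cast_one] using h1
    exact ((hu.mul_right_eq_zero).mp h1')

end Aux

/-- `L(f) := (∂ + f)^p − ∂^p − f^p` takes values in `K[x^p]` (i.e. it equals `g(x^p)` for
some polynomial `g`, encoded via `Polynomial.expand K p`), and `L` is additive. -/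
theorem statement2 (p : ℕ) (hp : p.Prime) (K : Type*) [CommRing K] [IsReduced K] [CharP K p] :
    (∀ f : Polynomial K, ∃ g : Polynomial K,
      (wD K + aeval (wX K) f) ^ p - wD K ^ p - aeval (wX K) f ^ p
        = aeval (wX K) (Polynomial.expand K p g)) ∧
    (∀ f g : Polynomial K,
      (wD K + aeval (wX K) (f + g)) ^ p - wD K ^ p - aeval (wX K) (f + g) ^ p
        = ((wD K + aeval (wX K) f) ^ p - wD K ^ p - aeval (wX K) f ^ p)
          + ((wD K + aeval (wX K) g) ^ p - wD K ^ p - aeval (wX K) g ^ p)) := by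
  haveI : Fact p.Prime := ⟨hp⟩
  have hvD : ∀ a : K[X],
      wD K * aeval (wX K) a = aeval (wX K) a * wD K + aeval (wX K) (derivative a) :=
    fun a => weyl_comm (weyl_rel K) a
  have hE : ∀ f : K[X], (wD K + aeval (wX K) f) ^ p = wD K ^ p + aeval (wX K) (bSeq f p) :=
    fun f => weyl_pow_prime hp hvD f
  have hL : ∀ h : K[X],
      (wD K + aeval (wX K) h) ^ p - wD K ^ p - aeval (wX K) h ^ p
        = aeval (wX K) (bSeq h p) - aeval (wX K) (h ^ p) := by
    intro h
    rw [hE h, map_pow]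
    abel
  constructor
  · intro f
    refine ⟨contract p (bSeq f p - f ^ p), ?_⟩
    have hder : derivative (bSeq f p - f ^ p) = 0 := by
      rw [derivative_sub, derivative_bSeq_prime hp f, derivative_pow,
        CharP.cast_eq_zero K p, map_zero, zero_mul, zero_mul, sub_zero]
    rw [expand_contract_charP hp hder, hL f, map_sub]
  · intro f g
    have hvu : ∀ a : K[X], (wD K + aeval (wX K) f) * aeval (wX K) a
        = aeval (wX K) a * (wD K + aeval (wX K) f) + aeval (wX K) (derivative a) := by
      intro a
      have hc : aeval (wX K) f * aeval (wX K) a = aeval (wX K) a * aeval (wX K) f := by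
        rw [← map_mul, ← map_mul, mul_comm]
      rw [add_mul, mul_add, hvD a, hc]
      abel
    have hE2 : ((wD K + aeval (wX K) f) + aeval (wX K) g) ^ p
        = (wD K + aeval (wX K) f) ^ p + aeval (wX K) (bSeq g p) := weyl_pow_prime hp hvu g
    have hadd : aeval (wX K) (bSeq (f + g) p)
        = aeval (wX K) (bSeq f p) + aeval (wX K) (bSeq g p) := by
      have h1 : wD K + aeval (wX K) (f + g) = (wD K + aeval (wX K) f) + aeval (wX K) g := by
        rw [map_add, add_assoc]
      have h2 := hE (f + g)
      rw [h1, hE2, hE f] at h2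
      -- h2 : wD^p + A(bf) + A(bg) = wD^p + A(b(f+g))
      rw [add_assoc] at h2
      exact (add_left_cancel h2).symm
    have hfg : ((f + g) ^ p : K[X]) = f ^ p + g ^ p := add_pow_char _ _ _
    rw [hL (f + g), hL f, hL g, hadd, hfg, map_add]
    abel
end
end

section
/- Let p be a prime, let K be a reduced commutative ring of characteristic p, and let A_n(K) be the n-th Weyl algebra over K with generators x_1, …, x_n, ∂_1, …, ∂_n. Then for every i ∈ {1, …, n} and every polynomial f ∈ K[x_1, …, x_n] one has (∂_i + f)^p = ∂_i^p + ∂^{p-1}f/∂x_i^{p-1} + f^p. -/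
/-!
STATEMENT 3: Let `p` be a prime, `K` a reduced commutative ring of characteristic `p`, and
`A_n(K)` the `n`-th Weyl algebra with generators `x_1, …, x_n, ∂_1, …, ∂_n`.  Then for every
`i` and every `f ∈ K[x_1, …, x_n]` one has `(∂_i + f)^p = ∂_i^p + ∂^{p-1}f/∂x_i^{p-1} + f^p`.
-/

noncomputable section

/-- The defining relations of the `n`-th Weyl algebra: the `x_i` (indexed by `Sum.inl`)
commute, the `∂_i` (indexed by `Sum.inr`) commute, and `∂_i x_j = x_j ∂_i + δ_{ij}`. -/
inductive WeylRelN (K : Type*) [CommRing K] (n : ℕ) :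
    FreeAlgebra K (Fin n ⊕ Fin n) → FreeAlgebra K (Fin n ⊕ Fin n) → Prop
  | xx (i j : Fin n) : WeylRelN K n
      (FreeAlgebra.ι K (Sum.inl i) * FreeAlgebra.ι K (Sum.inl j))
      (FreeAlgebra.ι K (Sum.inl j) * FreeAlgebra.ι K (Sum.inl i))
  | dd (i j : Fin n) : WeylRelN K n
      (FreeAlgebra.ι K (Sum.inr i) * FreeAlgebra.ι K (Sum.inr j))
      (FreeAlgebra.ι K (Sum.inr j) * FreeAlgebra.ι K (Sum.inr i))
  | dx_ne (i j : Fin n) (h : i ≠ j) : WeylRelN K n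
      (FreeAlgebra.ι K (Sum.inr i) * FreeAlgebra.ι K (Sum.inl j))
      (FreeAlgebra.ι K (Sum.inl j) * FreeAlgebra.ι K (Sum.inr i))
  | dx (i : Fin n) : WeylRelN K n
      (FreeAlgebra.ι K (Sum.inr i) * FreeAlgebra.ι K (Sum.inl i))
      (FreeAlgebra.ι K (Sum.inl i) * FreeAlgebra.ι K (Sum.inr i) + 1)

/-- The `n`-th Weyl algebra `A_n(K)`. -/
abbrev WeylN (K : Type*) [CommRing K] (n : ℕ) := RingQuot (WeylRelN K n)

/-- The generators of the `n`-th Weyl algebra: `wgen K n (Sum.inl i) = x_i` and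
`wgen K n (Sum.inr i) = ∂_i`. -/
def wgen (K : Type*) [CommRing K] (n : ℕ) (k : Fin n ⊕ Fin n) : WeylN K n :=
  RingQuot.mkAlgHom K (WeylRelN K n) (FreeAlgebra.ι K k)


section Statement3Aux

variable {A : Type*} [Ring A]

/-- The commutator operator `b ↦ u*b - b*u`. -/
def st3adE (u b : A) : A := u * b - b * u

lemma st3adE_def (u b : A) : u * b = st3adE u b + b * u := by simp [st3adE]

lemma st3_pow_mul_eq (u a : A) (n : ℕ) :
    u ^ n * a = ∑ k ∈ Finset.range (n+1), n.choose k • ((st3adE u)^[k] a * u ^ (n - k)) := by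
  induction n with
  | zero => simp
  | succ n ih =>
    rw [pow_succ', mul_assoc, ih, Finset.mul_sum]
    have step : ∀ k ∈ Finset.range (n+1),
        u * (n.choose k • ((st3adE u)^[k] a * u ^ (n - k)))
        = n.choose k • ((st3adE u)^[k+1] a * u ^ (n - k))
          + n.choose k • ((st3adE u)^[k] a * u ^ (n + 1 - k)) := by
      intro k hk
      rw [Finset.mem_range] at hk
      have hk' : n + 1 - k = (n - k) + 1 := by omega
      rw [mul_smul_comm, ← mul_assoc, st3adE_def u ((st3adE u)^[k] a), add_mul,
        Function.iterate_succ_apply', smul_add, hk', pow_succ', mul_assoc]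
    rw [Finset.sum_congr rfl step, Finset.sum_add_distrib]
    rw [Finset.sum_range_succ' (fun j => (n+1).choose j • ((st3adE u)^[j] a * u ^ (n + 1 - j)))]
    have e1 : ∀ k ∈ Finset.range (n+1),
        (n+1).choose (k+1) • ((st3adE u)^[k+1] a * u ^ (n + 1 - (k+1)))
        = n.choose k • ((st3adE u)^[k+1] a * u ^ (n - k))
          + n.choose (k+1) • ((st3adE u)^[k+1] a * u ^ (n - k)) := by
      intro k hk
      rw [Nat.choose_succ_succ, add_nsmul, Nat.succ_sub_succ]
    rw [Finset.sum_congr rfl e1, Finset.sum_add_distrib]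
    have e2 : ∑ k ∈ Finset.range (n+1), n.choose k • ((st3adE u)^[k] a * u ^ (n + 1 - k))
        = ∑ k ∈ Finset.range (n+1), n.choose (k+1) • ((st3adE u)^[k+1] a * u ^ (n - k))
          + a * u ^ (n+1) := by
      rw [Finset.sum_range_succ' (fun k => n.choose k • ((st3adE u)^[k] a * u ^ (n + 1 - k))),
        Finset.sum_range_succ (fun k => n.choose (k+1) • ((st3adE u)^[k+1] a * u ^ (n - k)))]
      simp [Nat.succ_sub_succ]
    rw [e2]
    simp
    abel

lemma st3_sum_conj_eq (u a : A) (m : ℕ) (hm : 1 ≤ m) :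
    ∑ i ∈ Finset.range m, u ^ i * a * u ^ (m - 1 - i)
      = ∑ k ∈ Finset.range m, (m.choose (k+1)) • ((st3adE u)^[k] a * u ^ (m - 1 - k)) := by
  have e1 : ∀ i ∈ Finset.range m,
      u ^ i * a * u ^ (m - 1 - i)
        = ∑ k ∈ Finset.range (i+1), i.choose k • ((st3adE u)^[k] a * u ^ (m - 1 - k)) := by
    intro i hi
    rw [Finset.mem_range] at hi
    rw [st3_pow_mul_eq, Finset.sum_mul]
    refine Finset.sum_congr rfl fun k hk => ?_
    rw [Finset.mem_range] at hk
    rw [smul_mul_assoc, mul_assoc, ← pow_add]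
    have : i - k + (m - 1 - i) = m - 1 - k := by omega
    rw [this]
  rw [Finset.sum_congr rfl e1]
  rw [Finset.sum_comm' (t' := Finset.range m) (s' := fun k => Finset.Ico k m)
    (f := fun i k => i.choose k • ((st3adE u)^[k] a * u ^ (m - 1 - k)))
    (by intro i k; simp only [Finset.mem_range, Finset.mem_Ico]; omega)]
  refine Finset.sum_congr rfl fun k hk => ?_
  rw [← Finset.sum_smul]
  have h2 : Finset.Ico k m = Finset.Icc k (m-1) := by
    ext x; simp only [Finset.mem_Ico, Finset.mem_Icc]; omega
  rw [h2, Nat.sum_Icc_choose, show m - 1 + 1 = m by omega]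

lemma st3_sum_conj_char_p (p : ℕ) (hp : p.Prime) (hpA : (p : A) = 0) (u a : A) :
    ∑ i ∈ Finset.range p, u ^ i * a * u ^ (p - 1 - i) = (st3adE u)^[p-1] a := by
  rw [st3_sum_conj_eq u a p hp.one_lt.le]
  have hp2 : 2 ≤ p := hp.two_le
  have hsplit : p = (p - 1) + 1 := by omega
  rw [hsplit, Finset.sum_range_succ]
  have hz : ∀ k ∈ Finset.range (p - 1),
      ((p-1)+1).choose (k+1) • ((st3adE u)^[k] a * u ^ ((p-1) + 1 - 1 - k)) = 0 := by
    intro k hk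
    rw [Finset.mem_range] at hk
    have hdvd : p ∣ p.choose (k+1) := hp.dvd_choose_self (Nat.succ_ne_zero k) (by omega)
    obtain ⟨c, hc⟩ := hdvd
    rw [← hsplit, hc, nsmul_eq_mul, Nat.cast_mul, hpA, zero_mul, zero_mul]
  rw [Finset.sum_eq_zero hz, zero_add, ← hsplit, Nat.choose_self, one_smul]
  simp

open Polynomial in
lemma st3_derivative_pow_noncomm (u : A[X]) (n : ℕ) :
    derivative (u ^ n) = ∑ i ∈ Finset.range n, u ^ i * derivative u * u ^ (n - 1 - i) := by
  induction n with
  | zero => simp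
  | succ n ih =>
    rw [pow_succ, derivative_mul, ih, Finset.sum_mul, Finset.sum_range_succ]
    congr 1
    · refine Finset.sum_congr rfl fun i hi => ?_
      rw [Finset.mem_range] at hi
      rw [mul_assoc, ← pow_succ]
      congr 2
      omega
    · rw [show n + 1 - 1 - n = 0 by omega, pow_zero, mul_one]

open Polynomial in
theorem st3_jacobson (p : ℕ) (hp : p.Prime) (hpA : (p : A) = 0)
    (D F : A) (g : ℕ → A) (hg0 : g 0 = F)
    (hgD : ∀ k, D * g k - g k * D = g (k+1))
    (hgF : ∀ k, F * g k = g k * F) :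
    (D + F) ^ p = D ^ p + g (p-1) + F ^ p := by
  have hp2 : 2 ≤ p := hp.two_le
  set u : A[X] := C D + C F * X with hu
  have hudeg : u.natDegree ≤ 1 := by
    refine (natDegree_add_le _ _).trans ?_
    simp only [natDegree_C, max_le_iff]
    refine ⟨Nat.zero_le _, (natDegree_mul_le).trans ?_⟩
    simpa using natDegree_X_le
  have hpowdeg : (u ^ p).natDegree ≤ p := by
    refine (natDegree_pow_le).trans ?_
    calc p * u.natDegree ≤ p * 1 := Nat.mul_le_mul_left p hudeg
      _ = p := Nat.mul_one p
  have had : ∀ k, (st3adE u)^[k] (C F) = C (g k) := by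
    intro k
    induction k with
    | zero => simp [hg0]
    | succ k ih =>
      rw [Function.iterate_succ_apply', ih]
      show u * C (g k) - C (g k) * u = _
      rw [hu]
      have hX : (X : A[X]) * C (g k) = C (g k) * X := X_mul
      have hswap : C F * X * C (g k) = C (g k) * (C F * X) := by
        rw [mul_assoc, hX, ← mul_assoc, ← C_mul, hgF, C_mul, mul_assoc]
      rw [add_mul, mul_add, hswap, ← C_mul, ← C_mul, add_sub_add_right_eq_sub, ← C_sub, hgD]
  have hder_u : derivative u = C F := by simp [hu]
  have hpAX : (p : A[X]) = 0 := by
    rw [← Polynomial.C_eq_natCast, show ((p:ℕ) : A) = 0 from hpA, map_zero]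
  have hder : derivative (u ^ p) = C (g (p-1)) := by
    rw [st3_derivative_pow_noncomm, hder_u, st3_sum_conj_char_p p hp hpAX, had]
  have hc1 : (u ^ p).coeff 1 = g (p-1) := by
    have h := coeff_derivative (u ^ p) 0
    rw [hder] at h
    simpa using h.symm
  have hcmid : ∀ t, 2 ≤ t → t ≤ p - 1 → (u ^ p).coeff t = 0 := by
    intro t ht2 htp
    obtain ⟨j, rfl⟩ : ∃ j, t = j + 1 := ⟨t - 1, by omega⟩
    have h0 : (u ^ p).coeff (j+1) * ((j : A) + 1) = 0 := by
      have h := coeff_derivative (u ^ p) j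
      rw [hder] at h
      rw [← h, coeff_C, if_neg (by omega)]
    have hndvd : ¬ (p ∣ (j+1)) := fun hdvd => by
      have := Nat.le_of_dvd (Nat.succ_pos j) hdvd; omega
    have hcop : Nat.gcd p (j+1) = 1 := (hp.coprime_iff_not_dvd).mpr hndvd
    have hbez : (1 : ℤ) = (p:ℤ) * Nat.gcdA p (j+1) + ((j+1 : ℕ) : ℤ) * Nat.gcdB p (j+1) := by
      rw [← Nat.gcd_eq_gcd_ab, hcop, Nat.cast_one]
    have hA : (1 : A) = ((j : A)+1) * ((Nat.gcdB p (j+1) : ℤ) : A) := by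
      have h2 := congrArg (fun z : ℤ => (z : A)) hbez
      push_cast at h2
      rw [hpA, zero_mul, zero_add] at h2
      exact h2
    calc (u^p).coeff (j+1) = (u^p).coeff (j+1) * 1 := (mul_one _).symm
      _ = (u^p).coeff (j+1) * (((j:A)+1) * ((Nat.gcdB p (j+1) : ℤ) : A)) := by rw [← hA]
      _ = ((u^p).coeff (j+1) * ((j:A)+1)) * ((Nat.gcdB p (j+1) : ℤ) : A) := by rw [mul_assoc]
      _ = 0 := by rw [h0, zero_mul]
  have hchigh : ∀ t, p < t → (u ^ p).coeff t = 0 := fun t ht =>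
    coeff_eq_zero_of_natDegree_lt (lt_of_le_of_lt hpowdeg ht)
  have hc0 : (u ^ p).coeff 0 = D ^ p := by
    rw [coeff_zero_eq_eval_zero]
    have h1 : eval 0 (u ^ p)
        = eval₂RingHom' (RingHom.id A) 0 (fun a => Commute.zero_right a) (u ^ p) := rfl
    rw [h1, map_pow]
    have h2 : eval₂RingHom' (RingHom.id A) 0 (fun a => Commute.zero_right a) u = D := by
      show eval₂ (RingHom.id A) 0 u = D
      rw [hu]; simp
    rw [h2]
  have hctop : ∀ m, (u ^ m).coeff m = F ^ m := by
    intro m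
    induction m with
    | zero => simp
    | succ m ih =>
      rw [pow_succ', hu]
      rw [add_mul, coeff_add, coeff_C_mul, mul_assoc, coeff_C_mul, coeff_X_mul, ih]
      have hz : (u ^ m).coeff (m+1) = 0 := by
        refine coeff_eq_zero_of_natDegree_lt (lt_of_le_of_lt ?_ (Nat.lt_succ_self m))
        refine (natDegree_pow_le).trans ?_
        calc m * u.natDegree ≤ m * 1 := Nat.mul_le_mul_left m hudeg
          _ = m := Nat.mul_one m
      rw [← hu, hz, mul_zero, zero_add, pow_succ']
  have hev1 : (D + F) ^ p = eval 1 (u ^ p) := by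
    have h1 : eval 1 (u ^ p)
        = eval₂RingHom' (RingHom.id A) 1 (fun a => Commute.one_right a) (u ^ p) := rfl
    rw [h1, map_pow]
    have h2 : eval₂RingHom' (RingHom.id A) 1 (fun a => Commute.one_right a) u = D + F := by
      show eval₂ (RingHom.id A) 1 u = D + F
      rw [hu]; simp
    rw [h2]
  rw [hev1, eval_eq_sum_range' (lt_of_le_of_lt hpowdeg (Nat.lt_succ_self p)) 1]
  simp only [one_pow, mul_one]
  rw [Finset.sum_range_succ' (fun i => (u ^ p).coeff i)]
  have hre : ∑ k ∈ Finset.range p, (u^p).coeff (k+1)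
      = ∑ k ∈ Finset.range ((p-1)+1), (u^p).coeff (k+1) := by
    rw [show (p-1)+1 = p by omega]
  rw [hre, Finset.sum_range_succ' (fun i => (u ^ p).coeff (i+1))]
  have hlast : ∑ i ∈ Finset.range (p - 1), (u ^ p).coeff (i + 1 + 1) = F ^ p := by
    rw [Finset.sum_eq_single_of_mem (p - 2) (by simp; omega)]
    · rw [show p - 2 + 1 + 1 = p by omega, hctop]
    · intro i hi hne
      rw [Finset.mem_range] at hi
      rcases lt_or_gt_of_ne (show i + 1 + 1 ≠ p by omega) with h | h
      · exact hcmid _ (by omega) (by omega)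
      · exact hchigh _ h
  rw [hlast, hc1, hc0]
  abel

end Statement3Aux

lemma st3_wrel (K : Type*) [CommRing K] (n : ℕ) (i j : Fin n) :
    wgen K n (Sum.inr i) * wgen K n (Sum.inl j)
      = wgen K n (Sum.inl j) * wgen K n (Sum.inr i) + (if i = j then 1 else 0) := by
  unfold wgen
  rw [← map_mul]
  by_cases h : i = j
  · subst h
    rw [RingQuot.mkAlgHom_rel K (WeylRelN.dx i), map_add, map_mul, map_one, if_pos rfl]
  · rw [RingQuot.mkAlgHom_rel K (WeylRelN.dx_ne i j h), map_mul, if_neg h, add_zero]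

lemma st3_wkey (K : Type*) [CommRing K] (n : ℕ)
    (Φ : MvPolynomial (Fin n) K →ₐ[K] WeylN K n)
    (hΦ : ∀ j : Fin n, Φ (MvPolynomial.X j) = wgen K n (Sum.inl j))
    (i : Fin n) (a : MvPolynomial (Fin n) K) :
    wgen K n (Sum.inr i) * Φ a
      = Φ a * wgen K n (Sum.inr i) + Φ (MvPolynomial.pderiv i a) := by
  induction a using MvPolynomial.induction_on with
  | C r =>
    rw [MvPolynomial.pderiv_C, map_zero, add_zero,
      show (MvPolynomial.C r : MvPolynomial (Fin n) K) = algebraMap K _ r from rfl,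
      AlgHom.commutes]
    exact (Algebra.commutes r _).symm
  | add q r ihq ihr =>
    rw [map_add, mul_add, ihq, ihr, map_add, add_mul, map_add]
    abel
  | mul_X q j ih =>
    rw [map_mul, hΦ j, ← mul_assoc, ih, add_mul, mul_assoc, st3_wrel K n i j, mul_add, mul_assoc,
      MvPolynomial.pderiv_mul, map_add, map_mul, map_mul, hΦ j, MvPolynomial.pderiv_X]
    by_cases h : i = j
    · subst h
      rw [if_pos rfl, Pi.single_eq_same, map_one, mul_one]
      abel
    · rw [if_neg h, Pi.single_eq_of_ne (fun hh => h hh.symm), map_zero, mul_zero]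
      abel

/-- `Φ` is the canonical embedding `K[x_1, …, x_n] → A_n(K)` (the unique `K`-algebra map
sending `X j` to `x_j`), and `f` is regarded as the element `Φ f` of the Weyl algebra. -/
theorem statement3 (p n : ℕ) (hp : p.Prime) (K : Type*) [CommRing K] [IsReduced K] [CharP K p]
    (Φ : MvPolynomial (Fin n) K →ₐ[K] WeylN K n)
    (hΦ : ∀ j : Fin n, Φ (MvPolynomial.X j) = wgen K n (Sum.inl j))
    (i : Fin n) (f : MvPolynomial (Fin n) K) :
    (wgen K n (Sum.inr i) + Φ f) ^ p =
      wgen K n (Sum.inr i) ^ p + Φ ((fun g => MvPolynomial.pderiv i g)^[p - 1] f)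
        + (Φ f) ^ p := by
  have hpA : ((p : ℕ) : WeylN K n) = 0 := by
    rw [← map_natCast (algebraMap K (WeylN K n)) p, CharP.cast_eq_zero K p, map_zero]
  refine st3_jacobson p hp hpA (wgen K n (Sum.inr i)) (Φ f)
    (fun k => Φ ((fun g => MvPolynomial.pderiv i g)^[k] f)) rfl ?_ ?_
  · intro k
    rw [st3_wkey K n Φ hΦ i, add_sub_cancel_left]
    exact congrArg Φ (Function.iterate_succ_apply' (fun g => MvPolynomial.pderiv i g) k f).symm
  · intro k
    rw [← map_mul, ← map_mul, mul_comm]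
end
end

section
/- Let K be a perfect field of characteristic p > 0. For every σ ∈ Aut_K(A_1), the degree of the restricted automorphism res(σ) of Z = K[X, Y] equals the degree of σ; that is, max(deg_{X,Y} σ(x^p), deg_{X,Y} σ(∂^p)) = max(deg σ(x), deg σ(∂)), where on the left σ(x^p) and σ(∂^p) are regarded as polynomials in X = x^p and Y = ∂^p, and on the right deg denotes the total degree of an element of A_1 written in the basis {x^i ∂^j}. -/
/-!
STATEMENT 5: Let `K` be a perfect field of characteristic `p > 0`.  For every
`σ ∈ Aut_K(A₁)`, the degree of the restricted automorphism `res(σ)` of `Z = K[X, Y]`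
equals the degree of `σ`:
`max(deg_{X,Y} σ(x^p), deg_{X,Y} σ(∂^p)) = max(deg σ(x), deg σ(∂))`.

The centre is identified with `K[X, Y]` via `ψ` (`X = x^p`, `Y = ∂^p`); the degree of an
element of `A₁` is defined via the filtration by spans of `{x^i ∂^j : i + j ≤ n}`.
-/

noncomputable section

/-- The degree of an element of `A₁` in the basis `{x^i ∂^j}`: the least `n` such that the
element lies in the `K`-span of `{x^i ∂^j : i + j ≤ n}`. -/
def wdeg (K : Type*) [CommRing K] (a : Weyl K) : ℕ :=
  sInf {n : ℕ | a ∈ Submodule.span K {w : Weyl K | ∃ i j : ℕ, i + j ≤ n ∧ w = wX K ^ i * wD K ^ j}}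

/-!
Let `ρ` be the action of `A₁` on `K[t, s]` (`t = X 0`, `s = X 1`) by `x ↦ t·` and
`∂ ↦ ∂/∂t + s·`, and call `ρ(a) 1` the symbol of `a`. The symbol of `x^i ∂^j` is `t^i s^j`; as
these monomials span `A₁`, the symbol map is a linear isomorphism and `deg a` is the total degree
of the symbol of `a`. Since `∂/∂t` does not raise degrees, `ρ(a)` raises total degrees by at most
`deg a` and acts on leading forms as multiplication by the leading form of the symbol of `a`.
Hence leading forms multiply, `A₁` has no zero divisors and `deg σ(x)^p = p · deg σ(x)`. On the
other hand `ψ(F) = F(x^p, ∂^p)` has symbol `F(t^p, s^p)`, of degree `p · deg F`; for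
`F = ψ⁻¹(σ(x)^p)` this gives `deg F = deg σ(x)`, and likewise for `∂`.
-/

namespace MvPolynomial

variable {σ R : Type*} [CommSemiring R]

attribute [local instance] MvPolynomial.gradedAlgebra in
lemma IsHomogeneous.homogeneousComponent_add_mul {g : MvPolynomial σ R} {n : ℕ}
    (hg : g.IsHomogeneous n) (m : ℕ) (f : MvPolynomial σ R) :
    homogeneousComponent (n + m) (g * f) = g * homogeneousComponent m f := by
  rw [← decomposition.decompose'_apply, ← decomposition.decompose'_apply]
  exact DirectSum.coe_decompose_mul_add_of_left_mem (homogeneousSubmodule σ R) hg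

lemma totalDegree_pderiv_le (i : σ) (f : MvPolynomial σ R) :
    (pderiv i f).totalDegree ≤ f.totalDegree := by
  classical
  refine Finset.sup_le fun d hd => ?_
  have : coeff (d + Finsupp.single i 1) f ≠ 0 :=
    left_ne_zero_of_mul (by rwa [← coeff_pderiv, ← mem_support_iff])
  refine le_trans ?_ (le_totalDegree (mem_support_iff.2 this))
  simp [Finsupp.sum_add_index']

lemma homogeneousComponent_totalDegree_ne_zero {f : MvPolynomial σ R} (hf : f ≠ 0) :
    homogeneousComponent f.totalDegree f ≠ 0 := by
  obtain ⟨d, hd, hdeg⟩ := Finset.exists_mem_eq_sup f.support (support_nonempty.2 hf)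
    fun s => s.sum fun _ e => e
  intro h
  have := coeff_homogeneousComponent f.totalDegree f d
  rw [h, coeff_zero, if_pos (by exact hdeg.symm)] at this
  exact mem_support_iff.1 hd this.symm

end MvPolynomial

open MvPolynomial

namespace Weyl

variable {K : Type*} [CommRing K]

lemma wD_mul_wX : wD K * wX K = wX K * wD K + 1 := by
  simpa only [wX, wD, map_mul, map_add, map_one] using
    RingQuot.mkAlgHom_rel K (WeylRel.rel (K := K))

lemma span_wX_pow_mul_wD_pow :
    Submodule.span K (Set.range fun ij : ℕ × ℕ => wX K ^ ij.1 * wD K ^ ij.2) = ⊤ := by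
  set M := Submodule.span K (Set.range fun ij : ℕ × ℕ => wX K ^ ij.1 * wD K ^ ij.2)
  have mem (i j : ℕ) : wX K ^ i * wD K ^ j ∈ M := Submodule.subset_span ⟨(i, j), rfl⟩
  have mul_mem (a : Weyl K) (ha : ∀ i j, a * (wX K ^ i * wD K ^ j) ∈ M) :
      ∀ b ∈ M, a * b ∈ M :=
    Submodule.span_le (p := M.comap (LinearMap.mulLeft K a)).2
      (Set.range_subset_iff.2 fun ij => ha ij.1 ij.2)
  have wX_mul : ∀ b ∈ M, wX K * b ∈ M :=
    mul_mem _ fun i j => by rw [← mul_assoc, ← pow_succ']; exact mem _ _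
  have wD_mul : ∀ b ∈ M, wD K * b ∈ M := by
    refine mul_mem _ fun i j => ?_
    induction i with
    | zero => simpa [← pow_succ'] using mem 0 (j + 1)
    | succ i ih =>
      have : wD K * (wX K ^ (i + 1) * wD K ^ j)
          = wX K * (wD K * (wX K ^ i * wD K ^ j)) + wX K ^ i * wD K ^ j := by
        rw [pow_succ', ← mul_assoc, ← mul_assoc, ← mul_assoc, wD_mul_wX]; noncomm_ring
      rw [this]
      exact add_mem (wX_mul _ ih) (mem _ _)
  refine Submodule.eq_top_iff'.2 fun a => ?_
  suffices ∀ b ∈ M, a * b ∈ M by simpa using this 1 (by simpa using mem 0 0)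
  obtain ⟨w, rfl⟩ := RingQuot.mkAlgHom_surjective K (WeylRel K) a
  induction w using FreeAlgebra.induction with
  | grade0 r =>
    intro b hb
    rw [AlgHom.commutes, Algebra.algebraMap_eq_smul_one, smul_one_mul]
    exact M.smul_mem r hb
  | grade1 i => fin_cases i; exacts [wX_mul, wD_mul]
  | mul u v hu hv => intro b hb; rw [map_mul, mul_assoc]; exact hu _ (hv b hb)
  | add u v hu hv => intro b hb; rw [map_add, add_mul]; exact add_mem (hu b hb) (hv b hb)

variable (K) in
def derivOp : Module.End K (MvPolynomial (Fin 2) K) :=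
  (pderiv 0).toLinearMap + LinearMap.mulLeft K (X 1)

lemma derivOp_mul_mulLeft_X :
    derivOp K * LinearMap.mulLeft K (X 0) = LinearMap.mulLeft K (X 0) * derivOp K + 1 := by
  refine LinearMap.ext fun f => ?_
  simp only [derivOp, Module.End.mul_apply, LinearMap.add_apply, LinearMap.mulLeft_apply,
    Derivation.coeFn_coe, Module.End.one_apply, pderiv_mul, pderiv_X_self]
  ring

variable (K) in
def rep : Weyl K →ₐ[K] Module.End K (MvPolynomial (Fin 2) K) :=
  RingQuot.liftAlgHom K ⟨FreeAlgebra.lift K ![LinearMap.mulLeft K (X 0), derivOp K], by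
    rintro _ _ ⟨⟩
    simpa only [map_mul, map_add, map_one, FreeAlgebra.lift_ι_apply, Matrix.cons_val_zero,
      Matrix.cons_val_one] using derivOp_mul_mulLeft_X⟩

lemma rep_wX : rep K (wX K) = LinearMap.mulLeft K (X 0) := by
  rw [wX, rep, RingQuot.liftAlgHom_mkAlgHom_apply, FreeAlgebra.lift_ι_apply]
  rfl

lemma rep_wD : rep K (wD K) = derivOp K := by
  rw [wD, rep, RingQuot.liftAlgHom_mkAlgHom_apply, FreeAlgebra.lift_ι_apply]
  rfl

variable (K) in
def symbol : Weyl K →ₗ[K] MvPolynomial (Fin 2) K :=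
  LinearMap.applyₗ 1 ∘ₗ (rep K).toLinearMap

lemma symbol_apply (a : Weyl K) : symbol K a = rep K a 1 := rfl

lemma symbol_mul (a b : Weyl K) : symbol K (a * b) = rep K a (symbol K b) := by
  rw [symbol_apply, map_mul, Module.End.mul_apply, symbol_apply]

lemma derivOp_pow_apply_one (j : ℕ) : (derivOp K ^ j) 1 = X 1 ^ j := by
  induction j with
  | zero => rfl
  | succ j ih =>
    rw [pow_succ', Module.End.mul_apply, ih, derivOp, LinearMap.add_apply, Derivation.coeFn_coe,
      pderiv_pow, pderiv_X_of_ne (by decide), LinearMap.mulLeft_apply]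
    ring

lemma symbol_wX_pow_mul_wD_pow (i j : ℕ) :
    symbol K (wX K ^ i * wD K ^ j) = X 0 ^ i * X 1 ^ j := by
  rw [symbol_apply, map_mul, map_pow, map_pow, rep_wX, rep_wD, Module.End.mul_apply,
    derivOp_pow_apply_one, LinearMap.pow_mulLeft, LinearMap.mulLeft_apply]

lemma symbol_one : symbol K (1 : Weyl K) = 1 := by
  simpa using symbol_wX_pow_mul_wD_pow (K := K) 0 0

lemma symbol_wX : symbol K (wX K) = X 0 := by
  simpa using symbol_wX_pow_mul_wD_pow (K := K) 1 0

lemma symbol_wD : symbol K (wD K) = X 1 := by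
  simpa using symbol_wX_pow_mul_wD_pow (K := K) 0 1

lemma wX_ne_zero [Nontrivial K] : wX K ≠ 0 := fun h => X_ne_zero (R := K) (0 : Fin 2) <| by
  rw [← symbol_wX, h, map_zero]

lemma wD_ne_zero [Nontrivial K] : wD K ≠ 0 := fun h => X_ne_zero (R := K) (1 : Fin 2) <| by
  rw [← symbol_wD, h, map_zero]

variable (K) in
def normalOrder : MvPolynomial (Fin 2) K →ₗ[K] Weyl K :=
  (basisMonomials (Fin 2) K).constr K fun d => wX K ^ d 0 * wD K ^ d 1

lemma normalOrder_monomial (d : Fin 2 →₀ ℕ) (c : K) :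
    normalOrder K (monomial d c) = c • (wX K ^ d 0 * wD K ^ d 1) := by
  have : monomial d c = c • basisMonomials (Fin 2) K d := by
    rw [coe_basisMonomials, smul_monomial, smul_eq_mul, mul_one]
  rw [this, map_smul, normalOrder, Module.Basis.constr_basis]

lemma normalOrder_symbol (a : Weyl K) : normalOrder K (symbol K a) = a := by
  suffices normalOrder K ∘ₗ symbol K = LinearMap.id from LinearMap.congr_fun this a
  refine LinearMap.ext_on_range span_wX_pow_mul_wD_pow fun ij => ?_
  simp [symbol_wX_pow_mul_wD_pow, X_pow_eq_monomial, monomial_mul, normalOrder_monomial]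

lemma symbol_injective : Function.Injective (symbol K) :=
  Function.LeftInverse.injective normalOrder_symbol

variable (K) in
def filtration (n : ℕ) : Submodule K (Weyl K) :=
  Submodule.span K {w | ∃ i j : ℕ, i + j ≤ n ∧ w = wX K ^ i * wD K ^ j}

lemma mem_filtration_iff {n : ℕ} {a : Weyl K} :
    a ∈ filtration K n ↔ (symbol K a).totalDegree ≤ n := by
  constructor
  · refine fun ha => (mem_restrictTotalDegree _ _ _).1
      ((Submodule.span_le (p := (restrictTotalDegree (Fin 2) K n).comap (symbol K))).2 ?_ ha)
    rintro _ ⟨i, j, hij, rfl⟩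
    rw [SetLike.mem_coe, Submodule.mem_comap, mem_restrictTotalDegree, symbol_wX_pow_mul_wD_pow]
    exact ((isHomogeneous_X_pow 0 i).mul (isHomogeneous_X_pow 1 j)).totalDegree_le.trans hij
  · intro ha
    rw [← normalOrder_symbol a, as_sum (symbol K a), map_sum]
    refine Submodule.sum_mem _ fun d hd => ?_
    rw [normalOrder_monomial]
    refine Submodule.smul_mem _ _ (Submodule.subset_span ⟨d 0, d 1, ?_, rfl⟩)
    simpa [Finsupp.sum_fintype, Fin.sum_univ_two] using (le_totalDegree hd).trans ha

lemma wdeg_eq_totalDegree_symbol (a : Weyl K) : wdeg K a = (symbol K a).totalDegree := by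
  have : {n | a ∈ filtration K n} = Set.Ici (symbol K a).totalDegree :=
    Set.ext fun n => mem_filtration_iff
  exact (congrArg sInf this).trans csInf_Ici

def HasPrincipalPart (a : Weyl K) (n : ℕ) : Prop :=
  ∀ m (f : MvPolynomial (Fin 2) K), f.totalDegree ≤ m →
    (rep K a f).totalDegree ≤ n + m ∧
      homogeneousComponent (n + m) (rep K a f)
        = homogeneousComponent n (symbol K a) * homogeneousComponent m f

namespace HasPrincipalPart

variable {a b : Weyl K} {n n' : ℕ}

lemma totalDegree_symbol_le (ha : HasPrincipalPart a n) : (symbol K a).totalDegree ≤ n :=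
  (ha 0 1 (by simp)).1

lemma mul (ha : HasPrincipalPart a n) (hb : HasPrincipalPart b n') :
    HasPrincipalPart (a * b) (n + n') := by
  intro m f hf
  obtain ⟨hbf_le, hbf⟩ := hb m f hf
  obtain ⟨habf_le, habf⟩ := ha (n' + m) _ hbf_le
  have hsymbol := (ha n' _ hb.totalDegree_symbol_le).2
  rw [← symbol_mul] at hsymbol
  rw [map_mul, Module.End.mul_apply, add_assoc, hsymbol, habf, hbf, mul_assoc]
  exact ⟨habf_le, rfl⟩

lemma of_le (ha : HasPrincipalPart a n) (h : n ≤ n') : HasPrincipalPart a n' := by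
  obtain rfl | h := h.eq_or_lt
  · exact ha
  intro m f hf
  refine ⟨(ha m f hf).1.trans (by omega), ?_⟩
  rw [homogeneousComponent_eq_zero _ _ ((ha m f hf).1.trans_lt (by omega)),
    homogeneousComponent_eq_zero _ _ (ha.totalDegree_symbol_le.trans_lt h), zero_mul]

lemma add (ha : HasPrincipalPart a n) (hb : HasPrincipalPart b n) :
    HasPrincipalPart (a + b) n := by
  intro m f hf
  obtain ⟨haf_le, haf⟩ := ha m f hf
  obtain ⟨hbf_le, hbf⟩ := hb m f hf
  rw [map_add, LinearMap.add_apply, map_add, haf, hbf, map_add, map_add, add_mul]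
  exact ⟨(totalDegree_add _ _).trans (max_le haf_le hbf_le), rfl⟩

lemma smul (c : K) (ha : HasPrincipalPart a n) : HasPrincipalPart (c • a) n := by
  intro m f hf
  obtain ⟨haf_le, haf⟩ := ha m f hf
  rw [map_smul, LinearMap.smul_apply, map_smul, haf, map_smul, map_smul, smul_mul_assoc]
  exact ⟨(totalDegree_smul_le _ _).trans haf_le, rfl⟩

end HasPrincipalPart

lemma hasPrincipalPart_one : HasPrincipalPart (1 : Weyl K) 0 := by
  intro m f hf
  simp [symbol_apply, homogeneousComponent_zero, hf]

lemma hasPrincipalPart_wX : HasPrincipalPart (wX K) 1 := by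
  intro m f hf
  rw [symbol_wX, rep_wX, LinearMap.mulLeft_apply,
    (isHomogeneous_X K 0).homogeneousComponent_add_mul,
    homogeneousComponent_of_mem (isHomogeneous_X K 0), if_pos rfl]
  exact ⟨(totalDegree_mul _ _).trans (add_le_add (isHomogeneous_X K 0).totalDegree_le hf), rfl⟩

lemma hasPrincipalPart_wD : HasPrincipalPart (wD K) 1 := by
  intro m f hf
  have hpderiv : (pderiv 0 f).totalDegree < 1 + m :=
    (totalDegree_pderiv_le 0 f).trans_lt (by omega)
  rw [symbol_wD, rep_wD, derivOp, LinearMap.add_apply, Derivation.coeFn_coe,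
    LinearMap.mulLeft_apply, map_add, homogeneousComponent_eq_zero _ _ hpderiv, zero_add,
    (isHomogeneous_X K 1).homogeneousComponent_add_mul,
    homogeneousComponent_of_mem (isHomogeneous_X K 1), if_pos rfl]
  refine ⟨(totalDegree_add _ _).trans (max_le hpderiv.le ?_), rfl⟩
  exact (totalDegree_mul _ _).trans (add_le_add (isHomogeneous_X K 1).totalDegree_le hf)

lemma HasPrincipalPart.pow {a : Weyl K} {n : ℕ} (ha : HasPrincipalPart a n) (k : ℕ) :
    HasPrincipalPart (a ^ k) (k * n) := by
  induction k with
  | zero => simpa using hasPrincipalPart_one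
  | succ k ih => rw [pow_succ, Nat.succ_mul]; exact ih.mul ha

lemma hasPrincipalPart_of_mem_filtration {a : Weyl K} {n : ℕ} (ha : a ∈ filtration K n) :
    HasPrincipalPart a n := by
  induction ha using Submodule.span_induction with
  | mem w hw =>
    obtain ⟨i, j, hij, rfl⟩ := hw
    exact ((hasPrincipalPart_wX.pow i).mul (hasPrincipalPart_wD.pow j)).of_le (by omega)
  | zero => intro m f hf; simp
  | add x y _ _ hx hy => exact hx.add hy
  | smul c x _ hx => exact hx.smul c

lemma hasPrincipalPart_totalDegree_symbol (a : Weyl K) :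
    HasPrincipalPart a (symbol K a).totalDegree :=
  hasPrincipalPart_of_mem_filtration (mem_filtration_iff.2 le_rfl)

lemma totalDegree_symbol_mul_le (a b : Weyl K) :
    (symbol K (a * b)).totalDegree ≤ (symbol K a).totalDegree + (symbol K b).totalDegree := by
  rw [symbol_mul]
  exact (hasPrincipalPart_totalDegree_symbol a _ _ le_rfl).1

lemma homogeneousComponent_symbol_mul_ne_zero [IsDomain K] {a b : Weyl K} (ha : a ≠ 0)
    (hb : b ≠ 0) :
    homogeneousComponent ((symbol K a).totalDegree + (symbol K b).totalDegree)
      (symbol K (a * b)) ≠ 0 := by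
  rw [symbol_mul, (hasPrincipalPart_totalDegree_symbol a _ _ le_rfl).2]
  exact mul_ne_zero
    (homogeneousComponent_totalDegree_ne_zero ((map_ne_zero_iff _ symbol_injective).2 ha))
    (homogeneousComponent_totalDegree_ne_zero ((map_ne_zero_iff _ symbol_injective).2 hb))

instance [IsDomain K] : NoZeroDivisors (Weyl K) where
  eq_zero_or_eq_zero_of_mul_eq_zero {a b} hab := by
    by_contra! h
    simpa [hab] using homogeneousComponent_symbol_mul_ne_zero h.1 h.2

lemma wdeg_mul [IsDomain K] {a b : Weyl K} (ha : a ≠ 0) (hb : b ≠ 0) :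
    wdeg K (a * b) = wdeg K a + wdeg K b := by
  simp only [wdeg_eq_totalDegree_symbol]
  refine (totalDegree_symbol_mul_le a b).antisymm (not_lt.1 fun h => ?_)
  exact homogeneousComponent_symbol_mul_ne_zero ha hb (homogeneousComponent_eq_zero _ _ h)

lemma wdeg_pow [IsDomain K] {a : Weyl K} (ha : a ≠ 0) (k : ℕ) :
    wdeg K (a ^ k) = k * wdeg K a := by
  induction k with
  | zero => rw [pow_zero, wdeg_eq_totalDegree_symbol, symbol_one, totalDegree_one, zero_mul]
  | succ k ih => rw [pow_succ, wdeg_mul (pow_ne_zero k ha) ha, ih, Nat.succ_mul]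

lemma symbol_eq_expand {p : ℕ} {χ : MvPolynomial (Fin 2) K →ₐ[K] Weyl K}
    (h0 : χ (X 0) = wX K ^ p) (h1 : χ (X 1) = wD K ^ p) (F : MvPolynomial (Fin 2) K) :
    symbol K (χ F) = expand p F := by
  suffices symbol K ∘ₗ χ.toLinearMap = (expand p).toLinearMap from LinearMap.congr_fun this F
  refine linearMap_ext fun d => LinearMap.ext fun c => ?_
  simp [monomial_fin_two, C_mul', h0, h1, ← pow_mul, symbol_wX_pow_mul_wD_pow]

lemma wdeg_eq_mul_totalDegree {p : ℕ} {χ : MvPolynomial (Fin 2) K →ₐ[K] Weyl K}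
    (h0 : χ (X 0) = wX K ^ p) (h1 : χ (X 1) = wD K ^ p) (F : MvPolynomial (Fin 2) K) :
    wdeg K (χ F) = p * F.totalDegree := by
  rw [wdeg_eq_totalDegree_symbol, symbol_eq_expand h0 h1, totalDegree_expand, mul_comm]

end Weyl

theorem statement5_general (p : ℕ) (hp : p.Prime) (K : Type*) [Field K]
    (ψ : MvPolynomial (Fin 2) K ≃ₐ[K] Subalgebra.center K (Weyl K))
    (hψX : (↑(ψ (MvPolynomial.X 0)) : Weyl K) = wX K ^ p)
    (hψY : (↑(ψ (MvPolynomial.X 1)) : Weyl K) = wD K ^ p)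
    (σ : Weyl K ≃ₐ[K] Weyl K)
    (hX : σ (wX K ^ p) ∈ Subalgebra.center K (Weyl K))
    (hY : σ (wD K ^ p) ∈ Subalgebra.center K (Weyl K)) :
    max (ψ.symm ⟨σ (wX K ^ p), hX⟩).totalDegree (ψ.symm ⟨σ (wD K ^ p), hY⟩).totalDegree
      = max (wdeg K (σ (wX K))) (wdeg K (σ (wD K))) := by
  let χ := (Subalgebra.center K (Weyl K)).val.comp ψ.toAlgHom
  have hχ (b : Weyl K) (hb : b ∈ Subalgebra.center K (Weyl K)) : χ (ψ.symm ⟨b, hb⟩) = b :=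
    congrArg Subtype.val (ψ.apply_symm_apply _)
  have key (a : Weyl K) (ha : a ≠ 0) (hc : σ (a ^ p) ∈ Subalgebra.center K (Weyl K)) :
      (ψ.symm ⟨σ (a ^ p), hc⟩).totalDegree = wdeg K (σ a) := by
    refine Nat.eq_of_mul_eq_mul_left hp.pos ?_
    rw [← Weyl.wdeg_eq_mul_totalDegree (χ := χ) hψX hψY, hχ, map_pow,
      Weyl.wdeg_pow ((map_ne_zero_iff σ σ.injective).2 ha)]
  rw [key _ Weyl.wX_ne_zero hX, key _ Weyl.wD_ne_zero hY]

theorem statement5 (p : ℕ) (hp : p.Prime) (K : Type*) [Field K] [CharP K p]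
    (hperf : Function.Surjective fun a : K => a ^ p)
    (ψ : MvPolynomial (Fin 2) K ≃ₐ[K] Subalgebra.center K (Weyl K))
    (hψX : (↑(ψ (MvPolynomial.X 0)) : Weyl K) = wX K ^ p)
    (hψY : (↑(ψ (MvPolynomial.X 1)) : Weyl K) = wD K ^ p)
    (σ : Weyl K ≃ₐ[K] Weyl K)
    (hX : σ (wX K ^ p) ∈ Subalgebra.center K (Weyl K))
    (hY : σ (wD K ^ p) ∈ Subalgebra.center K (Weyl K)) :
    max (ψ.symm ⟨σ (wX K ^ p), hX⟩).totalDegree (ψ.symm ⟨σ (wD K ^ p), hY⟩).totalDegree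
      = max (wdeg K (σ (wX K))) (wdeg K (σ (wD K))) :=
  statement5_general p hp K ψ hψX hψY σ hX hY
end
end

section
/- Let K be a field of characteristic p > 0 which is not perfect, and let μ ∈ K be an element which is not a p-th power in K. Then the K-automorphism s_μ of Z = K[X, Y] defined by X ↦ X + μ, Y ↦ Y is not the restriction to Z of any K-algebra automorphism of the first Weyl algebra A_1(K). -/
/-!
STATEMENT 6: Let `K` be a non-perfect field of characteristic `p > 0` and `μ ∈ K` not a
`p`-th power.  Then the automorphism `s_μ : X ↦ X + μ, Y ↦ Y` of the centre
`Z = K[X, Y] = K[x^p, ∂^p]` is not the restriction of any `K`-algebra automorphism of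
`A₁(K)`.

Since the centre is generated as a `K`-algebra by `x^p` and `∂^p`, an automorphism `σ` of
`A₁` restricts to `s_μ` precisely when `σ(x^p) = x^p + μ` and `σ(∂^p) = ∂^p`.
-/

noncomputable section

namespace St6

open Polynomial

variable (K : Type*) [Field K]

/-! ### A concrete representation of the Weyl algebra on `K[t][s]`.

`x` acts as multiplication by `t` (the inner variable, `C X`), and `∂` acts as
`d/dt` (on coefficients) plus multiplication by `s` (the outer variable `X`).
Applying `x^i ∂^j` to `1` yields `t^i s^j`. -/

/-- `d/dt` acting on the coefficients of an element of `K[t][s]`. -/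
def dTfun (f : Polynomial (Polynomial K)) : Polynomial (Polynomial K) :=
  ∑ m ∈ f.support, C (derivative (f.coeff m)) * X ^ m

lemma dTfun_coeff (f : Polynomial (Polynomial K)) (n : ℕ) :
    (dTfun K f).coeff n = derivative (f.coeff n) := by
  classical
  rw [dTfun, finset_sum_coeff]
  simp only [coeff_C_mul, coeff_X_pow, mul_ite, mul_one, mul_zero]
  rw [Finset.sum_ite_eq]
  by_cases h : n ∈ f.support
  · simp [h]
  · simp [h, Polynomial.notMem_support_iff.mp h]

/-- `d/dt` on coefficients as a `K`-linear endomorphism. -/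
def dT : Module.End K (Polynomial (Polynomial K)) where
  toFun := dTfun K
  map_add' f g := by
    ext n
    simp [dTfun_coeff, coeff_add]
  map_smul' k f := by
    ext n
    simp [dTfun_coeff, coeff_smul]

lemma dT_coeff (f : Polynomial (Polynomial K)) (n : ℕ) :
    (dT K f).coeff n = derivative (f.coeff n) := dTfun_coeff K f n

/-- The operator representing `∂`. -/
def Dop : Module.End K (Polynomial (Polynomial K)) :=
  dT K + LinearMap.mulLeft K (X : Polynomial (Polynomial K))

/-- The operator representing `x`. -/
def Mt : Module.End K (Polynomial (Polynomial K)) :=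
  LinearMap.mulLeft K (C (X : Polynomial K))

lemma Dop_apply (g : Polynomial (Polynomial K)) :
    Dop K g = dT K g + X * g := by
  simp [Dop, LinearMap.add_apply, LinearMap.mulLeft_apply]

lemma Mt_apply (g : Polynomial (Polynomial K)) :
    Mt K g = C X * g := by
  simp [Mt, LinearMap.mulLeft_apply]

lemma Mt_pow_apply (i : ℕ) (g : Polynomial (Polynomial K)) :
    (Mt K ^ i) g = C (X ^ i : Polynomial K) * g := by
  induction i with
  | zero => simp
  | succ i ih =>
    rw [pow_succ', Module.End.mul_apply, ih, Mt_apply, ← mul_assoc, ← C_mul, ← pow_succ']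

lemma Dop_mul_Mt : Dop K * Mt K = Mt K * Dop K + 1 := by
  apply LinearMap.ext; intro g
  apply Polynomial.ext; intro n
  rw [Module.End.mul_apply, LinearMap.add_apply, Module.End.mul_apply, Module.End.one_apply,
    Mt_apply, Dop_apply, Dop_apply, Mt_apply, mul_left_comm (X : Polynomial (Polynomial K))]
  simp only [coeff_add, dT_coeff, coeff_C_mul, mul_add, derivative_mul, derivative_X]
  ring

/-- The representation `A₁(K) → End(K[t][s])`. -/
def toEnd : Weyl K →ₐ[K] Module.End K (Polynomial (Polynomial K)) :=
  RingQuot.liftAlgHom K ⟨FreeAlgebra.lift K ![Mt K, Dop K], by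
    rintro x y ⟨⟩
    simp only [map_mul, map_add, map_one, FreeAlgebra.lift_ι_apply,
      Matrix.cons_val_zero, Matrix.cons_val_one, Matrix.head_cons]
    exact Dop_mul_Mt K⟩

lemma toEnd_wX : toEnd K (wX K) = Mt K := by
  rw [wX, toEnd, RingQuot.liftAlgHom_mkAlgHom_apply, FreeAlgebra.lift_ι_apply]
  simp

lemma toEnd_wD : toEnd K (wD K) = Dop K := by
  rw [wD, toEnd, RingQuot.liftAlgHom_mkAlgHom_apply, FreeAlgebra.lift_ι_apply]
  simp

/-! ### Spanning: the monomials `x^i ∂^j` span `A₁(K)` over `K`. -/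

/-- The span of the monomials `x^i ∂^j`. -/
def S : Submodule K (Weyl K) :=
  Submodule.span K (Set.range fun q : ℕ × ℕ => wX K ^ q.1 * wD K ^ q.2)

lemma monomial_mem (i j : ℕ) : wX K ^ i * wD K ^ j ∈ S K :=
  Submodule.subset_span ⟨(i, j), rfl⟩

lemma weyl_rel : wD K * wX K = wX K * wD K + 1 := by
  have h := RingQuot.mkAlgHom_rel K (WeylRel.rel (K := K))
  simpa only [map_mul, map_add, map_one, wX, wD] using h

lemma D_mul_Xpow (k : ℕ) :
    wD K * wX K ^ (k + 1) = wX K ^ (k + 1) * wD K + (k + 1) • wX K ^ k := by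
  induction k with
  | zero => simpa using weyl_rel K
  | succ k ih =>
    have h1 : wX K ^ (k + 2) = wX K ^ (k + 1) * wX K := pow_succ _ _
    rw [h1, ← mul_assoc, ih, add_mul, mul_assoc, weyl_rel K, smul_mul_assoc, ← pow_succ,
      mul_add, mul_one, ← mul_assoc, ← pow_succ, succ_nsmul (wX K ^ (k + 1)) (k + 1),
      add_assoc, add_comm (wX K ^ (k + 1)) ((k + 1) • wX K ^ (k + 1)), ← add_assoc]

lemma X_mul_mem {a : Weyl K} (ha : a ∈ S K) : wX K * a ∈ S K := by
  induction ha using Submodule.span_induction with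
  | mem a h =>
    obtain ⟨⟨i, j⟩, rfl⟩ := h
    rw [← mul_assoc, ← pow_succ']
    exact monomial_mem K _ _
  | zero => simpa using Submodule.zero_mem (S K)
  | add a b _ _ ha hb => rw [mul_add]; exact Submodule.add_mem _ ha hb
  | smul k a _ ha => rw [mul_smul_comm]; exact Submodule.smul_mem _ _ ha

lemma mul_D_mem {a : Weyl K} (ha : a ∈ S K) : a * wD K ∈ S K := by
  induction ha using Submodule.span_induction with
  | mem a h =>
    obtain ⟨⟨i, j⟩, rfl⟩ := h
    rw [mul_assoc, ← pow_succ]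
    exact monomial_mem K _ _
  | zero => simpa using Submodule.zero_mem (S K)
  | add a b _ _ ha hb => rw [add_mul]; exact Submodule.add_mem _ ha hb
  | smul k a _ ha => rw [smul_mul_assoc]; exact Submodule.smul_mem _ _ ha

lemma D_mul_mem {a : Weyl K} (ha : a ∈ S K) : wD K * a ∈ S K := by
  induction ha using Submodule.span_induction with
  | mem a h =>
    obtain ⟨⟨i, j⟩, rfl⟩ := h
    cases i with
    | zero => simpa [← pow_succ'] using monomial_mem K 0 (j + 1)
    | succ i =>
      rw [← mul_assoc, D_mul_Xpow, add_mul, mul_assoc, ← pow_succ', smul_mul_assoc]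
      exact Submodule.add_mem _ (monomial_mem K _ _)
        (Submodule.smul_mem' _ _ (monomial_mem K i j))
  | zero => simpa using Submodule.zero_mem (S K)
  | add a b _ _ ha hb => rw [mul_add]; exact Submodule.add_mem _ ha hb
  | smul k a _ ha => rw [mul_smul_comm]; exact Submodule.smul_mem _ _ ha

lemma Xpow_mul_mem (i : ℕ) {a : Weyl K} (ha : a ∈ S K) : wX K ^ i * a ∈ S K := by
  induction i with
  | zero => simpa using ha
  | succ i ih =>
    rw [pow_succ', mul_assoc]
    exact X_mul_mem K ih

lemma Dpow_mul_mem (j : ℕ) {a : Weyl K} (ha : a ∈ S K) : wD K ^ j * a ∈ S K := by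
  induction j with
  | zero => simpa using ha
  | succ j ih =>
    rw [pow_succ', mul_assoc]
    exact D_mul_mem K ih

lemma mul_mem_S {a b : Weyl K} (ha : a ∈ S K) (hb : b ∈ S K) : a * b ∈ S K := by
  induction ha using Submodule.span_induction with
  | mem a h =>
    obtain ⟨⟨i, j⟩, rfl⟩ := h
    rw [mul_assoc]
    exact Xpow_mul_mem K i (Dpow_mul_mem K j hb)
  | zero => simpa using Submodule.zero_mem (S K)
  | add a c _ _ ha hc => rw [add_mul]; exact Submodule.add_mem _ ha hc
  | smul k a _ ha => rw [smul_mul_assoc]; exact Submodule.smul_mem _ _ ha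

lemma mem_S (w : Weyl K) : w ∈ S K := by
  obtain ⟨w, rfl⟩ := RingQuot.mkAlgHom_surjective K (WeylRel K) w
  induction w using FreeAlgebra.induction with
  | grade0 r =>
    rw [AlgHom.commutes, Algebra.algebraMap_eq_smul_one]
    exact Submodule.smul_mem _ _ (by simpa using monomial_mem K 0 0)
  | grade1 i =>
    fin_cases i
    · exact (by simpa using monomial_mem K 1 0 : wX K ∈ S K)
    · exact (by simpa using monomial_mem K 0 1 : wD K ∈ S K)
  | mul a b ha hb => rw [map_mul]; exact mul_mem_S K ha hb
  | add a b ha hb => rw [map_add]; exact Submodule.add_mem _ ha hb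

/-! ### The leading-coefficient (in `s`) predicate. -/

/-- `g` has `s`-degree at most `n` with `s^n`-coefficient `a`. -/
def Pc (g : Polynomial (Polynomial K)) (n : ℕ) (a : Polynomial K) : Prop :=
  (∀ m, n < m → g.coeff m = 0) ∧ g.coeff n = a

lemma Pc_Dop {g : Polynomial (Polynomial K)} {n : ℕ} {a : Polynomial K} (h : Pc K g n a) :
    Pc K (Dop K g) (n + 1) a := by
  constructor
  · intro m hm
    obtain ⟨m, rfl⟩ : ∃ m', m = m' + 1 := ⟨m - 1, by omega⟩
    rw [Dop_apply, coeff_add, dT_coeff, coeff_X_mul, h.1 _ (by omega), h.1 _ (by omega)]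
    simp
  · rw [Dop_apply, coeff_add, dT_coeff, coeff_X_mul, h.1 _ (by omega), h.2]
    simp

lemma Pc_Dop_pow {g : Polynomial (Polynomial K)} {n : ℕ} {a : Polynomial K} (j : ℕ)
    (h : Pc K g n a) : Pc K ((Dop K ^ j) g) (n + j) a := by
  induction j with
  | zero => simpa using h
  | succ j ih =>
    have : (Dop K ^ (j + 1)) g = Dop K ((Dop K ^ j) g) := by
      rw [pow_succ', Module.End.mul_apply]
    rw [this, ← add_assoc]
    exact Pc_Dop K ih

lemma Pc_one : Pc K 1 0 1 := by
  constructor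
  · intro m hm
    rw [coeff_one, if_neg (by omega)]
  · simp

theorem statement6_aux (p : ℕ) (hp : p.Prime) [CharP K p]
    (μ : K) (hμ : ∀ a : K, a ^ p ≠ μ)
    (u : Weyl K) (hu : u ^ p = wX K ^ p + algebraMap K (Weyl K) μ) : False := by
  classical
  -- expand `u` in the spanning monomials
  obtain ⟨c, hc⟩ := Finsupp.mem_span_range_iff_exists_finsupp.mp (mem_S K u)
  set U : Module.End K (Polynomial (Polynomial K)) := toEnd K u with hUdef
  -- the coefficient polynomials (in `t`) of `u`, grouped by `∂`-degree
  set F : ℕ → Polynomial K :=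
    fun j => ∑ q ∈ c.support.filter (fun q => q.2 = j), c q • (X : Polynomial K) ^ q.1 with hF
  set J : Finset ℕ := c.support.image Prod.snd with hJ
  have hFJ : ∀ j, F j ≠ 0 → j ∈ J := by
    intro j hj
    obtain ⟨q, hq, -⟩ := Finset.exists_ne_zero_of_sum_ne_zero hj
    obtain ⟨hq1, hq2⟩ := Finset.mem_filter.mp hq
    exact hJ ▸ hq2 ▸ Finset.mem_image_of_mem Prod.snd hq1
  -- the action of U
  have hUapp : ∀ g, U g = ∑ j ∈ J, C (F j) * (Dop K ^ j) g := by
    intro g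
    have h1 : U = c.sum fun q k => k • (Mt K ^ q.1 * Dop K ^ q.2) := by
      rw [hUdef, ← hc, map_finsuppSum]
      refine Finsupp.sum_congr fun q _ => ?_
      rw [map_smul, map_mul, map_pow, map_pow, toEnd_wX, toEnd_wD]
    rw [h1, Finsupp.sum]
    rw [LinearMap.sum_apply]
    rw [← Finset.sum_fiberwise_of_maps_to (g := Prod.snd) (t := J)
      (fun q hq => Finset.mem_image_of_mem Prod.snd hq)]
    refine Finset.sum_congr rfl fun j hj => ?_
    have hrhs : C (F j) * (Dop K ^ j) g
        = ∑ q ∈ c.support.filter (fun q => q.2 = j),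
            c q • (C ((X : Polynomial K) ^ q.1) * (Dop K ^ j) g) := by
      rw [hF, map_sum, Finset.sum_mul]
      refine Finset.sum_congr rfl fun q hq => ?_
      rw [← smul_C, smul_mul_assoc]
    rw [hrhs]
    refine Finset.sum_congr rfl fun q hq => ?_
    have hq2 : q.2 = j := (Finset.mem_filter.mp hq).2
    rw [LinearMap.smul_apply, Module.End.mul_apply, Mt_pow_apply, hq2]
  have hFd' : ∀ j, j ∉ J → F j = 0 := fun j hj => by_contra fun h => hj (hFJ j h)
  -- the top `∂`-degree of `u`
  set J' : Finset ℕ := J.filter (fun j => F j ≠ 0) with hJ'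
  set d : ℕ := if h : J'.Nonempty then J'.max' h else 0 with hd
  have hFd : ∀ j, d < j → F j = 0 := by
    intro j hjd
    by_contra hFj
    have hjJ' : j ∈ J' := Finset.mem_filter.mpr ⟨hFJ j hFj, hFj⟩
    have hne : J'.Nonempty := ⟨j, hjJ'⟩
    rw [hd, dif_pos hne] at hjd
    exact absurd (Finset.le_max' J' j hjJ') (by omega)
  -- applying U raises the s-degree by at most d, multiplying the top coefficient by F d
  have hstep : ∀ g n a, Pc K g n a → Pc K (U g) (n + d) (F d * a) := by
    intro g n a h
    rw [hUapp g]
    constructor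
    · intro m hm
      rw [finset_sum_coeff]
      refine Finset.sum_eq_zero fun j _ => ?_
      rw [coeff_C_mul]
      by_cases hjd : j ≤ d
      · rw [(Pc_Dop_pow K j h).1 m (by omega), mul_zero]
      · rw [hFd j (by omega), zero_mul]
    · rw [finset_sum_coeff]
      by_cases hdJ : d ∈ J
      · rw [Finset.sum_eq_single_of_mem d hdJ ?_]
        · rw [coeff_C_mul, (Pc_Dop_pow K d h).2]
        · intro j _ hjd
          rw [coeff_C_mul]
          rcases Nat.lt_or_ge j d with h1 | h1
          · rw [(Pc_Dop_pow K j h).1 (n + d) (by omega), mul_zero]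
          · rw [hFd j (by omega), zero_mul]
      · rw [hFd' d hdJ, zero_mul]
        refine Finset.sum_eq_zero fun j hj => ?_
        have hjd : j ≠ d := fun hcon => hdJ (hcon ▸ hj)
        rw [coeff_C_mul]
        rcases Nat.lt_or_ge j d with h1 | h1
        · rw [(Pc_Dop_pow K j h).1 (n + d) (by omega), mul_zero]
        · rw [hFd j (by omega), zero_mul]
  have hiter : ∀ k, Pc K ((U ^ k) 1) (k * d) (F d ^ k) := by
    intro k
    induction k with
    | zero => simpa using Pc_one K
    | succ k ih =>
      have h1 : (U ^ (k + 1)) (1 : Polynomial (Polynomial K)) = U ((U ^ k) 1) := by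
        rw [pow_succ', Module.End.mul_apply]
      rw [h1, Nat.succ_mul, pow_succ']
      exact hstep _ _ _ ih
  have hU1 : (U ^ p) (1 : Polynomial (Polynomial K)) = C ((X : Polynomial K) ^ p + C μ) := by
    rw [hUdef, ← map_pow, hu, map_add, map_pow, toEnd_wX, AlgHom.commutes, LinearMap.add_apply,
      Mt_pow_apply, mul_one, Module.algebraMap_end_apply, map_add]
    congr 1
    rw [← Algebra.algebraMap_eq_smul_one, Polynomial.algebraMap_apply,
      Polynomial.algebraMap_apply, Algebra.algebraMap_self, RingHom.id_apply]
  have hfin := hiter p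
  rw [hU1] at hfin
  rcases Nat.eq_zero_or_pos d with hd0 | hd0
  · rw [hd0, Nat.mul_zero] at hfin
    have h2 := hfin.2
    rw [coeff_C_zero] at h2
    have h3 := congrArg (Polynomial.eval 0) h2.symm
    rw [eval_pow, eval_add, eval_pow, eval_X, eval_C, zero_pow hp.ne_zero, zero_add] at h3
    exact hμ _ h3
  · have h2 := hfin.2
    rw [coeff_C, if_neg (Nat.mul_pos hp.pos hd0).ne'] at h2
    have h3 : F d = 0 := (pow_eq_zero_iff hp.ne_zero).mp h2.symm
    by_cases hne : J'.Nonempty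
    · have hdJ' : d ∈ J' := by rw [hd, dif_pos hne]; exact Finset.max'_mem _ _
      exact (Finset.mem_filter.mp hdJ').2 h3
    · rw [hd, dif_neg hne] at hd0
      omega

end St6

theorem statement6 (p : ℕ) (hp : p.Prime) (K : Type*) [Field K] [CharP K p]
    (hK : ¬ Function.Surjective fun a : K => a ^ p)
    (μ : K) (hμ : ∀ a : K, a ^ p ≠ μ) :
    ¬ ∃ σ : Weyl K ≃ₐ[K] Weyl K,
        σ (wX K ^ p) = wX K ^ p + algebraMap K (Weyl K) μ ∧ σ (wD K ^ p) = wD K ^ p := by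
  rintro ⟨σ, hσX, -⟩
  refine St6.statement6_aux K p hp μ hμ (σ (wX K)) ?_
  rw [← map_pow, hσX]
end
end

section
/- Let K be a perfect field of characteristic p > 0. The restriction map res_aff : Aff(A_1) → Aff(Z), σ ↦ σ|_Z, is an injective group homomorphism whose image is exactly the subgroup of affine automorphisms of Z = K[X, Y] whose linear part has determinant 1, i.e. {σ_{A,a} : X ↦ aX + bY + e, Y ↦ cX + dY + f, with A = (a b; c d) ∈ SL_2(K), (e, f) ∈ K²}. -/
/-!
STATEMENT 7: Let `K` be a perfect field of characteristic `p > 0`.  The restriction map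
`res_aff : Aff(A₁) → Aff(Z)` is an injective group homomorphism whose image is exactly the
subgroup of affine automorphisms of `Z = K[X, Y]` whose linear part has determinant `1`.

Here `Aff(A₁) = {σ ∈ Aut_K(A₁) : max(deg σ(x), deg σ(∂)) = 1}`, the centre is identified
with `K[X, Y]` via `ψ` (`X = x^p`, `Y = ∂^p`), and `res` is the restriction map,
characterised by `ψ (res σ f) = σ (ψ f)`; `res_aff` is its restriction to `Aff(A₁)`.
-/

noncomputable section

namespace S7

open MvPolynomial

variable (K : Type*) [Field K]

lemma weyl_rel : wD K * wX K = wX K * wD K + 1 := by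
  have h := RingQuot.mkAlgHom_rel K (WeylRel.rel (K := K))
  simpa [wX, wD, map_mul, map_add, map_one] using h

lemma range_gens : (⇑(RingQuot.mkAlgHom K (WeylRel K)) '' Set.range (FreeAlgebra.ι K))
    = {wX K, wD K} := by
  ext w
  constructor
  · rintro ⟨-, ⟨i, rfl⟩, rfl⟩
    fin_cases i
    · exact Or.inl rfl
    · exact Or.inr rfl
  · rintro (rfl | rfl)
    · exact ⟨_, ⟨0, rfl⟩, rfl⟩
    · exact ⟨_, ⟨1, rfl⟩, rfl⟩

lemma adjoin_xd : Algebra.adjoin K {wX K, wD K} = ⊤ := by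
  rw [← range_gens, ← AlgHom.map_adjoin, FreeAlgebra.adjoin_range_ι, Algebra.map_top]
  rw [AlgHom.range_eq_top]
  exact RingQuot.mkAlgHom_surjective K _

lemma mem_center_of_commutes {z : Weyl K} (hx : z * wX K = wX K * z)
    (hd : z * wD K = wD K * z) : z ∈ Subalgebra.center K (Weyl K) := by
  rw [Subalgebra.mem_center_iff]
  intro b
  have hb : b ∈ Subalgebra.centralizer K ({z} : Set (Weyl K)) := by
    have hle : Algebra.adjoin K {wX K, wD K} ≤ Subalgebra.centralizer K {z} := by
      rw [Algebra.adjoin_le_iff]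
      rintro w (rfl | rfl) <;> rw [SetLike.mem_coe, Subalgebra.mem_centralizer_iff] <;>
        rintro g (rfl : g = z)
      · exact hx
      · exact hd
    rw [adjoin_xd] at hle
    exact hle trivial
  rw [Subalgebra.mem_centralizer_iff] at hb
  exact (hb z rfl).symm

-- hom extensionality
lemma weyl_hom_ext {B : Type*} [Semiring B] [Algebra K B] {f g : Weyl K →ₐ[K] B}
    (hx : f (wX K) = g (wX K)) (hd : f (wD K) = g (wD K)) : f = g := by
  have h : f.comp (RingQuot.mkAlgHom K (WeylRel K)) = g.comp (RingQuot.mkAlgHom K (WeylRel K)) := by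
    apply FreeAlgebra.hom_ext
    funext i
    fin_cases i
    · exact hx
    · exact hd
  apply AlgHom.ext
  intro w
  obtain ⟨a, rfl⟩ := RingQuot.mkAlgHom_surjective K (WeylRel K) w
  exact DFunLike.congr_fun h a

end S7

namespace S7
open MvPolynomial
variable (K : Type*) [Field K]

abbrev PK := MvPolynomial (Fin 2) K

/-- multiplication operators and derivative as endomorphisms -/
def opU : Module.End K (PK K) := LinearMap.mulLeft K (X 0)
def opV : Module.End K (PK K) := LinearMap.mulLeft K (X 1) + (pderiv 0).toLinearMap

lemma op_rel : opV K * opU K = opU K * opV K + 1 := by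
  apply LinearMap.ext
  intro g
  simp only [Module.End.mul_apply, LinearMap.add_apply, Module.End.one_apply, opU, opV,
    LinearMap.mulLeft_apply, Derivation.coeFn_coe, Function.comp_apply]
  have : (pderiv (0 : Fin 2)) (X 0 * g) = g + X 0 * pderiv 0 g := by
    rw [pderiv_mul, pderiv_X_self, one_mul]
  rw [this]
  ring

def rep : Weyl K →ₐ[K] Module.End K (PK K) :=
  RingQuot.liftAlgHom K ⟨FreeAlgebra.lift K ![opU K, opV K], by
    rintro _ _ ⟨⟩
    simp only [map_mul, map_add, map_one, FreeAlgebra.lift_ι_apply]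
    simpa using op_rel K⟩

lemma rep_x : rep K (wX K) = opU K := by
  rw [wX, rep, RingQuot.liftAlgHom_mkAlgHom_apply, FreeAlgebra.lift_ι_apply]
  rfl

lemma rep_d : rep K (wD K) = opV K := by
  rw [wD, rep, RingQuot.liftAlgHom_mkAlgHom_apply, FreeAlgebra.lift_ι_apply]
  rfl

/-- evaluation at 1 -/
def ev1 : Weyl K →ₗ[K] PK K where
  toFun w := rep K w 1
  map_add' a b := by simp [map_add]
  map_smul' c a := by simp [map_smul]

@[simp] lemma ev1_apply (w : Weyl K) : ev1 K w = rep K w 1 := rfl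

lemma ev1_one : ev1 K 1 = 1 := by simp [map_one]

lemma pderiv0_X1_pow (j : ℕ) : (pderiv (0 : Fin 2)) ((X 1 : PK K) ^ j) = 0 := by
  induction j with
  | zero => simp
  | succ j ih2 => rw [pow_succ, pderiv_mul, ih2]; simp [pderiv_X]

lemma rep_d_pow_one (j : ℕ) : (rep K (wD K ^ j)) 1 = (X 1 : PK K) ^ j := by
  induction j with
  | zero => simp [map_one]
  | succ j ih =>
    rw [pow_succ', map_mul, Module.End.mul_apply, ih, rep_d, opV]
    simp only [LinearMap.add_apply, LinearMap.mulLeft_apply, Derivation.coeFn_coe]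
    rw [pderiv0_X1_pow, add_zero, pow_succ]
    ring

lemma rep_x_pow (i : ℕ) (g : PK K) : rep K (wX K ^ i) g = (X 0 : PK K) ^ i * g := by
  induction i generalizing g with
  | zero => simp [map_one]
  | succ i ih =>
    rw [pow_succ', map_mul, Module.End.mul_apply, ih, rep_x, opU, LinearMap.mulLeft_apply,
      pow_succ']
    ring

lemma ev1_monomial (i j : ℕ) : ev1 K (wX K ^ i * wD K ^ j) = (X 0 : PK K) ^ i * X 1 ^ j := by
  rw [ev1_apply, map_mul, Module.End.mul_apply, rep_d_pow_one, rep_x_pow]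

end S7

namespace S7
open MvPolynomial Submodule
variable (K : Type*) [Field K]

/-- the span of monomials of degree at most `n` -/
def sp (n : ℕ) : Submodule K (Weyl K) :=
  Submodule.span K {w : Weyl K | ∃ i j : ℕ, i + j ≤ n ∧ w = wX K ^ i * wD K ^ j}

lemma sp_mono {n m : ℕ} (h : n ≤ m) : sp K n ≤ sp K m := by
  apply Submodule.span_mono
  rintro w ⟨i, j, hij, rfl⟩
  exact ⟨i, j, hij.trans h, rfl⟩

lemma monomial_mem_sp {i j n : ℕ} (h : i + j ≤ n) : wX K ^ i * wD K ^ j ∈ sp K n :=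
  Submodule.subset_span ⟨i, j, h, rfl⟩

lemma one_mem_sp (n : ℕ) : (1 : Weyl K) ∈ sp K n := by
  have := monomial_mem_sp K (i := 0) (j := 0) (n := n) (by omega)
  simpa using this

lemma d_mul_x_pow (a : ℕ) :
    wD K * wX K ^ a = wX K ^ a * wD K + (a : K) • wX K ^ (a - 1) := by
  induction a with
  | zero => simp
  | succ a ih =>
    rw [pow_succ, ← mul_assoc, ih, add_mul, mul_assoc, weyl_rel, smul_mul_assoc]
    rcases Nat.eq_zero_or_pos a with rfl | ha
    · simp [mul_add]
    · have h1 : wX K ^ (a - 1) * wX K = wX K ^ a := by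
        rw [← pow_succ]; congr 1; omega
      rw [h1, mul_add, mul_one, ← mul_assoc, ← pow_succ]
      have h2 : ((a + 1 : ℕ) : K) = (a : K) + 1 := by push_cast; ring
      rw [h2, Nat.add_sub_cancel]
      module

lemma d_mul_mem_sp {n : ℕ} {w : Weyl K} (hw : w ∈ sp K n) : wD K * w ∈ sp K (n + 1) := by
  induction hw using Submodule.span_induction with
  | mem w hw =>
    obtain ⟨i, j, hij, rfl⟩ := hw
    rw [← mul_assoc, d_mul_x_pow, add_mul, smul_mul_assoc, mul_assoc, ← pow_succ']
    exact Submodule.add_mem _ (monomial_mem_sp K (by omega))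
      (Submodule.smul_mem _ _ (monomial_mem_sp K (by omega)))
  | zero => simpa using Submodule.zero_mem _
  | add u v _ _ hu hv => rw [mul_add]; exact Submodule.add_mem _ hu hv
  | smul c u _ hu => rw [mul_smul_comm]; exact Submodule.smul_mem _ _ hu

lemma x_mul_mem_sp {n : ℕ} {w : Weyl K} (hw : w ∈ sp K n) : wX K * w ∈ sp K (n + 1) := by
  induction hw using Submodule.span_induction with
  | mem w hw =>
    obtain ⟨i, j, hij, rfl⟩ := hw
    rw [← mul_assoc, ← pow_succ']
    exact monomial_mem_sp K (by omega)
  | zero => simpa using Submodule.zero_mem _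
  | add u v _ _ hu hv => rw [mul_add]; exact Submodule.add_mem _ hu hv
  | smul c u _ hu => rw [mul_smul_comm]; exact Submodule.smul_mem _ _ hu

lemma mul_d_mem_sp {n : ℕ} {w : Weyl K} (hw : w ∈ sp K n) : w * wD K ∈ sp K (n + 1) := by
  induction hw using Submodule.span_induction with
  | mem w hw =>
    obtain ⟨i, j, hij, rfl⟩ := hw
    rw [mul_assoc, ← pow_succ]
    exact monomial_mem_sp K (by omega)
  | zero => simpa using Submodule.zero_mem _
  | add u v _ _ hu hv => rw [add_mul]; exact Submodule.add_mem _ hu hv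
  | smul c u _ hu => rw [smul_mul_assoc]; exact Submodule.smul_mem _ _ hu

lemma d_pow_mul_x_pow_mem_sp (j k : ℕ) : wD K ^ j * wX K ^ k ∈ sp K (j + k) := by
  induction j with
  | zero => simpa using monomial_mem_sp K (i := k) (j := 0) (by omega)
  | succ j ih =>
    rw [pow_succ', mul_assoc]
    have := d_mul_mem_sp K ih
    have he : j + k + 1 = j + 1 + k := by omega
    rwa [he] at this

lemma x_pow_mul_mem_sp (i : ℕ) {t : ℕ} {u : Weyl K} (hu : u ∈ sp K t) :
    wX K ^ i * u ∈ sp K (t + i) := by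
  induction i with
  | zero => simpa using hu
  | succ i ih2 =>
    rw [pow_succ', mul_assoc]
    have := x_mul_mem_sp K ih2
    rwa [show t + i + 1 = t + (i + 1) by omega] at this

lemma mul_d_pow_mem_sp (l : ℕ) {t : ℕ} {u : Weyl K} (hu : u ∈ sp K t) :
    u * wD K ^ l ∈ sp K (t + l) := by
  induction l with
  | zero => simpa using hu
  | succ l ih2 =>
    rw [pow_succ, ← mul_assoc]
    have := mul_d_mem_sp K ih2
    rwa [show t + l + 1 = t + (l + 1) by omega] at this

lemma mul_mem_sp {n m : ℕ} {w v : Weyl K} (hw : w ∈ sp K n) (hv : v ∈ sp K m) :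
    w * v ∈ sp K (n + m) := by
  induction hw using Submodule.span_induction with
  | mem w hw =>
    obtain ⟨i, j, hij, rfl⟩ := hw
    -- reduce v: by span induction on v
    induction hv using Submodule.span_induction with
    | mem v hv =>
      obtain ⟨k, l, hkl, rfl⟩ := hv
      have base : wX K ^ i * (wD K ^ j * wX K ^ k) * wD K ^ l ∈ sp K (i + (j + k) + l) := by
        have h1 : wD K ^ j * wX K ^ k ∈ sp K (j + k) := d_pow_mul_x_pow_mem_sp K j k
        have := mul_d_pow_mem_sp K l (x_pow_mul_mem_sp K i h1)
        rwa [show j + k + i + l = i + (j + k) + l by omega] at this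
      have heq : wX K ^ i * wD K ^ j * (wX K ^ k * wD K ^ l)
          = wX K ^ i * (wD K ^ j * wX K ^ k) * wD K ^ l := by noncomm_ring
      rw [heq]
      exact sp_mono K (by omega) base
    | zero => simpa using Submodule.zero_mem _
    | add u v _ _ hu hv => rw [mul_add]; exact Submodule.add_mem _ hu hv
    | smul c u _ hu => rw [mul_smul_comm]; exact Submodule.smul_mem _ _ hu
  | zero => simpa using Submodule.zero_mem _
  | add u v _ _ hu hv => rw [add_mul]; exact Submodule.add_mem _ hu hv
  | smul c u _ hu => rw [smul_mul_assoc]; exact Submodule.smul_mem _ _ hu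

lemma exists_mem_sp (w : Weyl K) : ∃ n, w ∈ sp K n := by
  have hw : w ∈ (⊤ : Subalgebra K (Weyl K)) := trivial
  rw [← adjoin_xd] at hw
  induction hw using Algebra.adjoin_induction with
  | mem w hw =>
    rcases hw with rfl | rfl
    · exact ⟨1, by simpa using monomial_mem_sp K (i := 1) (j := 0) (by omega)⟩
    · exact ⟨1, by simpa using monomial_mem_sp K (i := 0) (j := 1) (by omega)⟩
  | algebraMap r =>
    refine ⟨0, ?_⟩
    rw [Algebra.algebraMap_eq_smul_one]
    exact Submodule.smul_mem _ _ (one_mem_sp K 0)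
  | add u v _ _ hu hv =>
    obtain ⟨n, hn⟩ := hu; obtain ⟨m, hm⟩ := hv
    exact ⟨max n m, Submodule.add_mem _ (sp_mono K (le_max_left _ _) hn)
      (sp_mono K (le_max_right _ _) hm)⟩
  | mul u v _ _ hu hv =>
    obtain ⟨n, hn⟩ := hu; obtain ⟨m, hm⟩ := hv
    exact ⟨n + m, mul_mem_sp K hn hm⟩

end S7

namespace S7
open MvPolynomial Submodule
variable (K : Type*) [Field K]

lemma wdeg_eq (a : Weyl K) : wdeg K a = sInf {n : ℕ | a ∈ sp K n} := rfl

lemma mem_sp_of_wdeg_le {a : Weyl K} {n : ℕ} (h : wdeg K a ≤ n) : a ∈ sp K n := by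
  have hne : {n : ℕ | a ∈ sp K n}.Nonempty := exists_mem_sp K a
  have := Nat.sInf_mem hne
  exact sp_mono K (by rw [wdeg_eq] at h; exact h) this

lemma wdeg_eq_one {a : Weyl K} (h1 : a ∈ sp K 1) (h0 : a ∉ sp K 0) : wdeg K a = 1 := by
  rw [wdeg_eq]
  have hle : sInf {n : ℕ | a ∈ sp K n} ≤ 1 := Nat.sInf_le h1
  have hmem := Nat.sInf_mem (⟨1, h1⟩ : {n : ℕ | a ∈ sp K n}.Nonempty)
  interval_cases h : sInf {n : ℕ | a ∈ sp K n}
  · exact absurd hmem h0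
  · rfl

/-- the affine element determined by coefficients -/
def aff (α β γ : K) : Weyl K := α • wX K + β • wD K + algebraMap K (Weyl K) γ

lemma aff_mem_sp_one (α β γ : K) : aff K α β γ ∈ sp K 1 := by
  have hx : wX K ∈ sp K 1 := by simpa using monomial_mem_sp K (i := 1) (j := 0) (n := 1) (by omega)
  have hd : wD K ∈ sp K 1 := by simpa using monomial_mem_sp K (i := 0) (j := 1) (n := 1) (by omega)
  refine Submodule.add_mem _ (Submodule.add_mem _ (Submodule.smul_mem _ _ hx)
    (Submodule.smul_mem _ _ hd)) ?_
  rw [Algebra.algebraMap_eq_smul_one]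
  exact Submodule.smul_mem _ _ (one_mem_sp K 1)

lemma sp_one_decomp {a : Weyl K} (h : a ∈ sp K 1) : ∃ α β γ : K, a = aff K α β γ := by
  have hset : {w : Weyl K | ∃ i j : ℕ, i + j ≤ 1 ∧ w = wX K ^ i * wD K ^ j}
      = insert (wX K) (insert (wD K) {(1 : Weyl K)}) := by
    ext w
    constructor
    · rintro ⟨i, j, hij, rfl⟩
      have hi : i ≤ 1 := by omega
      have hj : j ≤ 1 := by omega
      interval_cases i <;> interval_cases j <;> first | omega | simp
    · rintro (rfl | rfl | rfl)
      · exact ⟨1, 0, by omega, by simp⟩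
      · exact ⟨0, 1, by omega, by simp⟩
      · exact ⟨0, 0, by omega, by simp⟩
  rw [sp, hset] at h
  rw [Submodule.mem_span_insert] at h
  obtain ⟨α, z, hz, rfl⟩ := h
  rw [Submodule.mem_span_insert] at hz
  obtain ⟨β, z', hz', rfl⟩ := hz
  rw [Submodule.mem_span_singleton] at hz'
  obtain ⟨γ, rfl⟩ := hz'
  exact ⟨α, β, γ, by rw [aff, Algebra.algebraMap_eq_smul_one]; abel⟩

lemma ev1_x : ev1 K (wX K) = (X 0 : PK K) := by
  have := ev1_monomial K 1 0; simpa using this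

lemma ev1_d : ev1 K (wD K) = (X 1 : PK K) := by
  have := ev1_monomial K 0 1; simpa using this

lemma ev1_algebraMap (γ : K) : ev1 K (algebraMap K (Weyl K) γ) = C γ := by
  rw [Algebra.algebraMap_eq_smul_one, map_smul, ev1_one, smul_eq_C_mul, mul_one]

lemma ev1_aff (α β γ : K) : ev1 K (aff K α β γ) = C α * X 0 + C β * X 1 + C γ := by
  rw [aff, map_add, map_add, map_smul, map_smul, ev1_x, ev1_d, ev1_algebraMap,
    smul_eq_C_mul, smul_eq_C_mul]

lemma single_ne_zero01 : (Finsupp.single (0 : Fin 2) 1 : Fin 2 →₀ ℕ) ≠ Finsupp.single 1 1 := by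
  intro h
  have := DFunLike.congr_fun h 0
  simp [Finsupp.single_apply] at this

lemma aff_coeffs_zero_of_mem_sp_zero {α β γ : K} (h : aff K α β γ ∈ sp K 0) :
    α = 0 ∧ β = 0 := by
  have hset : {w : Weyl K | ∃ i j : ℕ, i + j ≤ 0 ∧ w = wX K ^ i * wD K ^ j}
      = {(1 : Weyl K)} := by
    ext w
    constructor
    · rintro ⟨i, j, hij, rfl⟩
      have : i = 0 ∧ j = 0 := by omega
      simp [this.1, this.2]
    · rintro rfl
      exact ⟨0, 0, by omega, by simp⟩
  rw [sp, hset, Submodule.mem_span_singleton] at h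
  obtain ⟨c, hc⟩ := h
  have := congrArg (ev1 K) hc
  rw [map_smul, ev1_one, ev1_aff] at this
  have hs0 : ((0 : Fin 2 →₀ ℕ) = Finsupp.single (0 : Fin 2) 1) = False := by
    simp [eq_comm, Finsupp.single_eq_zero]
  have hs1 : ((0 : Fin 2 →₀ ℕ) = Finsupp.single (1 : Fin 2) 1) = False := by
    simp [eq_comm, Finsupp.single_eq_zero]
  constructor
  · have h0 := congrArg (coeff (Finsupp.single (0 : Fin 2) 1)) this
    simpa [coeff_C, coeff_X', coeff_one, hs0, single_ne_zero01, Ne.symm single_ne_zero01] using h0.symm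
  · have h0 := congrArg (coeff (Finsupp.single (1 : Fin 2) 1)) this
    simpa [coeff_C, coeff_X', coeff_one, hs1, single_ne_zero01, Ne.symm single_ne_zero01] using h0.symm

lemma wdeg_aff {α β γ : K} (h : ¬(α = 0 ∧ β = 0)) : wdeg K (aff K α β γ) = 1 := by
  refine wdeg_eq_one K (aff_mem_sp_one K α β γ) fun h0 => h (aff_coeffs_zero_of_mem_sp_zero K h0)

end S7

namespace S7
open MvPolynomial Submodule
variable (K : Type*) [Field K]

lemma aff_x : aff K 1 0 0 = wX K := by simp [aff]
lemma aff_d : aff K 0 1 0 = wD K := by simp [aff]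

lemma comm_affine (α β γ α' β' γ' : K) :
    aff K α' β' γ' * aff K α β γ
      = aff K α β γ * aff K α' β' γ' + (α * β' - β * α') • (1 : Weyl K) := by
  simp only [aff, Algebra.algebraMap_eq_smul_one]
  simp only [add_mul, mul_add, smul_mul_assoc, mul_smul_comm, smul_smul, one_mul, mul_one]
  rw [weyl_rel]
  simp only [smul_add]
  module

lemma pow_shift {w z : Weyl K} {c : K} (h : w * z = z * w + c • 1) (k : ℕ) :
    w ^ k * z = z * w ^ k + ((k : K) * c) • w ^ (k - 1) := by
  induction k with
  | zero => simp
  | succ k ih =>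
    have step : w ^ (k + 1) * z = w * (w ^ k * z) := by rw [pow_succ', mul_assoc]
    rw [step, ih, mul_add, ← mul_assoc, h, mul_smul_comm]
    have hw : ((k : K) * c) • (w * w ^ (k - 1)) = ((k : K) * c) • w ^ k := by
      rcases Nat.eq_zero_or_pos k with rfl | hk
      · simp
      · congr 1
        rw [← pow_succ']
        congr 1
        omega
    rw [hw, add_mul, smul_mul_assoc, one_mul, mul_assoc, ← pow_succ']
    have : ((k + 1 : ℕ) : K) = (k : K) + 1 := by push_cast; ring
    rw [this, Nat.add_sub_cancel]
    module

lemma algebraMap_weyl_injective : Function.Injective (algebraMap K (Weyl K)) := by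
  intro a b h
  have := congrArg (ev1 K) h
  rw [ev1_algebraMap, ev1_algebraMap] at this
  exact C_injective _ _ this

variable (p : ℕ) [hp : Fact p.Prime] [CharP K p]

lemma weyl_charP : CharP (Weyl K) p :=
  charP_of_injective_algebraMap (algebraMap_weyl_injective K) p

lemma wpow_comm_x (α β : K) : (α • wX K + β • wD K) ^ p * wX K
    = wX K * (α • wX K + β • wD K) ^ p := by
  have hw : (α • wX K + β • wD K) = aff K α β 0 := by simp [aff]
  have h1 : aff K α β 0 * wX K = wX K * aff K α β 0 + β • 1 := by
    have := comm_affine K 1 0 0 α β 0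
    rw [aff_x] at this
    simpa using this
  have := pow_shift K h1 p
  rw [CharP.cast_eq_zero K p, zero_mul, zero_smul, add_zero] at this
  rw [hw, this]

lemma wpow_comm_d (α β : K) : (α • wX K + β • wD K) ^ p * wD K
    = wD K * (α • wX K + β • wD K) ^ p := by
  have hw : (α • wX K + β • wD K) = aff K α β 0 := by simp [aff]
  have h1 : aff K α β 0 * wD K = wD K * aff K α β 0 + (-α) • 1 := by
    have := comm_affine K 0 1 0 α β 0
    rw [aff_d] at this
    simpa [sub_eq_add_neg] using this
  have := pow_shift K h1 p
  rw [CharP.cast_eq_zero K p, zero_mul, zero_smul, add_zero] at this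
  rw [hw, this]

lemma wpow_central (α β : K) : (α • wX K + β • wD K) ^ p ∈ Subalgebra.center K (Weyl K) :=
  mem_center_of_commutes K (wpow_comm_x K p α β) (wpow_comm_d K p α β)

end S7

namespace S7
open MvPolynomial Submodule
variable (K : Type*) [Field K]

lemma td_pderiv_le (i : Fin 2) (f : PK K) : (pderiv i f).totalDegree ≤ f.totalDegree := by
  conv_lhs => rw [← support_sum_monomial_coeff f]
  rw [map_sum]
  refine le_trans (totalDegree_finset_sum _ _) ?_
  apply Finset.sup_le
  intro s hs
  rw [pderiv_monomial]
  refine le_trans (totalDegree_monomial_le _ _) ?_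
  refine le_trans ?_ (le_totalDegree hs)
  rw [Finsupp.sum_fintype _ _ (fun _ => rfl), Finsupp.sum_fintype _ _ (fun _ => rfl)]
  apply Finset.sum_le_sum
  intro j _
  rw [Finsupp.tsub_apply]
  exact Nat.sub_le _ _

variable (p : ℕ) [hp : Fact p.Prime] [CharP K p]
variable (ψ : MvPolynomial (Fin 2) K ≃ₐ[K] Subalgebra.center K (Weyl K))
variable (hψX : (↑(ψ (MvPolynomial.X 0)) : Weyl K) = wX K ^ p)
variable (hψY : (↑(ψ (MvPolynomial.X 1)) : Weyl K) = wD K ^ p)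

include hψX hψY in
lemma psi_monomial (s : Fin 2 →₀ ℕ) (c : K) :
    (↑(ψ (monomial s c)) : Weyl K) = c • (wX K ^ (p * s 0) * wD K ^ (p * s 1)) := by
  rw [monomial_eq, Finsupp.prod_fintype _ _ (fun i => pow_zero _), Fin.prod_univ_two]
  rw [map_mul, map_mul, map_pow, map_pow]
  rw [MulMemClass.coe_mul, MulMemClass.coe_mul, SubmonoidClass.coe_pow, SubmonoidClass.coe_pow]
  rw [hψX, hψY]
  have hC : (↑(ψ (C c)) : Weyl K) = algebraMap K (Weyl K) c := by
    rw [← MvPolynomial.algebraMap_eq, AlgEquiv.commutes]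
    rfl
  rw [hC, pow_mul, pow_mul, Algebra.smul_def]

include hψX hψY in
lemma psi_sum (F : PK K) :
    (↑(ψ F) : Weyl K)
      = ∑ s ∈ F.support, coeff s F • (wX K ^ (p * s 0) * wD K ^ (p * s 1)) := by
  conv_lhs => rw [← support_sum_monomial_coeff F]
  rw [map_sum, AddSubmonoidClass.coe_finset_sum]
  exact Finset.sum_congr rfl fun s _ => psi_monomial K p ψ hψX hψY s (coeff s F)

include ψ hψX hψY in
lemma center_decomp {z : Weyl K} (hz : z ∈ Subalgebra.center K (Weyl K)) :
    ∃ F : PK K,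
      z = ∑ s ∈ F.support, coeff s F • (wX K ^ (p * s 0) * wD K ^ (p * s 1)) := by
  refine ⟨ψ.symm ⟨z, hz⟩, ?_⟩
  rw [← psi_sum K p ψ hψX hψY, AlgEquiv.apply_symm_apply]

end S7

namespace S7
open MvPolynomial Submodule
variable (K : Type*) [Field K]

lemma rep_aff_apply (α β : K) (g : PK K) :
    rep K (α • wX K + β • wD K) g
      = (C α * X 0 + C β * X 1) * g + β • (pderiv 0) g := by
  rw [map_add, map_smul, map_smul, rep_x, rep_d, opU, opV]
  simp only [LinearMap.add_apply, LinearMap.smul_apply, LinearMap.mulLeft_apply,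
    Derivation.coeFn_coe]
  rw [smul_eq_C_mul, smul_eq_C_mul ((pderiv 0) g), smul_eq_C_mul (X 1 * g + (pderiv 0) g)]
  ring

lemma td_m_le (α β : K) : ((C α * X 0 + C β * X 1 : PK K)).totalDegree ≤ 1 := by
  refine le_trans (totalDegree_add _ _) ?_
  rw [sup_le_iff]
  constructor <;>
  · refine le_trans (totalDegree_mul _ _) ?_
    simp [totalDegree_C, totalDegree_X]

lemma rep_pow_one_td (α β : K) (k : ℕ) :
    ((rep K (α • wX K + β • wD K) ^ k) (1 : PK K)).totalDegree ≤ k := by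
  induction k with
  | zero => simp
  | succ k ih =>
    rw [pow_succ', Module.End.mul_apply, rep_aff_apply]
    refine le_trans (totalDegree_add _ _) ?_
    rw [sup_le_iff]
    constructor
    · refine le_trans (totalDegree_mul _ _) ?_
      have := td_m_le K α β
      omega
    · refine le_trans (totalDegree_smul_le _ _) ?_
      refine le_trans (td_pderiv_le K 0 _) ?_
      omega

lemma rep_pow_one_sub_td (α β : K) (k : ℕ) :
    ((rep K (α • wX K + β • wD K) ^ k) (1 : PK K)
      - (C α * X 0 + C β * X 1) ^ k).totalDegree ≤ k - 1 := by
  induction k with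
  | zero => simp
  | succ k ih =>
    set m : PK K := C α * X 0 + C β * X 1 with hm
    set g : PK K := (rep K (α • wX K + β • wD K) ^ k) (1 : PK K) with hg
    have hrw : (rep K (α • wX K + β • wD K) ^ (k+1)) (1 : PK K) - m ^ (k+1)
        = m * (g - m ^ k) + β • (pderiv 0) g := by
      rw [pow_succ', Module.End.mul_apply, ← hg, rep_aff_apply, ← hm, pow_succ']
      ring
    rw [hrw]
    rcases Nat.eq_zero_or_pos k with rfl | hk
    · have hg1 : g = 1 := by rw [hg, pow_zero, Module.End.one_apply]
      rw [hg1, pow_zero, sub_self, mul_zero, zero_add]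
      have : (pderiv (0 : Fin 2)) (1 : PK K) = 0 := by simp
      rw [this, smul_zero]
      simp
    · refine le_trans (totalDegree_add _ _) ?_
      rw [sup_le_iff]
      constructor
      · refine le_trans (totalDegree_mul _ _) ?_
        have h1 := td_m_le K α β
        rw [← hm] at h1
        have h2 := ih
        omega
      · refine le_trans (totalDegree_smul_le _ _) ?_
        refine le_trans (td_pderiv_le K 0 _) ?_
        have h3 := rep_pow_one_td K α β k
        rw [← hg] at h3
        omega

def usum (p : ℕ) (s : Fin 2 →₀ ℕ) : Fin 2 →₀ ℕ :=
  Finsupp.single 0 (p * s 0) + Finsupp.single 1 (p * s 1)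

lemma usum_apply0 (p : ℕ) (s : Fin 2 →₀ ℕ) : usum p s 0 = p * s 0 := by
  simp [usum, Finsupp.single_apply]

lemma usum_apply1 (p : ℕ) (s : Fin 2 →₀ ℕ) : usum p s 1 = p * s 1 := by
  simp [usum, Finsupp.single_apply]

lemma usum_inj {p : ℕ} (hp0 : p ≠ 0) {s s' : Fin 2 →₀ ℕ} (h : usum p s = usum p s') :
    s = s' := by
  have h0 := congrArg (fun u => u 0) h
  have h1 := congrArg (fun u => u 1) h
  simp only [usum_apply0, usum_apply1] at h0 h1
  ext i
  fin_cases i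
  · exact Nat.eq_of_mul_eq_mul_left (Nat.pos_of_ne_zero hp0) h0
  · exact Nat.eq_of_mul_eq_mul_left (Nat.pos_of_ne_zero hp0) h1

lemma usum_sum (p : ℕ) (s : Fin 2 →₀ ℕ) :
    ((usum p s).sum fun _ e => e) = p * s 0 + p * s 1 := by
  rw [Finsupp.sum_fintype _ _ (fun _ => rfl), Fin.sum_univ_two, usum_apply0, usum_apply1]

lemma xy_pow_monomial (a b : ℕ) :
    ((X 0 : PK K) ^ a * X 1 ^ b) = monomial (Finsupp.single 0 a + Finsupp.single 1 b) 1 := by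
  rw [X_pow_eq_monomial, X_pow_eq_monomial, monomial_mul, mul_one]

end S7

namespace S7
open MvPolynomial Submodule
variable (K : Type*) [Field K]
variable (p : ℕ) [hp : Fact p.Prime] [CharP K p]
variable (ψ : MvPolynomial (Fin 2) K ≃ₐ[K] Subalgebra.center K (Weyl K))
variable (hψX : (↑(ψ (MvPolynomial.X 0)) : Weyl K) = wX K ^ p)
variable (hψY : (↑(ψ (MvPolynomial.X 1)) : Weyl K) = wD K ^ p)

lemma charP_PK : CharP (PK K) p := by
  refine charP_of_injective_algebraMap (R := K) ?_ p
  rw [MvPolynomial.algebraMap_eq]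
  exact C_injective (Fin 2) K

lemma single1p_ne_single0p (hp0 : p ≠ 0) :
    (Finsupp.single (1 : Fin 2) p : Fin 2 →₀ ℕ) ≠ Finsupp.single 0 p := by
  intro h
  have := congrArg (fun u => u 0) h
  simp [Finsupp.single_apply] at this
  exact hp0 this.symm

lemma coeff_mp_0 (α β : K) : coeff (Finsupp.single (0 : Fin 2) p)
    ((C α * X 0 + C β * X 1 : PK K) ^ p) = α ^ p := by
  haveI := charP_PK K p
  have hp0 : p ≠ 0 := hp.out.ne_zero
  rw [add_pow_char, mul_pow, mul_pow, ← C_pow, ← C_pow, coeff_add, coeff_C_mul, coeff_C_mul,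
    X_pow_eq_monomial, X_pow_eq_monomial, coeff_monomial, coeff_monomial, if_pos rfl,
    if_neg (single1p_ne_single0p p hp0), mul_one, mul_zero, add_zero]

lemma coeff_mp_1 (α β : K) : coeff (Finsupp.single (1 : Fin 2) p)
    ((C α * X 0 + C β * X 1 : PK K) ^ p) = β ^ p := by
  haveI := charP_PK K p
  have hp0 : p ≠ 0 := hp.out.ne_zero
  rw [add_pow_char, mul_pow, mul_pow, ← C_pow, ← C_pow, coeff_add, coeff_C_mul, coeff_C_mul,
    X_pow_eq_monomial, X_pow_eq_monomial, coeff_monomial, coeff_monomial, if_pos rfl,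
    if_neg fun h => (single1p_ne_single0p p hp0) h.symm, mul_one, mul_zero, zero_add]

include hψX hψY in
lemma ppow_exists (α β : K) : ∃ t : K,
    (α • wX K + β • wD K) ^ p
      = α ^ p • wX K ^ p + β ^ p • wD K ^ p + algebraMap K (Weyl K) t := by
  have hp0 : p ≠ 0 := hp.out.ne_zero
  have hp1 : 1 ≤ p := hp.out.one_lt.le.trans' (by omega)
  obtain ⟨F, hF⟩ := center_decomp K p ψ hψX hψY (wpow_central K p α β)
  set w : Weyl K := α • wX K + β • wD K with hw
  set m : PK K := C α * X 0 + C β * X 1 with hmdef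
  have hev : (rep K w ^ p) (1 : PK K) = ∑ s ∈ F.support, monomial (usum p s) (coeff s F) := by
    have h1 := congrArg (ev1 K) hF
    rw [ev1_apply, map_pow] at h1
    rw [h1, map_sum]
    refine Finset.sum_congr rfl fun s _ => ?_
    rw [map_smul, ev1_monomial, xy_pow_monomial, smul_monomial, smul_eq_mul, mul_one]
    rfl
  have key : ∀ s0 : Fin 2 →₀ ℕ,
      coeff (usum p s0) ((rep K w ^ p) (1 : PK K)) = coeff s0 F := by
    intro s0
    rw [hev, coeff_sum]
    have hcong : ∀ s ∈ F.support, coeff (usum p s0) (monomial (usum p s) (coeff s F))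
        = if s = s0 then coeff s F else 0 := by
      intro s _
      rw [coeff_monomial]
      by_cases h : s = s0
      · rw [if_pos (by rw [h]), if_pos h]
      · rw [if_neg fun hc => h (usum_inj hp0 hc), if_neg h]
    rw [Finset.sum_congr rfl hcong, Finset.sum_ite_eq' F.support s0 fun s => coeff s F]
    by_cases h : s0 ∈ F.support
    · rw [if_pos h]
    · rw [if_neg h, eq_comm]
      exact notMem_support_iff.mp h
  -- high-degree coefficients vanish
  have hsupp : ∀ s ∈ F.support, s 0 + s 1 ≤ 1 := by
    intro s hs
    by_contra hgt
    push_neg at hgt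
    have hc := key s
    have hzero : coeff (usum p s) ((rep K w ^ p) (1 : PK K)) = 0 := by
      by_contra hne
      have hle := le_totalDegree (mem_support_iff.mpr hne)
      rw [usum_sum] at hle
      have hdeg := rep_pow_one_td K α β p
      rw [← hw] at hdeg
      have hfac : p * s 0 + p * s 1 = p * (s 0 + s 1) := by ring
      have h2p : p * 2 ≤ p * (s 0 + s 1) := Nat.mul_le_mul_left p hgt
      omega
    rw [hzero] at hc
    exact (mem_support_iff.mp hs) hc.symm
  set T : Finset (Fin 2 →₀ ℕ) := {0, Finsupp.single 0 1, Finsupp.single 1 1} with hT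
  have hsub : F.support ⊆ T := by
    intro s hs
    have h01 := hsupp s hs
    have hcase : (s 0 = 0 ∧ s 1 = 0) ∨ (s 0 = 1 ∧ s 1 = 0) ∨ (s 0 = 0 ∧ s 1 = 1) := by omega
    rw [hT]
    simp only [Finset.mem_insert, Finset.mem_singleton]
    rcases hcase with h | h | h
    · left; ext i; fin_cases i <;> simp [h.1, h.2]
    · right; left; ext i; fin_cases i <;> simp [h.1, h.2, Finsupp.single_apply]
    · right; right; ext i; fin_cases i <;> simp [h.1, h.2, Finsupp.single_apply]
  have hTsum : w ^ p = ∑ s ∈ T, coeff s F • (wX K ^ (p * s 0) * wD K ^ (p * s 1)) := by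
    rw [hF]
    exact Finset.sum_subset hsub fun s _ hns => by rw [notMem_support_iff.mp hns, zero_smul]
  have h0ne1 : (0 : Fin 2 →₀ ℕ) ≠ Finsupp.single 0 1 := by
    intro h; have := congrArg (fun u => u 0) h; simp [Finsupp.single_apply] at this
  have h0ne2 : (0 : Fin 2 →₀ ℕ) ≠ Finsupp.single 1 1 := by
    intro h; have := congrArg (fun u => u 1) h; simp [Finsupp.single_apply] at this
  have hTexp : ∑ s ∈ T, coeff s F • (wX K ^ (p * s 0) * wD K ^ (p * s 1))
      = coeff 0 F • (1 : Weyl K) + coeff (Finsupp.single 0 1) F • wX K ^ p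
        + coeff (Finsupp.single 1 1) F • wD K ^ p := by
    rw [hT]
    rw [Finset.sum_insert (by simp only [Finset.mem_insert, Finset.mem_singleton]; tauto),
      Finset.sum_insert (by simp only [Finset.mem_singleton]; exact single_ne_zero01),
      Finset.sum_singleton]
    have e1 : ((0 : Fin 2 →₀ ℕ) 0 : ℕ) = 0 := rfl
    have e2 : ((0 : Fin 2 →₀ ℕ) 1 : ℕ) = 0 := rfl
    have e3 : (Finsupp.single (0 : Fin 2) 1) 0 = 1 := by simp
    have e4 : (Finsupp.single (0 : Fin 2) 1) 1 = 0 := by simp [Finsupp.single_apply]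
    have e5 : (Finsupp.single (1 : Fin 2) 1) 0 = 0 := by simp [Finsupp.single_apply]
    have e6 : (Finsupp.single (1 : Fin 2) 1) 1 = 1 := by simp
    rw [e1, e2, e3, e4, e5, e6]
    simp [add_assoc]
  -- identify the two leading coefficients
  have hsplit : (rep K w ^ p) (1 : PK K)
      = m ^ p + ((rep K w ^ p) (1 : PK K) - m ^ p) := by ring
  have hrcoeff : ∀ v : Fin 2 →₀ ℕ, (v.sum fun _ e => e) = p →
      coeff v ((rep K w ^ p) (1 : PK K) - m ^ p) = 0 := by
    intro v hv
    by_contra hne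
    have hle := le_totalDegree (mem_support_iff.mpr hne)
    have h2 := rep_pow_one_sub_td K α β p
    rw [← hw, ← hmdef] at h2
    omega
  have hsum0 : ((Finsupp.single (0 : Fin 2) p).sum fun _ e => e) = p := by
    rw [Finsupp.sum_fintype _ _ (fun _ => rfl), Fin.sum_univ_two]
    simp [Finsupp.single_apply]
  have hsum1 : ((Finsupp.single (1 : Fin 2) p).sum fun _ e => e) = p := by
    rw [Finsupp.sum_fintype _ _ (fun _ => rfl), Fin.sum_univ_two]
    simp [Finsupp.single_apply]
  have hc10 : coeff (Finsupp.single 0 1) F = α ^ p := by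
    have h1 := key (Finsupp.single 0 1)
    have husum : usum p (Finsupp.single (0 : Fin 2) 1) = Finsupp.single 0 p := by
      simp [usum, Finsupp.single_apply]
    rw [husum, hsplit, coeff_add, hrcoeff _ hsum0, add_zero] at h1
    rw [← h1, hmdef, coeff_mp_0]
  have hc01 : coeff (Finsupp.single 1 1) F = β ^ p := by
    have h1 := key (Finsupp.single 1 1)
    have husum : usum p (Finsupp.single (1 : Fin 2) 1) = Finsupp.single 1 p := by
      simp [usum, Finsupp.single_apply]
    rw [husum, hsplit, coeff_add, hrcoeff _ hsum1, add_zero] at h1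
    rw [← h1, hmdef, coeff_mp_1]
  refine ⟨coeff 0 F, ?_⟩
  rw [hTsum, hTexp, hc10, hc01, Algebra.algebraMap_eq_smul_one]
  abel

end S7

namespace S7
open MvPolynomial Submodule
variable (K : Type*) [Field K]
variable (p : ℕ) [hp : Fact p.Prime] [CharP K p]
variable (ψ : MvPolynomial (Fin 2) K ≃ₐ[K] Subalgebra.center K (Weyl K))
variable (hψX : (↑(ψ (MvPolynomial.X 0)) : Weyl K) = wX K ^ p)
variable (hψY : (↑(ψ (MvPolynomial.X 1)) : Weyl K) = wD K ^ p)

lemma frob_inj (a b : K) (h : a ^ p = b ^ p) : a = b := by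
  have h1 : (a - b) ^ p = 0 := by rw [sub_pow_char, h, sub_self]
  have h2 := (pow_eq_zero_iff hp.out.ne_zero).mp h1
  exact sub_eq_zero.mp h2

def phi (α β : K) : K := Classical.choose (ppow_exists K p ψ hψX hψY α β)

lemma phi_spec (α β : K) : (α • wX K + β • wD K) ^ p
    = α ^ p • wX K ^ p + β ^ p • wD K ^ p
      + algebraMap K (Weyl K) (phi K p ψ hψX hψY α β) :=
  Classical.choose_spec (ppow_exists K p ψ hψX hψY α β)

lemma aff_pow (α β γ : K) : aff K α β γ ^ p
    = α ^ p • wX K ^ p + β ^ p • wD K ^ p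
      + algebraMap K (Weyl K) (phi K p ψ hψX hψY α β + γ ^ p) := by
  haveI := weyl_charP K p
  have hsplit : aff K α β γ = (α • wX K + β • wD K) + algebraMap K (Weyl K) γ := by
    rw [aff, add_assoc]
  rw [hsplit, add_pow_char_of_commute p (Algebra.commute_algebraMap_right γ _),
    ← map_pow, phi_spec, map_add, add_assoc]

/-- the affine algebra endomorphism -/
def affHom (α β γ α' β' γ' : K) (h : α * β' - β * α' = 1) : Weyl K →ₐ[K] Weyl K :=
  RingQuot.liftAlgHom K ⟨FreeAlgebra.lift K ![aff K α β γ, aff K α' β' γ'], by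
    rintro _ _ ⟨⟩
    simp only [map_mul, map_add, map_one, FreeAlgebra.lift_ι_apply, Matrix.cons_val_one,
      Matrix.head_cons, Matrix.cons_val_zero]
    rw [comm_affine K α β γ α' β' γ', h, one_smul]⟩

lemma affHom_x (α β γ α' β' γ' : K) (h : α * β' - β * α' = 1) :
    affHom K α β γ α' β' γ' h (wX K) = aff K α β γ := by
  rw [wX, affHom, RingQuot.liftAlgHom_mkAlgHom_apply, FreeAlgebra.lift_ι_apply]
  rfl

lemma affHom_d (α β γ α' β' γ' : K) (h : α * β' - β * α' = 1) :
    affHom K α β γ α' β' γ' h (wD K) = aff K α' β' γ' := by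
  rw [wD, affHom, RingQuot.liftAlgHom_mkAlgHom_apply, FreeAlgebra.lift_ι_apply]
  rfl

lemma affHom_aff (α β γ α' β' γ' : K) (h : α * β' - β * α' = 1) (a b c : K) :
    affHom K α β γ α' β' γ' h (aff K a b c)
      = a • aff K α β γ + b • aff K α' β' γ' + algebraMap K (Weyl K) c := by
  rw [aff, map_add, map_add, map_smul, map_smul, AlgHom.commutes, affHom_x, affHom_d]

/-- the affine algebra automorphism -/
def affAut (α β γ α' β' γ' : K) (h : α * β' - β * α' = 1) : Weyl K ≃ₐ[K] Weyl K := by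
  have hinv : β' * α - (-β) * (-α') = 1 := by linear_combination h
  refine AlgEquiv.ofAlgHom (affHom K α β γ α' β' γ' h)
    (affHom K β' (-β) (β * γ' - β' * γ) (-α') α (α' * γ - α * γ') hinv) ?_ ?_
  · apply weyl_hom_ext
    · rw [AlgHom.comp_apply, AlgHom.id_apply, affHom_x, affHom_aff]
      simp only [aff, Algebra.algebraMap_eq_smul_one, smul_add, smul_smul]
      match_scalars <;>
        first | ring1 | linear_combination h | linear_combination (-γ) * h |
          linear_combination (-γ') * h | linear_combination γ * h | linear_combination γ' * h
    · rw [AlgHom.comp_apply, AlgHom.id_apply, affHom_d, affHom_aff]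
      simp only [aff, Algebra.algebraMap_eq_smul_one, smul_add, smul_smul]
      match_scalars <;>
        first | ring1 | linear_combination h | linear_combination (-γ) * h |
          linear_combination (-γ') * h | linear_combination γ * h | linear_combination γ' * h
  · apply weyl_hom_ext
    · rw [AlgHom.comp_apply, AlgHom.id_apply, affHom_x, affHom_aff]
      simp only [aff, Algebra.algebraMap_eq_smul_one, smul_add, smul_smul]
      match_scalars <;>
        first | ring1 | linear_combination h | linear_combination (-γ) * h |
          linear_combination (-γ') * h | linear_combination γ * h | linear_combination γ' * h
    · rw [AlgHom.comp_apply, AlgHom.id_apply, affHom_d, affHom_aff]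
      simp only [aff, Algebra.algebraMap_eq_smul_one, smul_add, smul_smul]
      match_scalars <;>
        first | ring1 | linear_combination h | linear_combination (-γ) * h |
          linear_combination (-γ') * h | linear_combination γ * h | linear_combination γ' * h

lemma affAut_x (α β γ α' β' γ' : K) (h : α * β' - β * α' = 1) :
    affAut K α β γ α' β' γ' h (wX K) = aff K α β γ := affHom_x K α β γ α' β' γ' h

lemma affAut_d (α β γ α' β' γ' : K) (h : α * β' - β * α' = 1) :
    affAut K α β γ α' β' γ' h (wD K) = aff K α' β' γ' := affHom_d K α β γ α' β' γ' h

end S7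

namespace S7
open MvPolynomial Submodule
variable (K : Type*) [Field K]
variable (p : ℕ) [hp : Fact p.Prime] [CharP K p]
variable (ψ : MvPolynomial (Fin 2) K ≃ₐ[K] Subalgebra.center K (Weyl K))
variable (hψX : (↑(ψ (MvPolynomial.X 0)) : Weyl K) = wX K ^ p)
variable (hψY : (↑(ψ (MvPolynomial.X 1)) : Weyl K) = wD K ^ p)

lemma ev1_xpow : ev1 K (wX K ^ p) = (X 0 : PK K) ^ p := by
  have := ev1_monomial K p 0; simpa using this

lemma ev1_dpow : ev1 K (wD K ^ p) = (X 1 : PK K) ^ p := by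
  have := ev1_monomial K 0 p; simpa using this

include hψX hψY in
lemma psi_lin (a b e : K) :
    (↑(ψ (C a * X 0 + C b * X 1 + C e)) : Weyl K)
      = a • wX K ^ p + b • wD K ^ p + algebraMap K (Weyl K) e := by
  have hC : ∀ c : K, (↑(ψ (C c)) : Weyl K) = algebraMap K (Weyl K) c := by
    intro c
    rw [← MvPolynomial.algebraMap_eq, AlgEquiv.commutes]
    rfl
  rw [map_add, map_add, map_mul, map_mul]
  rw [AddMemClass.coe_add, AddMemClass.coe_add, MulMemClass.coe_mul, MulMemClass.coe_mul]
  rw [hC, hC, hC, hψX, hψY, Algebra.smul_def, Algebra.smul_def]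

/-- coefficient comparison for the standard shape -/
lemma triple_eq {a b c a₁ b₁ c₁ : K}
    (h : a • (X 0 : PK K) ^ p + b • X 1 ^ p + C c
       = a₁ • (X 0 : PK K) ^ p + b₁ • X 1 ^ p + C c₁) :
    a = a₁ ∧ b = b₁ ∧ c = c₁ := by
  have hp0 : p ≠ 0 := hp.out.ne_zero
  have e1 : coeff (Finsupp.single (0 : Fin 2) p) ((X 0 : PK K) ^ p) = 1 := by
    rw [X_pow_eq_monomial, coeff_monomial, if_pos rfl]
  have e2 : coeff (Finsupp.single (0 : Fin 2) p) ((X 1 : PK K) ^ p) = 0 := by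
    rw [X_pow_eq_monomial, coeff_monomial, if_neg (single1p_ne_single0p p hp0)]
  have e3 : coeff (Finsupp.single (1 : Fin 2) p) ((X 0 : PK K) ^ p) = 0 := by
    rw [X_pow_eq_monomial, coeff_monomial,
      if_neg fun hh => (single1p_ne_single0p p hp0) hh.symm]
  have e4 : coeff (Finsupp.single (1 : Fin 2) p) ((X 1 : PK K) ^ p) = 1 := by
    rw [X_pow_eq_monomial, coeff_monomial, if_pos rfl]
  have e5 : ∀ w : K, coeff (Finsupp.single (0 : Fin 2) p) (C w : PK K) = 0 := by
    intro w
    rw [coeff_C, if_neg fun hh => hp0 (by simpa [Finsupp.single_eq_zero] using hh.symm)]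
  have e6 : ∀ w : K, coeff (Finsupp.single (1 : Fin 2) p) (C w : PK K) = 0 := by
    intro w
    rw [coeff_C, if_neg fun hh => hp0 (by simpa [Finsupp.single_eq_zero] using hh.symm)]
  have e7 : coeff (0 : Fin 2 →₀ ℕ) ((X 0 : PK K) ^ p) = 0 := by
    rw [X_pow_eq_monomial, coeff_monomial,
      if_neg fun hh => hp0 (by simpa [Finsupp.single_eq_zero] using hh)]
  have e8 : coeff (0 : Fin 2 →₀ ℕ) ((X 1 : PK K) ^ p) = 0 := by
    rw [X_pow_eq_monomial, coeff_monomial,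
      if_neg fun hh => hp0 (by simpa [Finsupp.single_eq_zero] using hh)]
  refine ⟨?_, ?_, ?_⟩
  · have h0 := congrArg (coeff (Finsupp.single (0 : Fin 2) p)) h
    simpa [coeff_add, smul_eq_C_mul, coeff_C_mul, e1, e2, e5] using h0
  · have h1 := congrArg (coeff (Finsupp.single (1 : Fin 2) p)) h
    simpa [coeff_add, smul_eq_C_mul, coeff_C_mul, e3, e4, e6] using h1
  · have h2 := congrArg (coeff (0 : Fin 2 →₀ ℕ)) h
    simpa [coeff_add, smul_eq_C_mul, coeff_C_mul, e7, e8, coeff_zero_C] using h2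

end S7

theorem statement7 (p : ℕ) (hp : p.Prime) (K : Type*) [Field K] [CharP K p]
    (hperf : Function.Surjective fun a : K => a ^ p)
    (ψ : MvPolynomial (Fin 2) K ≃ₐ[K] Subalgebra.center K (Weyl K))
    (hψX : (↑(ψ (MvPolynomial.X 0)) : Weyl K) = wX K ^ p)
    (hψY : (↑(ψ (MvPolynomial.X 1)) : Weyl K) = wD K ^ p)
    (res : (Weyl K ≃ₐ[K] Weyl K) → (MvPolynomial (Fin 2) K ≃ₐ[K] MvPolynomial (Fin 2) K))
    (hres : ∀ (σ : Weyl K ≃ₐ[K] Weyl K) (f : MvPolynomial (Fin 2) K),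
      (↑(ψ (res σ f)) : Weyl K) = σ (↑(ψ f) : Weyl K)) :
    (∀ σ τ, res (σ * τ) = res σ * res τ) ∧
    Set.InjOn res {σ : Weyl K ≃ₐ[K] Weyl K |
      max (wdeg K (σ (wX K))) (wdeg K (σ (wD K))) = 1} ∧
    res '' {σ : Weyl K ≃ₐ[K] Weyl K | max (wdeg K (σ (wX K))) (wdeg K (σ (wD K))) = 1} =
      {τ : MvPolynomial (Fin 2) K ≃ₐ[K] MvPolynomial (Fin 2) K |
        ∃ a b c d e f : K, a * d - b * c = 1 ∧
          τ (MvPolynomial.X 0) = MvPolynomial.C a * MvPolynomial.X 0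
            + MvPolynomial.C b * MvPolynomial.X 1 + MvPolynomial.C e ∧
          τ (MvPolynomial.X 1) = MvPolynomial.C c * MvPolynomial.X 0
            + MvPolynomial.C d * MvPolynomial.X 1 + MvPolynomial.C f} := by
  haveI : Fact p.Prime := ⟨hp⟩
  have hψinj : ∀ {f g : MvPolynomial (Fin 2) K},
      (↑(ψ f) : Weyl K) = ↑(ψ g) → f = g := fun h => ψ.injective (Subtype.ext h)
  have hresX0 : ∀ σ : Weyl K ≃ₐ[K] Weyl K,
      (↑(ψ (res σ (MvPolynomial.X 0))) : Weyl K) = σ (wX K ^ p) := fun σ => by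
    rw [hres, hψX]
  have hresX1 : ∀ σ : Weyl K ≃ₐ[K] Weyl K,
      (↑(ψ (res σ (MvPolynomial.X 1))) : Weyl K) = σ (wD K ^ p) := fun σ => by
    rw [hres, hψY]
  -- decomposition of affine automorphisms
  have decomp : ∀ σ : Weyl K ≃ₐ[K] Weyl K,
      max (wdeg K (σ (wX K))) (wdeg K (σ (wD K))) = 1 →
      ∃ α β γ α' β' γ' : K, α * β' - β * α' = 1 ∧
        σ (wX K) = S7.aff K α β γ ∧ σ (wD K) = S7.aff K α' β' γ' := by
    intro σ hσ
    have hx1 : wdeg K (σ (wX K)) ≤ 1 := by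
      have := le_max_left (wdeg K (σ (wX K))) (wdeg K (σ (wD K)))
      omega
    have hd1 : wdeg K (σ (wD K)) ≤ 1 := by
      have := le_max_right (wdeg K (σ (wX K))) (wdeg K (σ (wD K)))
      omega
    obtain ⟨α, β, γ, hx⟩ := S7.sp_one_decomp K (S7.mem_sp_of_wdeg_le K hx1)
    obtain ⟨α', β', γ', hd⟩ := S7.sp_one_decomp K (S7.mem_sp_of_wdeg_le K hd1)
    refine ⟨α, β, γ, α', β', γ', ?_, hx, hd⟩
    have h2 : σ (wD K) * σ (wX K) = σ (wX K) * σ (wD K) + 1 := by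
      have h3 := congrArg σ (S7.weyl_rel K)
      simpa [map_mul, map_add, map_one] using h3
    rw [hx, hd, S7.comm_affine K α β γ α' β' γ'] at h2
    have h5 : (α * β' - β * α') • (1 : Weyl K) = 1 := add_left_cancel h2
    have h6 := congrArg (S7.ev1 K) h5
    rw [map_smul, S7.ev1_one, MvPolynomial.smul_eq_C_mul, mul_one] at h6
    have h7 : (MvPolynomial.C (α * β' - β * α') : S7.PK K) = MvPolynomial.C 1 := by
      rw [h6, map_one]
    exact MvPolynomial.C_injective _ _ h7
  -- extensionality for Weyl algebra equivalences
  have ext2 : ∀ σ τ : Weyl K ≃ₐ[K] Weyl K,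
      σ (wX K) = τ (wX K) → σ (wD K) = τ (wD K) → σ = τ := by
    intro σ τ h1 h2
    have h3 : (σ : Weyl K →ₐ[K] Weyl K) = τ :=
      S7.weyl_hom_ext K (by simpa using h1) (by simpa using h2)
    exact AlgEquiv.ext fun w => DFunLike.congr_fun h3 w
  -- forward image computation
  have himg0 : ∀ (σ : Weyl K ≃ₐ[K] Weyl K) (α β γ : K), σ (wX K) = S7.aff K α β γ →
      res σ (MvPolynomial.X 0) = MvPolynomial.C (α ^ p) * MvPolynomial.X 0
        + MvPolynomial.C (β ^ p) * MvPolynomial.X 1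
        + MvPolynomial.C (S7.phi K p ψ hψX hψY α β + γ ^ p) := by
    intro σ α β γ hx
    apply hψinj
    rw [S7.psi_lin K p ψ hψX hψY, hresX0, map_pow, hx, S7.aff_pow K p ψ hψX hψY]
  have himg1 : ∀ (σ : Weyl K ≃ₐ[K] Weyl K) (α' β' γ' : K), σ (wD K) = S7.aff K α' β' γ' →
      res σ (MvPolynomial.X 1) = MvPolynomial.C (α' ^ p) * MvPolynomial.X 0
        + MvPolynomial.C (β' ^ p) * MvPolynomial.X 1
        + MvPolynomial.C (S7.phi K p ψ hψX hψY α' β' + γ' ^ p) := by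
    intro σ α' β' γ' hd
    apply hψinj
    rw [S7.psi_lin K p ψ hψX hψY, hresX1, map_pow, hd, S7.aff_pow K p ψ hψX hψY]
  refine ⟨?_, ?_, ?_⟩
  -- PART 1: group homomorphism
  · intro σ τ
    apply AlgEquiv.ext; intro f
    apply hψinj
    calc (↑(ψ (res (σ * τ) f)) : Weyl K) = (σ * τ) (↑(ψ f)) := hres _ f
      _ = σ (τ (↑(ψ f))) := AlgEquiv.mul_apply _ _ _
      _ = σ (↑(ψ (res τ f))) := by rw [hres]
      _ = ↑(ψ (res σ (res τ f))) := (hres σ _).symm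
      _ = ↑(ψ ((res σ * res τ) f)) := by rw [AlgEquiv.mul_apply]
  -- PART 2: injectivity
  · intro σ hσ τ hτ heq
    obtain ⟨α, β, γ, α', β', γ', hdet, hx, hd⟩ := decomp σ hσ
    obtain ⟨α₁, β₁, γ₁, α₁', β₁', γ₁', hdet₁, hx₁, hd₁⟩ := decomp τ hτ
    have hXeq : σ (wX K ^ p) = τ (wX K ^ p) := by rw [← hresX0 σ, ← hresX0 τ, heq]
    have hDeq : σ (wD K ^ p) = τ (wD K ^ p) := by rw [← hresX1 σ, ← hresX1 τ, heq]
    rw [map_pow, map_pow, hx, hx₁, S7.aff_pow K p ψ hψX hψY,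
      S7.aff_pow K p ψ hψX hψY] at hXeq
    rw [map_pow, map_pow, hd, hd₁, S7.aff_pow K p ψ hψX hψY,
      S7.aff_pow K p ψ hψX hψY] at hDeq
    have h5 := congrArg (S7.ev1 K) hXeq
    simp only [map_add, map_smul, S7.ev1_xpow, S7.ev1_dpow, S7.ev1_algebraMap] at h5
    rw [← MvPolynomial.C_add, ← MvPolynomial.C_add] at h5
    have hXc := S7.triple_eq K p h5
    have h5' := congrArg (S7.ev1 K) hDeq
    simp only [map_add, map_smul, S7.ev1_xpow, S7.ev1_dpow, S7.ev1_algebraMap] at h5'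
    rw [← MvPolynomial.C_add, ← MvPolynomial.C_add] at h5'
    have hDc := S7.triple_eq K p h5'
    have hα : α = α₁ := S7.frob_inj K p _ _ hXc.1
    have hβ : β = β₁ := S7.frob_inj K p _ _ hXc.2.1
    have hγ : γ = γ₁ := by
      have h6 := hXc.2.2
      rw [hα, hβ] at h6
      exact S7.frob_inj K p _ _ (add_left_cancel h6)
    have hα' : α' = α₁' := S7.frob_inj K p _ _ hDc.1
    have hβ' : β' = β₁' := S7.frob_inj K p _ _ hDc.2.1
    have hγ' : γ' = γ₁' := by
      have h6 := hDc.2.2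
      rw [hα', hβ'] at h6
      exact S7.frob_inj K p _ _ (add_left_cancel h6)
    refine ext2 σ τ ?_ ?_
    · rw [hx, hx₁, hα, hβ, hγ]
    · rw [hd, hd₁, hα', hβ', hγ']
  -- PART 3: the image
  · apply Set.eq_of_subset_of_subset
    · rintro τ' ⟨σ, hσ, rfl⟩
      obtain ⟨α, β, γ, α', β', γ', hdet, hx, hd⟩ := decomp σ hσ
      refine ⟨α ^ p, β ^ p, α' ^ p, β' ^ p,
        S7.phi K p ψ hψX hψY α β + γ ^ p, S7.phi K p ψ hψX hψY α' β' + γ' ^ p, ?_, ?_, ?_⟩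
      · rw [← mul_pow, ← mul_pow, ← sub_pow_char, hdet, one_pow]
      · exact himg0 σ α β γ hx
      · exact himg1 σ α' β' γ' hd
    · rintro τ' ⟨a, b, c, d, e, f, hdet, hX0, hX1⟩
      obtain ⟨α, hα⟩ := hperf a
      obtain ⟨β, hβ⟩ := hperf b
      obtain ⟨α', hα'⟩ := hperf c
      obtain ⟨β', hβ'⟩ := hperf d
      have hα : α ^ p = a := hα
      have hβ : β ^ p = b := hβ
      have hα' : α' ^ p = c := hα'
      have hβ' : β' ^ p = d := hβ'
      obtain ⟨γ, hγ⟩ := hperf (e - S7.phi K p ψ hψX hψY α β)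
      obtain ⟨γ', hγ'⟩ := hperf (f - S7.phi K p ψ hψX hψY α' β')
      have hγ : γ ^ p = e - S7.phi K p ψ hψX hψY α β := hγ
      have hγ' : γ' ^ p = f - S7.phi K p ψ hψX hψY α' β' := hγ'
      have hdet' : α * β' - β * α' = 1 := by
        refine S7.frob_inj K p _ _ ?_
        rw [sub_pow_char, mul_pow, mul_pow, hα, hβ, hα', hβ', one_pow, hdet]
      set σ := S7.affAut K α β γ α' β' γ' hdet' with hσdef
      have hσx : σ (wX K) = S7.aff K α β γ := S7.affAut_x K α β γ α' β' γ' hdet'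
      have hσd : σ (wD K) = S7.aff K α' β' γ' := S7.affAut_d K α β γ α' β' γ' hdet'
      refine ⟨σ, ?_, ?_⟩
      · show max (wdeg K (σ (wX K))) (wdeg K (σ (wD K))) = 1
        have hne1 : ¬(α = 0 ∧ β = 0) := by
          rintro ⟨rfl, rfl⟩
          rw [zero_mul, zero_mul, sub_zero] at hdet'
          exact zero_ne_one hdet'
        have hne2 : ¬(α' = 0 ∧ β' = 0) := by
          rintro ⟨rfl, rfl⟩
          rw [mul_zero, mul_zero, sub_zero] at hdet'
          exact zero_ne_one hdet'
        rw [hσx, hσd, S7.wdeg_aff K hne1, S7.wdeg_aff K hne2]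
        exact max_self 1
      · have hres0 : res σ (MvPolynomial.X 0) = τ' (MvPolynomial.X 0) := by
          rw [hX0, himg0 σ α β γ hσx, hα, hβ, hγ,
            show S7.phi K p ψ hψX hψY α β + (e - S7.phi K p ψ hψX hψY α β) = e by ring]
        have hres1 : res σ (MvPolynomial.X 1) = τ' (MvPolynomial.X 1) := by
          rw [hX1, himg1 σ α' β' γ' hσd, hα', hβ', hγ',
            show S7.phi K p ψ hψX hψY α' β' + (f - S7.phi K p ψ hψX hψY α' β') = f by ring]
        have halg : (res σ : MvPolynomial (Fin 2) K →ₐ[K] MvPolynomial (Fin 2) K) = τ' := by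
          apply MvPolynomial.algHom_ext
          intro i
          fin_cases i
          · simpa using hres0
          · simpa using hres1
        exact AlgEquiv.ext fun w => DFunLike.congr_fun halg w
end
end

section
/- Let K be a perfect field of characteristic p > 0 and let σ_{A,a} ∈ Aff(A_1) be the affine automorphism of the first Weyl algebra given by (x, y)ᵀ ↦ A(x, y)ᵀ + a with A = (a b; c d) ∈ SL_2(K) and a = (e, f)ᵀ ∈ K². Then its restriction to the centre Z = K[X, Y] is: if p > 2, the affine automorphism with matrix (a^p b^p; c^p d^p) and translation vector (e^p, f^p)ᵀ; and if p = 2, the affine automorphism with matrix (a² b²; c² d²) and translation vector (e² + ab, f² + cd)ᵀ. -/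
/-!
STATEMENT 8: Let `K` be a perfect field of characteristic `p > 0` and let
`σ_{A,a} ∈ Aff(A₁)` be the affine automorphism `x ↦ a x + b ∂ + e`, `∂ ↦ c x + d ∂ + f`
with `ad − bc = 1`.  Then on the centre (generated by `X = x^p`, `Y = ∂^p`):
if `p > 2`, `σ(X) = a^p X + b^p Y + e^p` and `σ(Y) = c^p X + d^p Y + f^p`;
if `p = 2`, `σ(X) = a² X + b² Y + (e² + ab)` and `σ(Y) = c² X + d² Y + (f² + cd)`.
-/

noncomputable section

namespace S8


open Finset

def wa : ℕ → ℕ → ℕ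
  | 0, 0 => 1
  | 0, _+1 => 0
  | n+1, 0 => wa n 0
  | n+1, k+1 => wa n (k+1) + (n - 2*k) * wa n k

lemma wa_zero_right : ∀ n, wa n 0 = 1
  | 0 => rfl
  | n+1 => wa_zero_right n

lemma wa_eq_zero : ∀ n k, n < 2*k → wa n k = 0
  | 0, 0, h => by omega
  | 0, k+1, _ => rfl
  | n+1, 0, h => by omega
  | n+1, k+1, h => by
      rw [wa]
      have h1 : wa n (k+1) = 0 := wa_eq_zero n (k+1) (by omega)
      rcases Nat.lt_or_ge n (2*k) with h2 | h2
      · rw [h1, wa_eq_zero n k h2]; ring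
      · have : n - 2*k = 0 := by omega
        rw [h1, this]; ring

lemma wa_mul_factorial : ∀ n k, 2*k ≤ n →
    wa n k * (2^k * k.factorial * (n - 2*k).factorial) = n.factorial
  | 0, 0, _ => rfl
  | 0, k+1, h => by omega
  | n+1, 0, _ => by
      simp [wa_zero_right, Nat.factorial]
  | n+1, k+1, h => by
      rw [wa]
      rcases Nat.lt_or_ge n (2*(k+1)) with h2 | h2
      · -- n+1 = 2(k+1)
        have hn : n = 2*k+1 := by omega
        subst hn
        have ih := wa_mul_factorial (2*k+1) k (by omega)
        rw [wa_eq_zero (2*k+1) (k+1) (by omega)]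
        have e1 : 2*k+1 - 2*k = 1 := by omega
        have e2 : 2*k+1+1 - 2*(k+1) = 0 := by omega
        rw [e1] at ih
        rw [e1, e2]
        calc (0 + 1 * wa (2*k+1) k) * (2^(k+1) * (k+1).factorial * Nat.factorial 0)
            = (wa (2*k+1) k * (2^k * k.factorial * Nat.factorial 1)) * (2*(k+1)) := by
              rw [pow_succ, Nat.factorial_succ, Nat.factorial_one, Nat.factorial_zero]; ring
          _ = (2*k+1).factorial * (2*(k+1)) := by rw [ih]
          _ = (2*k+1+1).factorial := by rw [Nat.factorial_succ (2*k+1)]; ring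
      · -- 2(k+1) ≤ n
        have ih1 := wa_mul_factorial n (k+1) h2
        have ih0 := wa_mul_factorial n k (by omega)
        have e1 : n + 1 - 2*(k+1) = (n - 2*(k+1)) + 1 := by omega
        have e2 : n - 2*k = n - 2*(k+1) + 1 + 1 := by omega
        rw [e1, add_mul]
        calc wa n (k+1) * (2^(k+1) * (k+1).factorial * (n - 2*(k+1) + 1).factorial)
              + (n - 2*k) * wa n k * (2^(k+1) * (k+1).factorial * (n - 2*(k+1) + 1).factorial)
            = (wa n (k+1) * (2^(k+1) * (k+1).factorial * (n-2*(k+1)).factorial)) * (n - 2*(k+1) + 1)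
              + (wa n k * (2^k * k.factorial * (n-2*k).factorial)) * (2*(k+1)) := by
              rw [e2, Nat.factorial_succ (n - 2*(k+1) + 1), Nat.factorial_succ (n - 2*(k+1)),
                Nat.factorial_succ k, pow_succ]
              ring
          _ = n.factorial * (n - 2*(k+1) + 1) + n.factorial * (2*(k+1)) := by rw [ih1, ih0]
          _ = (n+1) * n.factorial := by
              rw [← Nat.mul_add]
              have : (n - 2*(k+1) + 1) + 2*(k+1) = n + 1 := by omega
              rw [this, Nat.mul_comm]
          _ = (n+1).factorial := (Nat.factorial_succ n).symm

lemma prime_dvd_wa (p k : ℕ) (hp : p.Prime) (hp2 : p ≠ 2) (hk : 0 < k) (h2 : 2*k ≤ p) :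
    p ∣ wa p k := by
  have hodd : p % 2 = 1 := Nat.odd_iff.mp (hp.odd_of_ne_two hp2)
  have hlt : 2*k < p := by omega
  have key := wa_mul_factorial p k h2
  have hdvd : p ∣ wa p k * (2^k * k.factorial * (p - 2*k).factorial) := by
    rw [key]; exact Nat.dvd_factorial hp.pos le_rfl
  rcases (Nat.Prime.dvd_mul hp).mp hdvd with h | h
  · exact h
  · exfalso
    rcases (Nat.Prime.dvd_mul hp).mp h with h' | h'
    · rcases (Nat.Prime.dvd_mul hp).mp h' with h'' | h''
      · have := Nat.le_of_dvd (by norm_num) (hp.dvd_of_dvd_pow h'')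
        omega
      · have := (Nat.Prime.dvd_factorial hp).mp h''
        omega
    · have := (Nat.Prime.dvd_factorial hp).mp h'
      omega



open Finset

variable {R : Type*} [Ring R]

def PP (x y : R) (m : ℕ) : R := ∑ i ∈ Finset.range (m+1), (m.choose i : R) * (x^i * y^(m-i))

lemma y_mul_pow (x y c : R) (h : y*x = x*y+c) (hcx : Commute c x) :
    ∀ i : ℕ, y * x^i = x^i * y + (i:R) * c * x^(i-1) := by
  intro i
  induction i with
  | zero => simp
  | succ n ih =>
    rw [pow_succ, ← mul_assoc, ih, add_mul, mul_assoc (x^n) y x, h]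
    cases n with
    | zero => simp [h]
    | succ m =>
      have e1 : m + 1 - 1 = m := rfl
      have e2 : m + 1 + 1 - 1 = m + 1 := rfl
      rw [e1, e2]
      have hxc : x ^ (m+1) * c = c * x ^ (m+1) := ((hcx.pow_right (m+1)).eq).symm
      have hxx : x ^ m * x = x ^ (m+1) := (pow_succ x m).symm
      calc x ^ (m+1) * (x * y + c) + (↑(m+1)) * c * x ^ m * x
          = x ^ (m+1+1) * y + x^(m+1) * c + (↑(m+1)) * c * (x ^ m * x) := by
            rw [mul_add, ← mul_assoc, ← pow_succ, mul_assoc]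
        _ = x ^ (m+1+1) * y + c * x^(m+1) + (↑(m+1)) * c * x ^ (m+1) := by rw [hxc, hxx]
        _ = x ^ (m+1+1) * y + (↑(m+1+1)) * c * x ^ (m+1) := by push_cast; noncomm_ring
        _ = x ^ (m+1) * x * y + (↑(m+1+1)) * c * x ^ (m+1) := by rw [pow_succ]

lemma xy_mul_term (x y c : R) (h : y*x = x*y+c) (hcx : Commute c x) (i j : ℕ) :
    (x + y) * (x^i * y^j) = x^(i+1)*y^j + x^i*y^(j+1) + (i:R)*c*(x^(i-1)*y^j) := by
  rw [add_mul, ← mul_assoc, ← mul_assoc, ← pow_succ', y_mul_pow x y c h hcx i, add_mul,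
    mul_assoc (x^i) y (y^j), ← pow_succ', mul_assoc]
  noncomm_ring

lemma step (x y c : R) (h : y*x = x*y+c) (hcx : Commute c x) (m : ℕ) :
    (x + y) * PP x y m = PP x y (m+1) + (m:R) * c * PP x y (m-1) := by
  have hterm : ∀ i : ℕ, (x+y) * ((m.choose i : R) * (x^i*y^(m-i)))
      = (m.choose i : R) * (x^(i+1)*y^(m-i)) + (m.choose i : R) * (x^i*y^(m-i+1))
        + (m.choose i : R) * ((i:R) * c * (x^(i-1)*y^(m-i))) := by
    intro i
    rw [← mul_assoc, ((Nat.cast_commute (m.choose i) (x+y)).eq).symm, mul_assoc,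
      xy_mul_term x y c h hcx, mul_add, mul_add]
  rw [PP, Finset.mul_sum]
  rw [Finset.sum_congr rfl (fun i _ => hterm i)]
  rw [Finset.sum_add_distrib, Finset.sum_add_distrib]
  have claim1 : PP x y (m+1)
      = (∑ i ∈ range (m+1), (m.choose i : R) * (x^(i+1)*y^(m-i)))
        + ∑ i ∈ range (m+1), (m.choose i : R) * (x^i*y^(m-i+1)) := by
    rw [PP, Finset.sum_range_succ']
    simp only [Nat.succ_sub_succ, Nat.choose_succ_succ, Nat.cast_add, add_mul, Nat.choose_zero_right,
      Nat.cast_one, one_mul, pow_zero, Nat.sub_zero]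
    rw [Finset.sum_add_distrib]
    have h2 : (∑ i ∈ range (m+1), (m.choose i : R) * (x^i*y^(m-i+1)))
        = (∑ i ∈ range m, (m.choose (i+1) : R) * (x^(i+1)*y^(m-i))) + 1 * y^(m+1) := by
      rw [Finset.sum_range_succ']
      congr 1
      · refine Finset.sum_congr rfl fun i hi => ?_
        have hi' : i < m := Finset.mem_range.mp hi
        have : m - (i+1) + 1 = m - i := by omega
        rw [this]
      · simp
    rw [h2]
    have h3 : (∑ i ∈ range (m+1), (m.choose (i+1) : R) * (x^(i+1)*y^(m-i)))
        = ∑ i ∈ range m, (m.choose (i+1) : R) * (x^(i+1)*y^(m-i)) := by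
      rw [Finset.sum_range_succ, Nat.choose_succ_self]
      simp
    rw [h3]
    simp only [one_mul]
    abel
  have claim2 : (m:R) * c * PP x y (m-1)
      = ∑ i ∈ range (m+1), (m.choose i : R) * ((i:R) * c * (x^(i-1)*y^(m-i))) := by
    cases m with
    | zero => simp [PP]
    | succ m' =>
      rw [Finset.sum_range_succ']
      simp only [Nat.cast_zero, zero_mul, mul_zero, add_zero, Nat.cast_ofNat]
      have e0 : (m'+1:ℕ) - 1 = m' := rfl
      rw [e0, PP, Finset.mul_sum]
      refine Finset.sum_congr rfl fun i hi => ?_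
      have hi' : i < m' + 1 := Finset.mem_range.mp hi
      have ec : m' + 1 - (i+1) = m' - i := by omega
      have key : ((m'+1 : ℕ) : R) * ((m'.choose i : ℕ) : R)
          = (((m'+1).choose (i+1) : ℕ) : R) * ((i+1 : ℕ) : R) := by
        rw [← Nat.cast_mul, ← Nat.cast_mul, Nat.add_one_mul_choose_eq]
      calc ((m'+1:ℕ):R) * c * ((m'.choose i : R) * (x^i*y^(m'-i)))
          = (((m'+1:ℕ):R) * (m'.choose i : R)) * (c * (x^i*y^(m'-i))) := by
            rw [mul_assoc, ← mul_assoc c, ← (Nat.cast_commute (m'.choose i) c).eq,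
              mul_assoc ((m'.choose i : ℕ):R) c, ← mul_assoc]
        _ = ((((m'+1).choose (i+1) : ℕ) : R) * ((i+1 : ℕ) : R)) * (c * (x^i*y^(m'-i))) := by
            rw [key]
        _ = ((m'+1).choose (i+1) : R) * (((i+1:ℕ):R) * c * (x^(i+1-1)*y^(m'+1-(i+1)))) := by
            rw [ec]
            simp only [Nat.add_sub_cancel]
            rw [mul_assoc, mul_assoc]
  rw [claim1, claim2]

lemma comm_left {a b : R} (hab : a * b = b * a) (w : R) : a * (b * w) = b * (a * w) := by
  rw [← mul_assoc, hab, mul_assoc]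

lemma expand (x y c : R) (h : y*x = x*y+c) (hcx : Commute c x) (hcy : Commute c y) :
    ∀ n : ℕ, (x+y)^n = ∑ k ∈ Finset.range (n+1), (wa n k : R) * (c^k * PP x y (n - 2*k)) := by
  intro n
  induction n with
  | zero => simp [PP, wa]
  | succ n ih =>
    have hcpow : ∀ k : ℕ, (x+y) * c^k = c^k * (x+y) :=
      fun k => (((hcx.add_right hcy).pow_left k).eq).symm
    have hterm : ∀ k : ℕ, (x+y) * ((wa n k : R) * (c^k * PP x y (n-2*k)))
        = (wa n k : R) * (c^k * PP x y (n-2*k+1))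
          + (((n-2*k) * wa n k : ℕ) : R) * (c^(k+1) * PP x y (n-2*k-1)) := by
      intro k
      have h1 : (x+y) * ((wa n k : R) * (c^k * PP x y (n-2*k)))
          = (wa n k : R) * (c^k * ((x+y) * PP x y (n-2*k))) := by
        rw [← mul_assoc, ← (Nat.cast_commute (wa n k) (x+y)).eq, mul_assoc, ← mul_assoc (x+y),
          hcpow k, mul_assoc]
      rw [h1, step x y c h hcx (n-2*k), mul_add, mul_add]
      congr 1
      rw [Nat.cast_mul, mul_assoc ((n-2*k : ℕ) : R) c (PP x y (n-2*k-1)),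
        comm_left ((Nat.cast_commute (n-2*k) (c^k)).eq.symm) (c * PP x y (n-2*k-1)),
        comm_left ((Nat.cast_commute (wa n k) (((n-2*k : ℕ)) : R)).eq)
          (c^k * (c * PP x y (n-2*k-1))),
        mul_assoc (((n-2*k : ℕ)) : R) ((wa n k : ℕ) : R),
        pow_succ, mul_assoc (c^k) c (PP x y (n-2*k-1))]
    have lhs_eq : (x+y)^(n+1)
        = (∑ k ∈ Finset.range (n+1), (wa n k : R) * (c^k * PP x y (n-2*k+1)))
          + ∑ k ∈ Finset.range (n+1), (((n-2*k)*wa n k : ℕ) : R) * (c^(k+1) * PP x y (n-2*k-1)) := by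
      rw [pow_succ', ih, Finset.mul_sum, ← Finset.sum_add_distrib]
      exact Finset.sum_congr rfl fun k _ => hterm k
    have last_eq : (wa (n+1) 0 : R) * (c^0 * PP x y (n+1-2*0)) = PP x y (n+1) := by
      simp [wa_zero_right]
    have split : ∀ k ∈ Finset.range (n+1),
        ((wa (n+1) (k+1) : ℕ) : R) * (c^(k+1) * PP x y (n+1-2*(k+1)))
        = (wa n (k+1) : R) * (c^(k+1) * PP x y (n+1-2*(k+1)))
          + (((n-2*k)*wa n k : ℕ) : R) * (c^(k+1) * PP x y (n+1-2*(k+1))) := by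
      intro k _
      rw [show wa (n+1) (k+1) = wa n (k+1) + (n-2*k)*wa n k from rfl, Nat.cast_add, add_mul]
    have rhs_eq : (∑ k ∈ Finset.range (n+1+1), (wa (n+1) k : R) * (c^k * PP x y (n+1-2*k)))
        = (∑ k ∈ Finset.range (n+1), (wa n (k+1) : R) * (c^(k+1) * PP x y (n+1-2*(k+1))))
          + (∑ k ∈ Finset.range (n+1), (((n-2*k)*wa n k : ℕ) : R) * (c^(k+1) * PP x y (n+1-2*(k+1))))
          + PP x y (n+1) := by
      rw [Finset.sum_range_succ', Finset.sum_congr rfl split, Finset.sum_add_distrib, last_eq]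
    have hS2 : ∑ k ∈ Finset.range (n+1), (((n-2*k)*wa n k : ℕ) : R) * (c^(k+1) * PP x y (n-2*k-1))
        = ∑ k ∈ Finset.range (n+1), (((n-2*k)*wa n k : ℕ) : R) * (c^(k+1) * PP x y (n+1-2*(k+1))) := by
      refine Finset.sum_congr rfl fun k _ => ?_
      have e : n - 2*k - 1 = n+1-2*(k+1) := by omega
      rw [e]
    have hS1 : ∑ k ∈ Finset.range (n+1), (wa n k : R) * (c^k * PP x y (n-2*k+1))
        = (∑ k ∈ Finset.range (n+1), (wa n (k+1) : R) * (c^(k+1) * PP x y (n+1-2*(k+1))))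
          + PP x y (n+1) := by
      rw [Finset.sum_range_succ']
      congr 1
      · rw [Finset.sum_range_succ, wa_eq_zero n (n+1) (by omega)]
        simp only [Nat.cast_zero, zero_mul, add_zero]
        refine Finset.sum_congr rfl fun k _ => ?_
        rcases Nat.lt_or_ge n (2*(k+1)) with hlt | hge
        · rw [wa_eq_zero n (k+1) hlt]; simp
        · have e : n - 2*(k+1) + 1 = n+1-2*(k+1) := by omega
          rw [e]
    rw [lhs_eq, rhs_eq, hS1, hS2]
    abel



theorem central_pow_odd (p : ℕ) (hp : p.Prime) (hp2 : p ≠ 2) (hpR : ((p : ℕ) : R) = 0)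
    (x y c : R) (h : y*x = x*y+c) (hcx : Commute c x) (hcy : Commute c y) :
    (x+y)^p = x^p + y^p := by
  have castzero : ∀ N : ℕ, p ∣ N → ((N : ℕ) : R) = 0 := by
    rintro N ⟨m, rfl⟩
    rw [Nat.cast_mul, hpR, zero_mul]
  rw [expand x y c h hcx hcy p]
  obtain ⟨q, rfl⟩ : ∃ q, p = q+1+1 := ⟨p-2, by have := hp.two_le; omega⟩
  rw [Finset.sum_range_succ']
  have h2 : ∀ k ∈ Finset.range (q+1+1),
      (wa (q+1+1) (k+1) : R) * (c^(k+1) * PP x y (q+1+1-2*(k+1))) = 0 := by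
    intro k _
    rcases Nat.lt_or_ge (q+1+1) (2*(k+1)) with hlt | hge
    · rw [wa_eq_zero (q+1+1) (k+1) hlt, Nat.cast_zero, zero_mul]
    · rw [castzero _ (prime_dvd_wa (q+1+1) (k+1) hp hp2 (Nat.succ_pos k) hge), zero_mul]
  rw [Finset.sum_eq_zero h2, zero_add, wa_zero_right]
  simp only [Nat.cast_one, one_mul, pow_zero, Nat.mul_zero, Nat.sub_zero]
  -- now: PP x y (q+1+1) = x^(q+1+1) + y^(q+1+1)
  rw [PP, Finset.sum_range_succ, Finset.sum_range_succ']
  have h3 : ∀ i ∈ Finset.range (q+1),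
      ((q+1+1).choose (i+1) : R) * (x^(i+1) * y^(q+1+1-(i+1))) = 0 := by
    intro i hi
    have hi' : i < q+1 := Finset.mem_range.mp hi
    rw [castzero _ (hp.dvd_choose_self (by omega) (by omega)), zero_mul]
  rw [Finset.sum_eq_zero h3, zero_add, Nat.choose_self, Nat.choose_zero_right]
  simp
  abel

theorem central_pow_two (h2R : ((2 : ℕ) : R) = 0) (x y c : R) (h : y*x = x*y+c) :
    (x+y)^2 = x^2 + y^2 + c := by
  calc (x+y)^2 = x*x + x*y + (y*x + y*y) := by rw [sq]; noncomm_ring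
    _ = x*x + x*y + (x*y + c + y*y) := by rw [h]
    _ = x*x + y*y + c + ((2:ℕ):R)*(x*y) := by push_cast; noncomm_ring
    _ = x^2 + y^2 + c := by rw [h2R, zero_mul, add_zero, sq, sq]


variable {K : Type*} [CommRing K]

lemma weyl_rel (K : Type*) [CommRing K] : wD K * wX K = wX K * wD K + 1 := by
  have h := RingQuot.mkAlgHom_rel K (WeylRel.rel (K := K))
  simpa [wX, wD, map_mul, map_add, map_one] using h

lemma smul_one_commute (r : K) (z : Weyl K) : Commute (r • (1:Weyl K)) z := by
  show (r • (1:Weyl K)) * z = z * (r • 1)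
  rw [smul_mul_assoc, one_mul, mul_smul_comm, mul_one]

lemma bracket (α β γ : K) :
    (β • wD K + γ • (1:Weyl K)) * (α • wX K)
      = (α • wX K) * (β • wD K + γ • (1:Weyl K)) + (α*β) • (1:Weyl K) := by
  simp only [add_mul, mul_add, smul_mul_assoc, mul_smul_comm, one_mul, mul_one, smul_smul,
    weyl_rel, smul_add]
  module

lemma gen_pow_odd (p : ℕ) (hp : p.Prime) (hp2 : p ≠ 2) (hpW : ((p : ℕ) : Weyl K) = 0)
    (α β γ : K) :
    (α • wX K + β • wD K + γ • (1:Weyl K))^p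
      = α^p • wX K ^ p + β^p • wD K ^ p + γ^p • (1:Weyl K) := by
  rw [add_assoc,
    central_pow_odd p hp hp2 hpW (α • wX K) (β • wD K + γ • (1:Weyl K)) ((α*β) • (1:Weyl K))
      (bracket α β γ) (smul_one_commute _ _) (smul_one_commute _ _)]
  have hrel : (γ • (1:Weyl K)) * (β • wD K) = (β • wD K) * (γ • (1:Weyl K)) + 0 := by
    rw [add_zero, (smul_one_commute γ (β • wD K)).eq]
  have hv := central_pow_odd p hp hp2 hpW (β • wD K) (γ • (1:Weyl K)) 0 hrel
    (Commute.zero_left _) (Commute.zero_left _)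
  rw [hv, smul_pow, smul_pow, smul_pow, one_pow, add_assoc]

lemma gen_pow_two (h2W : ((2 : ℕ) : Weyl K) = 0) (α β γ : K) :
    (α • wX K + β • wD K + γ • (1:Weyl K))^2
      = α^2 • wX K ^ 2 + β^2 • wD K ^ 2 + (γ^2 + α*β) • (1:Weyl K) := by
  rw [add_assoc,
    central_pow_two h2W (α • wX K) (β • wD K + γ • (1:Weyl K)) ((α*β) • (1:Weyl K))
      (bracket α β γ)]
  have hrel : (γ • (1:Weyl K)) * (β • wD K) = (β • wD K) * (γ • (1:Weyl K)) + 0 := by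
    rw [add_zero, (smul_one_commute γ (β • wD K)).eq]
  have hv := central_pow_two h2W (β • wD K) (γ • (1:Weyl K)) 0 hrel
  rw [hv, smul_pow, smul_pow, smul_pow, one_pow, add_zero, add_smul]
  abel

end S8

theorem statement8 (p : ℕ) (hp : p.Prime) (K : Type*) [Field K] [CharP K p]
    (hperf : Function.Surjective fun a : K => a ^ p)
    (a b c d e f : K) (hdet : a * d - b * c = 1)
    (σ : Weyl K ≃ₐ[K] Weyl K)
    (hσx : σ (wX K) = algebraMap K (Weyl K) a * wX K + algebraMap K (Weyl K) b * wD K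
      + algebraMap K (Weyl K) e)
    (hσy : σ (wD K) = algebraMap K (Weyl K) c * wX K + algebraMap K (Weyl K) d * wD K
      + algebraMap K (Weyl K) f) :
    (2 < p →
      σ (wX K ^ p) = algebraMap K (Weyl K) (a ^ p) * wX K ^ p
          + algebraMap K (Weyl K) (b ^ p) * wD K ^ p + algebraMap K (Weyl K) (e ^ p) ∧
      σ (wD K ^ p) = algebraMap K (Weyl K) (c ^ p) * wX K ^ p
          + algebraMap K (Weyl K) (d ^ p) * wD K ^ p + algebraMap K (Weyl K) (f ^ p)) ∧
    (p = 2 →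
      σ (wX K ^ p) = algebraMap K (Weyl K) (a ^ 2) * wX K ^ p
          + algebraMap K (Weyl K) (b ^ 2) * wD K ^ p
          + algebraMap K (Weyl K) (e ^ 2 + a * b) ∧
      σ (wD K ^ p) = algebraMap K (Weyl K) (c ^ 2) * wX K ^ p
          + algebraMap K (Weyl K) (d ^ 2) * wD K ^ p
          + algebraMap K (Weyl K) (f ^ 2 + c * d)) := by
  classical
  have hpW : ((p : ℕ) : Weyl K) = 0 := by
    rw [← map_natCast (algebraMap K (Weyl K)) p, CharP.cast_eq_zero K p, map_zero]
  have hsm : ∀ r : K, algebraMap K (Weyl K) r = r • (1 : Weyl K) :=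
    fun r => Algebra.algebraMap_eq_smul_one r
  have hform : ∀ (u v w : K),
      algebraMap K (Weyl K) u * wX K + algebraMap K (Weyl K) v * wD K + algebraMap K (Weyl K) w
      = u • wX K + v • wD K + w • (1 : Weyl K) := by
    intro u v w
    rw [← Algebra.smul_def, ← Algebra.smul_def, hsm]
  constructor
  · intro hlt
    have hp2 : p ≠ 2 := by omega
    refine ⟨?_, ?_⟩
    · rw [map_pow, hσx, hform, S8.gen_pow_odd p hp hp2 hpW a b e,
        ← Algebra.smul_def, ← Algebra.smul_def, hsm]
    · rw [map_pow, hσy, hform, S8.gen_pow_odd p hp hp2 hpW c d f,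
        ← Algebra.smul_def, ← Algebra.smul_def, hsm]
  · intro hp2
    subst hp2
    have h2W : ((2 : ℕ) : Weyl K) = 0 := hpW
    refine ⟨?_, ?_⟩
    · rw [map_pow, hσx, hform, S8.gen_pow_two h2W a b e,
        ← Algebra.smul_def, ← Algebra.smul_def, hsm]
    · rw [map_pow, hσy, hform, S8.gen_pow_two h2W c d f,
        ← Algebra.smul_def, ← Algebra.smul_def, hsm]
end
end

section
/- Let K be a perfect field of characteristic p > 0 and θ : K[x] → K[x^p], θ(f) = f^p + d^{p-1}f/dx^{p-1}, which is bijective. Write g ∈ K[x^p] as g = Σ_{i=0}^{p-1} μ_i x^{pi} with μ_i ∈ K[x^{p²}], and write θ^{-1}(g) = Σ_{i=0}^{p-1} λ_i x^i with λ_i ∈ K[x^p]. Then: (1) for i = 0, 1, …, p−2, λ_i = μ_i^{1/p} + F^{-1} π_i F^{-1} Σ_{j≥0} Δ^j(μ_{p-1}); and (2) λ_{p-1} = Σ_{i=0}^{p-2} x^{pi} π_i F^{-1} Σ_{j≥0} Δ^j(μ_{p-1}) + x^{p(p-1)} Σ_{j≥1} Δ^j(μ_{p-1}). -/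
/-!
STATEMENT 12: Let `K` be a perfect field of characteristic `p > 0` and
`θ : K[x] → K[x^p]`, `θ(f) = f^p + d^{p-1}f/dx^{p-1}`.  Write `g = Σ_{i<p} μ_i x^{pi}` with
`μ_i ∈ K[x^{p²}]` and `θ^{-1}(g) = Σ_{i<p} λ_i x^i` with `λ_i ∈ K[x^p]`.  Then:
(1) for `i = 0, …, p−2`: `λ_i = μ_i^{1/p} + F^{-1} π_i F^{-1} Σ_{j≥0} Δ^j(μ_{p-1})`;
(2) `λ_{p-1} = Σ_{i=0}^{p-2} x^{pi} π_i F^{-1} Σ_{j≥0} Δ^j(μ_{p-1})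
      + x^{p(p-1)} Σ_{j≥1} Δ^j(μ_{p-1})`.

Encoding: `μ_i = expand (p²) (m i)`, `λ_i = expand p (l i)`; `F^{-1}` on `K[x^p]` is
`expand p u ↦ u.map (frobeniusEquiv K p).symm`; `π_i` on `K[x^p]` is
`expand p u ↦ expand (p²) (pSlice p i u)`; `Δ` on `K[x^{p²}]` corresponds to `deltaOp` on
coefficient polynomials; and the (locally nilpotent) sums `Σ_{j≥0} Δ^j`, `Σ_{j≥1} Δ^j` are
the finite sums over `j < N`, `1 ≤ j < N` for any `N` beyond which `Δ^j(μ_{p-1}) = 0`.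
-/

noncomputable section

open Polynomial

/-- The map `θ(f) = f^p + d^{p-1}f/dx^{p-1}`. -/
def theta (p : ℕ) (K : Type*) [CommRing K] (f : Polynomial K) : Polynomial K :=
  f ^ p + derivative^[p - 1] f

/-- `pSlice p i m` is the polynomial whose `k`-th coefficient is the `(i + p·k)`-th
coefficient of `m`; i.e. the `i`-th component in the decomposition
`m = Σ_{i<p} (pSlice p i m)(x^p)·x^i`. -/
def pSlice (p i : ℕ) {K : Type*} [CommRing K] (m : Polynomial K) : Polynomial K :=
  ∑ k ∈ Finset.range (m.natDegree + 1), Polynomial.C (m.coeff (i + p * k)) * Polynomial.X ^ k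

/-- The map on coefficient polynomials corresponding to
`Δ = ∂^{[(p-1)p]} ∘ F^{-1} : K[x^{p²}] → K[x^{p²}]`. -/
def deltaOp (p : ℕ) (K : Type*) [Field K] [ExpChar K p] [PerfectRing K p]
    (m : Polynomial K) : Polynomial K :=
  (pSlice p (p - 1) m).map (frobeniusEquiv K p).symm.toRingHom

/-!
Write `f = θ⁻¹(g) = Σ_{i<p} λ_i x^i`. Then `f^p = Σ_i F(λ_i) x^{pi}`, and since only the term
`λ_{p-1} x^{p-1}` survives `p - 1` differentiations, `d^{p-1}f/dx^{p-1} = (p-1)! λ_{p-1} = -λ_{p-1}`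
by Wilson's theorem. Splitting `λ_{p-1} = Σ_i (π_i λ_{p-1}) x^{pi}` and comparing components with
`g` gives `F(λ_i) = μ_i + π_i λ_{p-1}` for all `i < p`. For `i = p - 1` this says that
`F(λ_{p-1})` is a fixed point of `T ↦ μ_{p-1} + Δ T`, and so is `Σ_j Δ^j(μ_{p-1})`. The two agree
because `Δ` has no nonzero fixed point: `Δ f` has zero coefficient in the degree of `f`.
Substituting `λ_{p-1} = F^{-1} Σ_j Δ^j(μ_{p-1})` back gives both formulas.
-/

section pSlice

variable {K : Type*} [CommRing K] {p : ℕ}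

theorem coeff_pSlice (hp : 0 < p) (i : ℕ) (m : K[X]) (k : ℕ) :
    (pSlice p i m).coeff k = m.coeff (i + p * k) := by
  simp only [pSlice, finsetSum_coeff, coeff_C_mul_X_pow, Finset.sum_ite_eq, Finset.mem_range]
  split_ifs with hk
  · rfl
  · refine (coeff_eq_zero_of_natDegree_lt ?_).symm
    have : k ≤ p * k := Nat.le_mul_of_pos_left k hp
    omega

theorem coeff_sum_expand_mul_X_pow (hp : 0 < p) (a : ℕ → K[X]) {i : ℕ} (hi : i < p) (k : ℕ) :
    (∑ j ∈ Finset.range p, expand K p (a j) * X ^ j).coeff (i + p * k) = (a i).coeff k := by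
  rw [finsetSum_coeff, Finset.sum_eq_single_of_mem i (Finset.mem_range.2 hi)]
  · rw [coeff_mul_X_pow', if_pos (Nat.le_add_right i _), Nat.add_sub_cancel_left,
      coeff_expand_mul' hp]
  · intro j hj hji
    rw [coeff_mul_X_pow', coeff_expand hp]
    split_ifs with hle hdvd
    · obtain ⟨c, hc⟩ := hdvd
      have hmod := congrArg (· % p) (show i + p * k = j + p * c by omega)
      simp only [Nat.add_mul_mod_self_left, Nat.mod_eq_of_lt hi,
        Nat.mod_eq_of_lt (Finset.mem_range.1 hj)] at hmod
      exact absurd hmod.symm hji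
    all_goals rfl

theorem pSlice_sum_expand_mul_X_pow (hp : 0 < p) (a : ℕ → K[X]) {i : ℕ} (hi : i < p) :
    pSlice p i (∑ j ∈ Finset.range p, expand K p (a j) * X ^ j) = a i := by
  ext k
  rw [coeff_pSlice hp, coeff_sum_expand_mul_X_pow hp a hi]

theorem sum_expand_pSlice_mul_X_pow (hp : 0 < p) (m : K[X]) :
    ∑ i ∈ Finset.range p, expand K p (pSlice p i m) * X ^ i = m := by
  ext n
  rw [← Nat.mod_add_div n p, coeff_sum_expand_mul_X_pow hp _ (Nat.mod_lt n hp), coeff_pSlice hp]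

theorem pSlice_map (hp : 0 < p) (i : ℕ) {L : Type*} [CommRing L] (f : K →+* L) (m : K[X]) :
    pSlice p i (m.map f) = (pSlice p i m).map f := by
  ext k
  rw [coeff_pSlice hp, coeff_map, coeff_map, coeff_pSlice hp]

theorem expand_sum_expand_mul_X_pow (s : Finset ℕ) (c : ℕ → K[X]) :
    expand K p (∑ i ∈ s, expand K p (c i) * X ^ i)
      = ∑ i ∈ s, expand K (p ^ 2) (c i) * X ^ (p * i) := by
  simp only [map_sum, map_mul, map_pow, expand_X, expand_expand, ← pow_mul, sq]

theorem expand_eq_sum_expand_pSlice (hp : 0 < p) (m : K[X]) :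
    expand K p m = ∑ i ∈ Finset.range p, expand K (p ^ 2) (pSlice p i m) * X ^ (p * i) := by
  conv_lhs => rw [← sum_expand_pSlice_mul_X_pow hp m]
  exact expand_sum_expand_mul_X_pow _ _

theorem eq_of_sum_expand_sq_mul_X_pow_eq (hp : 0 < p) {a b : ℕ → K[X]}
    (h : ∑ i ∈ Finset.range p, expand K (p ^ 2) (a i) * X ^ (p * i)
      = ∑ i ∈ Finset.range p, expand K (p ^ 2) (b i) * X ^ (p * i))
    {i : ℕ} (hi : i < p) : a i = b i := by
  rw [← expand_sum_expand_mul_X_pow, ← expand_sum_expand_mul_X_pow] at h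
  have h' := congrArg (pSlice p i) (expand_injective hp h)
  rwa [pSlice_sum_expand_mul_X_pow hp a hi, pSlice_sum_expand_mul_X_pow hp b hi] at h'

end pSlice

theorem ExpChar.charP_of_prime {R : Type*} [AddMonoidWithOne R] {p : ℕ} [h : ExpChar R p]
    (hp : p.Prime) : CharP R p := by
  cases h with
  | zero => exact absurd hp Nat.not_prime_one
  | prime _ => assumption

section theta

variable {K : Type*} [CommRing K] {p : ℕ} [CharP K p]

theorem iterate_derivative_expand_mul (u g : K[X]) (k : ℕ) :
    derivative^[k] (expand K p u * g) = expand K p u * derivative^[k] g := by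
  induction k with
  | zero => rfl
  | succ k ih =>
    simp only [Function.iterate_succ_apply', ih, derivative_mul, derivative_expand,
      CharP.cast_eq_zero K[X] p, mul_zero, zero_mul, zero_add]

variable [Fact p.Prime]

theorem natCast_factorial_sub_one_eq_neg_one : ((p - 1).factorial : K) = -1 := by
  have h := congrArg (ZMod.castHom (dvd_refl p) K) (ZMod.wilsons_lemma (p := p))
  rwa [map_natCast, map_neg, map_one] at h

theorem iterate_derivative_sum_expand_mul_X_pow (l : ℕ → K[X]) :
    derivative^[p - 1] (∑ i ∈ Finset.range p, expand K p (l i) * X ^ i)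
      = -expand K p (l (p - 1)) := by
  obtain ⟨q, rfl⟩ : ∃ q, p = q + 1 := ⟨p - 1, (Nat.succ_pred_prime Fact.out).symm⟩
  have hwilson : (q.factorial : K) = -1 := by
    simpa using natCast_factorial_sub_one_eq_neg_one (K := K) (p := q + 1)
  have hlow : ∀ i ∈ Finset.range q, expand K (q + 1) (l i) * derivative^[q] (X ^ i) = 0 :=
    fun i hi => by
      rw [iterate_derivative_eq_zero ((natDegree_X_pow_le i).trans_lt (by simpa using hi)),
        mul_zero]
  rw [Nat.add_sub_cancel, iterate_derivative_sum, Finset.sum_range_succ]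
  simp only [iterate_derivative_expand_mul]
  rw [Finset.sum_eq_zero hlow, iterate_derivative_X_pow_eq_smul, Nat.descFactorial_self,
    Nat.sub_self, pow_zero, hwilson]
  simp

theorem sum_expand_mul_X_pow_pow (s : Finset ℕ) (l : ℕ → K[X]) :
    (∑ i ∈ s, expand K p (l i) * X ^ i) ^ p
      = ∑ i ∈ s, expand K (p ^ 2) ((l i).map (frobenius K p)) * X ^ (p * i) := by
  rw [← map_frobenius_expand, expand_sum_expand_mul_X_pow, Polynomial.map_sum]
  simp only [Polynomial.map_mul, Polynomial.map_pow, map_X, map_expand]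

theorem theta_sum_expand_mul_X_pow (l : ℕ → K[X]) :
    theta p K (∑ i ∈ Finset.range p, expand K p (l i) * X ^ i)
      = ∑ i ∈ Finset.range p,
          expand K (p ^ 2) ((l i).map (frobenius K p) - pSlice p i (l (p - 1))) * X ^ (p * i) := by
  rw [theta, sum_expand_mul_X_pow_pow, iterate_derivative_sum_expand_mul_X_pow,
    expand_eq_sum_expand_pSlice (Fact.out : p.Prime).pos, ← sub_eq_add_neg,
    ← Finset.sum_sub_distrib]
  simp only [map_sub, sub_mul]

end theta

section deltaOp

variable {K : Type*} [Field K] {p : ℕ} [ExpChar K p] [PerfectRing K p]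

theorem map_frobeniusEquiv_symm_map_frobenius (f : K[X]) :
    (f.map (frobenius K p)).map (frobeniusEquiv K p).symm.toRingHom = f := by
  ext n
  simp

theorem coeff_deltaOp (m : K[X]) (k : ℕ) :
    (deltaOp p K m).coeff k = (frobeniusEquiv K p).symm (m.coeff (p - 1 + p * k)) := by
  rw [deltaOp, coeff_map, coeff_pSlice (expChar_pos K p)]
  rfl

theorem deltaOp_eq_pSlice_map (m : K[X]) :
    deltaOp p K m = pSlice p (p - 1) (m.map (frobeniusEquiv K p).symm.toRingHom) :=
  (pSlice_map (expChar_pos K p) _ _ m).symm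

theorem deltaOp_sub (a b : K[X]) : deltaOp p K (a - b) = deltaOp p K a - deltaOp p K b := by
  ext k
  simp only [coeff_deltaOp, coeff_sub, map_sub]

theorem deltaOp_sum {ι : Type*} (s : Finset ι) (f : ι → K[X]) :
    deltaOp p K (∑ i ∈ s, f i) = ∑ i ∈ s, deltaOp p K (f i) := by
  ext k
  simp only [coeff_deltaOp, finsetSum_coeff, map_sum]

theorem eq_zero_of_deltaOp_eq_self (hp : 1 < p) {f : K[X]} (hf : deltaOp p K f = f) : f = 0 := by
  by_contra hne
  have hlt : f.natDegree < p - 1 + p * f.natDegree := by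
    have := Nat.le_mul_of_pos_left f.natDegree (expChar_pos K p)
    omega
  have h := congrArg (coeff · f.natDegree) hf
  simp only [coeff_deltaOp, coeff_eq_zero_of_natDegree_lt hlt, map_zero] at h
  exact leadingCoeff_ne_zero.2 hne h.symm

theorem eq_of_eq_add_deltaOp (hp : 1 < p) {M T S : K[X]} (hT : T = M + deltaOp p K T)
    (hS : S = M + deltaOp p K S) : T = S := by
  refine sub_eq_zero.1 (eq_zero_of_deltaOp_eq_self hp ?_)
  rw [deltaOp_sub]
  linear_combination hS - hT

variable {M : K[X]} {N : ℕ}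

theorem deltaOp_sum_range_iterate (hN : ∀ n, N ≤ n → (deltaOp p K)^[n] M = 0) :
    deltaOp p K (∑ j ∈ Finset.range N, (deltaOp p K)^[j] M)
      = ∑ j ∈ Finset.Ico 1 N, (deltaOp p K)^[j] M := by
  simp only [deltaOp_sum, ← Function.iterate_succ_apply' (deltaOp p K), Finset.range_eq_Ico]
  refine (Finset.sum_Ico_add' (fun j => (deltaOp p K)^[j] M) 0 N 1).trans ?_
  rw [zero_add]
  refine (Finset.sum_subset (Finset.Ico_subset_Ico_right N.le_succ) fun j hj hjN => hN j ?_).symm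
  simp only [Finset.mem_Ico] at hj hjN
  omega

theorem sum_range_iterate_deltaOp_eq_add (hN : ∀ n, N ≤ n → (deltaOp p K)^[n] M = 0) :
    ∑ j ∈ Finset.range N, (deltaOp p K)^[j] M
      = M + deltaOp p K (∑ j ∈ Finset.range N, (deltaOp p K)^[j] M) := by
  rw [deltaOp_sum_range_iterate hN]
  rcases N.eq_zero_or_pos with rfl | hpos
  · simpa using (hN 0 le_rfl).symm
  · exact Finset.sum_range_eq_add_Ico _ hpos

end deltaOp

theorem statement12 (p : ℕ) (hp : p.Prime) (K : Type*) [Field K] [ExpChar K p]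
    [PerfectRing K p]
    (m l : ℕ → Polynomial K) (N : ℕ)
    (hN : ∀ n : ℕ, N ≤ n → (deltaOp p K)^[n] (m (p - 1)) = 0)
    (hθ : theta p K (∑ i ∈ Finset.range p, Polynomial.expand K p (l i) * Polynomial.X ^ i)
        = ∑ i ∈ Finset.range p,
            Polynomial.expand K (p ^ 2) (m i) * Polynomial.X ^ (p * i)) :
    (∀ i : ℕ, i < p - 1 →
      Polynomial.expand K p (l i)
        = Polynomial.expand K p ((m i).map (frobeniusEquiv K p).symm.toRingHom)
          + Polynomial.expand K p
              ((pSlice p i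
                ((∑ j ∈ Finset.range N, (deltaOp p K)^[j] (m (p - 1))).map
                  (frobeniusEquiv K p).symm.toRingHom)).map
                (frobeniusEquiv K p).symm.toRingHom)) ∧
    Polynomial.expand K p (l (p - 1))
      = (∑ i ∈ Finset.range (p - 1), Polynomial.X ^ (p * i) *
          Polynomial.expand K (p ^ 2)
            (pSlice p i
              ((∑ j ∈ Finset.range N, (deltaOp p K)^[j] (m (p - 1))).map
                (frobeniusEquiv K p).symm.toRingHom)))
        + Polynomial.X ^ (p * (p - 1)) *
            Polynomial.expand K (p ^ 2)
              (∑ j ∈ Finset.Ico 1 N, (deltaOp p K)^[j] (m (p - 1))) := by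
  have : Fact p.Prime := ⟨hp⟩
  have : CharP K p := ExpChar.charP_of_prime hp
  have hcomp : ∀ i < p, (l i).map (frobenius K p) = m i + pSlice p i (l (p - 1)) := fun i hi =>
    sub_eq_iff_eq_add.1 <|
      eq_of_sum_expand_sq_mul_X_pow_eq hp.pos ((theta_sum_expand_mul_X_pow l).symm.trans hθ) hi
  have hl : l (p - 1) = (∑ j ∈ Finset.range N, (deltaOp p K)^[j] (m (p - 1))).map
      (frobeniusEquiv K p).symm.toRingHom := by
    have hfix : (l (p - 1)).map (frobenius K p)
        = m (p - 1) + deltaOp p K ((l (p - 1)).map (frobenius K p)) := by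
      rw [deltaOp_eq_pSlice_map, map_frobeniusEquiv_symm_map_frobenius]
      exact hcomp _ (Nat.sub_lt hp.pos one_pos)
    rw [← eq_of_eq_add_deltaOp hp.one_lt hfix (sum_range_iterate_deltaOp_eq_add hN),
      map_frobeniusEquiv_symm_map_frobenius]
  refine ⟨fun i hi => ?_, ?_⟩
  · rw [← map_add, ← Polynomial.map_add, ← hl, ← hcomp i (by omega),
      map_frobeniusEquiv_symm_map_frobenius]
  · rw [expand_eq_sum_expand_pSlice hp.pos,
      show Finset.range p = Finset.range (p - 1 + 1) by rw [Nat.sub_add_cancel hp.one_le],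
      Finset.sum_range_succ, hl, ← deltaOp_eq_pSlice_map, deltaOp_sum_range_iterate hN, mul_comm]
    congr 1
    exact Finset.sum_congr rfl fun _ _ => mul_comm _ _
end
end
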